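/- arXiv:1909.12203 — 12 statements merged into one kernel-verified Lean document; each statement's English description precedes it below -/
import Mathlib

section
/- Let A be an abelian category with set-indexed coproducts and a generator. Assume that A satisfies AB5, that every short exact sequence in A splits, and that every nonzero object of A has a simple subquotient (i.e., for every nonzero object M there exist subobjects C ≤ B of M such that B/C is simple). Then every object of A is the sum of its simple subobjects, i.e., for every object M the supremum of the simple subobjects of M is all of M. -/
open CategoryTheory Limits

universe v u

/-- Let `𝒜` be an AB5 abelian category (cocomplete with exact filtered colimits) with
a generator, in which every short exact sequence splits (equivalently, every epimorphism
splits) and every nonzero object has a simple subquotient.  Then every object `M` is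
the sum of its simple subobjects: every subobject `P` of `M` containing all the simple
subobjects of `M` equals `⊤`, i.e. the supremum of the simple subobjects of `M` is `M`. -/
theorem stmt_1 {𝒜 : Type u} [Category.{v} 𝒜] [Abelian 𝒜] [HasColimits 𝒜] [AB5 𝒜]
    (G : 𝒜) (hG : IsSeparator G)
    (hsplit : ∀ {X Y : 𝒜} (f : X ⟶ Y), Epi f → IsSplitEpi f)
    (hsubq : ∀ M : 𝒜, ¬ IsZero M → ∃ (B C : Subobject M) (h : C ≤ B),
      Simple (cokernel (Subobject.ofLE C B h)))
    (M : 𝒜) (P : Subobject M)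
    (hP : ∀ S : Subobject M, Simple (S : 𝒜) → S ≤ P) :
    P = ⊤ := by
  by_contra hne
  -- the cokernel of `P.arrow` is nonzero
  have hnz : ¬ IsZero (cokernel P.arrow) := by
    intro hz
    have : Epi P.arrow := Preadditive.epi_of_isZero_cokernel _ hz
    have : IsIso P.arrow := isIso_of_mono_of_epi _
    exact hne ((Subobject.isIso_arrow_iff_eq_top P).mp this)
  obtain ⟨B, C, h, hsimple⟩ := hsubq (cokernel P.arrow) hnz
  -- split the epi `M ⟶ cokernel P.arrow`
  have hsplitπ : IsSplitEpi (cokernel.π P.arrow) := hsplit _ inferInstance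
  set s : cokernel P.arrow ⟶ M := hsplitπ.exists_splitEpi.some.section_ with hs
  have hsπ : s ≫ cokernel.π P.arrow = 𝟙 _ := hsplitπ.exists_splitEpi.some.id
  have : IsSplitMono s := ⟨⟨⟨cokernel.π P.arrow, hsπ⟩⟩⟩
  -- split the epi `B ⟶ cokernel (ofLE C B h)`
  have hsplitq : IsSplitEpi (cokernel.π (Subobject.ofLE C B h)) := hsplit _ inferInstance
  set t : cokernel (Subobject.ofLE C B h) ⟶ (B : 𝒜) :=
    hsplitq.exists_splitEpi.some.section_ with ht
  have htq : t ≫ cokernel.π (Subobject.ofLE C B h) = 𝟙 _ := hsplitq.exists_splitEpi.some.id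
  have : IsSplitMono t := ⟨⟨⟨cokernel.π (Subobject.ofLE C B h), htq⟩⟩⟩
  -- the simple object embeds into `M`
  set f : cokernel (Subobject.ofLE C B h) ⟶ M := t ≫ B.arrow ≫ s with hf
  have hmono : Mono f := mono_comp _ _
  set S : Subobject M := Subobject.mk f with hS
  have hSsimple : Simple (S : 𝒜) := Simple.of_iso (Subobject.underlyingIso f)
  have hle : S ≤ P := hP S hSsimple
  -- but `S.arrow ≫ cokernel.π P.arrow = 0` since `S ≤ P`
  have h0 : S.arrow ≫ cokernel.π P.arrow = 0 := by
    rw [← Subobject.ofLE_arrow hle, Category.assoc, cokernel.condition, comp_zero]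
  have harr : S.arrow = (Subobject.underlyingIso f).hom ≫ f :=
    (Subobject.underlyingIso_hom_comp_eq_mk f).symm
  have h1 : S.arrow ≫ cokernel.π P.arrow =
      (Subobject.underlyingIso f).hom ≫ t ≫ B.arrow := by
    rw [harr]
    simp only [hf, Category.assoc, hsπ, Category.comp_id]
  have h2 : (Subobject.underlyingIso f).hom ≫ t ≫ B.arrow = 0 := h1.symm.trans h0
  have : Mono ((Subobject.underlyingIso f).hom ≫ t ≫ B.arrow) := mono_comp _ _
  have hz : IsZero (S : 𝒜) := by
    rw [IsZero.iff_id_eq_zero]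
    rw [← cancel_mono ((Subobject.underlyingIso f).hom ≫ t ≫ B.arrow)]
    simp [h2]
  exact Simple.not_isZero _ hz
end

section
/- Let A be an abelian category with set-indexed coproducts and a generator such that every object of A is a coproduct of simple objects and, for every simple object S of A, the functor Hom_A(S,−) : A → Ab preserves coproducts. Then there exist a set X and an X-indexed family of division rings D_x such that A is equivalent to the product category ∏_{x∈X} (D_x-Mod) of the categories of left D_x-vector spaces. -/
set_option linter.unusedSectionVars false
set_option maxHeartbeats 1000000

open CategoryTheory Limits Opposite

universe v u

/-- A classification datum for an abelian category `𝒜`: a set `X`, a family of division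
rings `D x` indexed by `X`, and an equivalence between `𝒜` and the product over `x ∈ X` of
the categories of left `D x`-vector spaces. -/
structure SemisimpleClassification (𝒜 : Type u) [Category.{v} 𝒜] where
  X : Type v
  D : X → Type v
  [divisionRing : ∀ x, DivisionRing (D x)]
  equiv : 𝒜 ≌ ((x : X) → ModuleCat.{v} (D x))

theorem simple_op' {C : Type u} [Category.{v} C] [Abelian C] (A : C) [Simple A] :
    Simple (op A) := by
  apply simple_of_cosimple
  intro Z f hf
  have hm : Mono f.unop := by infer_instance
  rw [← isIso_unop_iff, Simple.mono_isIso_iff_nonzero]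
  constructor
  · intro h h0; exact h (by rw [h0]; rfl)
  · intro h h0; apply h; have := congrArg Quiver.Hom.op h0; simpa using this

variable {𝒜 : Type u} [Category.{v} 𝒜] [Abelian 𝒜] [HasCoproducts.{v} 𝒜]

theorem hom_zero_of_no_iso {A B : 𝒜} [Simple A] [Simple B] (h : IsEmpty (A ≅ B)) (f : A ⟶ B) :
    f = 0 := by
  by_contra hf
  exact h.elim (@asIso _ _ _ _ f (isIso_of_hom_simple hf))

theorem hom_mem_closure {A : 𝒜} {κ : Type v} (Z : κ → 𝒜)
    [PreservesColimitsOfShape (Discrete κ) (preadditiveCoyoneda.obj (op A))]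
    (φ : A ⟶ ∐ Z) :
    φ ∈ AddSubgroup.closure (⋃ j, Set.range (fun ψ : A ⟶ Z j => ψ ≫ Sigma.ι Z j)) := by
  set Fc := preadditiveCoyoneda.obj (op A)
  set H := AddSubgroup.closure (⋃ j, Set.range (fun ψ : A ⟶ Z j => ψ ≫ Sigma.ι Z j)) with hH
  have hc : IsColimit (Fc.mapCocone (colimit.cocone (Discrete.functor Z))) :=
    isColimitOfPreserves Fc (colimit.isColimit _)
  have memH : ∀ (j : κ) (ψ : A ⟶ Z j), ψ ≫ Sigma.ι Z j ∈ H := by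
    intro j ψ
    exact AddSubgroup.subset_closure (Set.mem_iUnion.2 ⟨j, ⟨ψ, rfl⟩⟩)
  let d : Cocone (Discrete.functor Z ⋙ Fc) :=
    { pt := AddCommGrpCat.of H
      ι := Discrete.natTrans fun j => AddCommGrpCat.ofHom
        { toFun := fun ψ => ⟨ψ ≫ Sigma.ι Z j.as, memH j.as ψ⟩
          map_zero' := Subtype.ext Limits.zero_comp
          map_add' := fun a b => Subtype.ext (Preadditive.add_comp _ _ _ _ _ _) } }
  have key : hc.desc d ≫ AddCommGrpCat.ofHom H.subtype = 𝟙 (Fc.obj (∐ Z)) := by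
    apply hc.hom_ext
    intro j
    rw [← Category.assoc, hc.fac d j]
    ext ψ
    rfl
  have : AddCommGrpCat.ofHom H.subtype ((hc.desc d) φ) = φ := by
    have := congrArg (fun (h : Fc.obj (∐ Z) ⟶ Fc.obj (∐ Z)) => h φ) key
    exact this
  rw [← this]
  exact Subtype.property ((hc.desc d) φ)

noncomputable def Ffun {X : Type v} (T : X → 𝒜) :
    𝒜 ⥤ ∀ x, ModuleCat.{v} (End (T x))ᵐᵒᵖ :=
  Functor.pi' fun x => preadditiveCoyonedaObj (T x)

theorem Ffun_map {X : Type v} (T : X → 𝒜) {M N : 𝒜} (f : M ⟶ N) (x : X) (φ : T x ⟶ M) :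
    ((Ffun T).map f x) φ = φ ≫ f := rfl

theorem Ffaithful {X : Type v} (T : X → 𝒜)
    (hTsurj : ∀ A : 𝒜, Simple A → ∃ x, Nonempty (T x ≅ A))
    (hss : ∀ M : 𝒜, ∃ (ι : Type v) (S : ι → 𝒜), (∀ i, Simple (S i)) ∧ Nonempty (M ≅ ∐ S)) :
    (Ffun T).Faithful := by
  constructor
  intro M N f g hfg
  obtain ⟨ι', S', hS', ⟨e⟩⟩ := hss M
  rw [← Iso.cancel_iso_inv_left e]
  apply colimit.hom_ext
  rintro ⟨j⟩
  haveI := hS' j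
  obtain ⟨x, ⟨u⟩⟩ := hTsurj (S' j) (hS' j)
  have h2 := congrArg (fun (h : (Ffun T).obj M ⟶ (Ffun T).obj N) =>
    (h x) (u.hom ≫ Sigma.ι S' j ≫ e.inv)) hfg
  simp only [Ffun_map, Category.assoc] at h2
  exact (cancel_epi u.hom).mp h2

theorem Ffull {X : Type v} (T : X → 𝒜) (hT : ∀ x, Simple (T x))
    (hTinj : ∀ x y : X, (T x ≅ T y) → x = y)
    (hTsurj : ∀ A : 𝒜, Simple A → ∃ x, Nonempty (T x ≅ A))
    (hss : ∀ M : 𝒜, ∃ (ι : Type v) (S : ι → 𝒜), (∀ i, Simple (S i)) ∧ Nonempty (M ≅ ∐ S))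
    (hpres : ∀ S : 𝒜, Simple S → ∀ ι : Type v,
      PreservesColimitsOfShape (Discrete ι) (preadditiveCoyoneda.obj (op S))) :
    (Ffun T).Full := by
  constructor
  intro M N g
  obtain ⟨ι', S', hS', ⟨e⟩⟩ := hss M
  have hx : ∀ j, ∃ x, Nonempty (T x ≅ S' j) := fun j => hTsurj (S' j) (hS' j)
  choose xj uj using hx
  let u : ∀ j, T (xj j) ≅ S' j := fun j => (uj j).some
  let dsc : ∐ S' ⟶ N :=
    Sigma.desc fun j => (u j).inv ≫ g (xj j) ((u j).hom ≫ Sigma.ι S' j ≫ e.inv)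
  refine ⟨e.hom ≫ dsc, ?_⟩
  funext x
  apply ModuleCat.hom_ext
  apply LinearMap.ext
  intro φ
  -- goal : ((Ffun T).map (e.hom ≫ dsc) x) φ = (g x) φ
  have main : ∀ (χ : T x ⟶ ∐ S'), χ ≫ dsc = g x (χ ≫ e.inv) := by
    intro χ
    haveI := hpres (T x) (hT x) ι'
    refine AddSubgroup.closure_induction ?_ ?_ ?_ ?_ (hom_mem_closure S' χ)
    · rintro ξ hξ
      rw [Set.mem_iUnion] at hξ
      obtain ⟨j, ψ, rfl⟩ := hξ
      haveI := hS' j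
      by_cases hxy : xj j = x
      · subst hxy
        let r : (End (T (xj j)))ᵐᵒᵖ := MulOpposite.op (ψ ≫ (u j).inv)
        let χ₀ : ((Ffun T).obj M (xj j) : Type v) := (u j).hom ≫ Sigma.ι S' j ≫ e.inv
        have lhs : (ψ ≫ Sigma.ι S' j) ≫ dsc = r • ((g (xj j)) χ₀) := by
          show (ψ ≫ Sigma.ι S' j) ≫ dsc = (ψ ≫ (u j).inv) ≫ ((g (xj j)) χ₀)
          simp [dsc, χ₀]
          exact (Category.assoc _ _ _).symm
        have harg : ((ψ ≫ Sigma.ι S' j) ≫ e.inv) = r • χ₀ := by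
          show _ = (ψ ≫ (u j).inv) ≫ ((u j).hom ≫ Sigma.ι S' j ≫ e.inv)
          simp
        rw [lhs, harg, map_smul]
      · have hzero : ψ = 0 := by
          apply hom_zero_of_no_iso
          constructor
          intro v
          exact hxy (hTinj _ _ (v ≪≫ (u j).symm)).symm
        subst hzero
        simp only [Limits.zero_comp]
        exact (map_zero (g x).hom).symm
    · simp only [Limits.zero_comp]
      exact (map_zero (g x).hom).symm
    · intro a b _ _ ha hb
      simp only [Preadditive.add_comp]
      rw [ha, hb]
      exact (map_add (g x).hom _ _).symm
    · intro a _ ha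
      simp only [Preadditive.neg_comp]
      rw [ha]
      exact (map_neg (g x).hom _).symm
  have := main (φ ≫ e.hom)
  erw [Ffun_map]
  simp only [Category.assoc] at this ⊢
  erw [← Category.assoc, this]
  exact congrArg _ ((Category.assoc _ _ _).trans ((congrArg (fun k => (φ : T x ⟶ M) ≫ k) e.hom_inv_id).trans (Category.comp_id _)))

theorem FessSurj {X : Type v} (T : X → 𝒜) (hT : ∀ x, Simple (T x))
    (hTinj : ∀ x y : X, (T x ≅ T y) → x = y)
    (hpres : ∀ S : 𝒜, Simple S → ∀ ι : Type v,
      PreservesColimitsOfShape (Discrete ι) (preadditiveCoyoneda.obj (op S))) :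
    (Ffun T).EssSurj := by
  constructor
  intro V
  classical
  haveI : ∀ x, Simple (T x) := hT
  haveI : ∀ x, Simple (op (T x)) := fun x => simple_op' (T x)
  let Bx : X → Type v := fun x => ↥(Module.Basis.ofVectorSpaceIndex (End (T x))ᵐᵒᵖ (V x))
  let bas : ∀ x, Module.Basis (Bx x) (End (T x))ᵐᵒᵖ (V x) := fun x => Module.Basis.ofVectorSpace _ _
  let κ := Σ x, Bx x
  let Z : κ → 𝒜 := fun p => T p.1
  let Mo := ∐ Z
  let ℓ : ∀ y, (V y : Type v) →ₗ[(End (T y))ᵐᵒᵖ] ((Ffun T).obj Mo y : Type v) :=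
    fun y => (bas y).constr ℕ fun b => Sigma.ι Z ⟨y, b⟩
  -- projections
  let π : ∀ (y : X), Bx y → (Mo ⟶ T y) := fun y b₀ =>
    Sigma.desc fun p => if h : p = (⟨y, b₀⟩ : κ) then eqToHom (congrArg (fun q : κ => T q.1) h) else 0
  have hπ : ∀ (y : X) (b₀ b : Bx y), Sigma.ι Z ⟨y, b⟩ ≫ π y b₀
      = if b = b₀ then 𝟙 (T y) else 0 := by
    intro y b₀ b
    rw [Sigma.ι_desc]
    by_cases h : b = b₀
    · subst h; rw [dif_pos rfl, if_pos rfl]; rfl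
    · rw [dif_neg, if_neg h]
      intro hh
      injection hh with _ h2
      exact h h2
  have hsurj : ∀ y, Function.Surjective (ℓ y) := by
    intro y φ
    haveI := hpres (T y) (hT y) κ
    have hmem := hom_mem_closure Z (φ : T y ⟶ Mo)
    have hle : AddSubgroup.closure (⋃ j, Set.range (fun ψ : T y ⟶ Z j => ψ ≫ Sigma.ι Z j))
        ≤ (LinearMap.range (ℓ y)).toAddSubgroup := by
      refine (AddSubgroup.closure_le _).2 ?_
      rintro ξ hξ
      rw [Set.mem_iUnion] at hξ
      obtain ⟨⟨x, b⟩, ψ, rfl⟩ := hξ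
      by_cases h : x = y
      · subst h
        refine ⟨(MulOpposite.op ψ : (End (T x))ᵐᵒᵖ) • bas x b, ?_⟩
        erw [map_smul, Module.Basis.constr_basis]
        rfl
      · have hz : ψ = 0 := by
          apply hom_zero_of_no_iso
          constructor
          intro v
          exact h (hTinj _ _ v).symm
        rw [hz]
        exact ⟨0, by simp; rfl⟩
    exact hle hmem
  have hinj : ∀ y, Function.Injective (ℓ y) := by
    intro y
    rw [injective_iff_map_eq_zero]
    intro v hv
    have hco : ∀ b₀ : Bx y, (bas y).repr v b₀ = 0 := by
      intro b₀
      have h1 : (ℓ y v : T y ⟶ Mo) ≫ π y b₀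
          = ((bas y).repr v).sum fun b c => c.unop ≫ (Sigma.ι Z ⟨y, b⟩ ≫ π y b₀) := by
        erw [Module.Basis.constr_apply]
        erw [Finsupp.sum, Finsupp.sum, Preadditive.sum_comp]
        refine Finset.sum_congr rfl fun b _ => ?_
        rw [← Category.assoc]
        rfl
      have h2 : (ℓ y v : T y ⟶ Mo) ≫ π y b₀ = ((bas y).repr v b₀).unop := by
        rw [h1]
        have : ∀ b (c : (End (T y))ᵐᵒᵖ), c.unop ≫ (Sigma.ι Z ⟨y, b⟩ ≫ π y b₀)
            = if b = b₀ then c.unop else 0 := by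
          intro b c
          rw [hπ]
          by_cases h : b = b₀
          · rw [if_pos h, if_pos h, Category.comp_id]
          · rw [if_neg h, if_neg h, Limits.comp_zero]
        calc ((bas y).repr v).sum (fun b c => c.unop ≫ (Sigma.ι Z ⟨y, b⟩ ≫ π y b₀))
            = ((bas y).repr v).sum (fun b c => if b = b₀ then c.unop else 0) := by
              apply Finsupp.sum_congr; intro b _; exact this b _
          _ = _ := by
              rw [Finsupp.sum_ite_eq']
              by_cases hb : b₀ ∈ ((bas y).repr v).support
              · rw [if_pos hb]
              · rw [if_neg hb, Finsupp.notMem_support_iff.mp hb]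
                simp
      rw [hv] at h2
      have h0 : ((0 : ((Ffun T).obj Mo y : Type v)) : T y ⟶ Mo) ≫ π y b₀ = 0 :=
        Limits.zero_comp
      rw [h0] at h2
      exact MulOpposite.unop_injective (by simpa using h2.symm)
    have : (bas y).repr v = 0 := Finsupp.ext hco
    have h3 := congrArg (bas y).repr.symm this
    rw [LinearEquiv.symm_apply_apply] at h3
    rw [h3]
    simp
  let em : ∀ y, ((Ffun T).obj Mo y) ≅ V y := fun y =>
    (LinearEquiv.ofBijective (ℓ y) ⟨hinj y, hsurj y⟩).symm.toModuleIso
  refine ⟨Mo, ⟨?_⟩⟩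
  exact
    { hom := fun y => (em y).hom
      inv := fun y => (em y).inv
      hom_inv_id := by funext y; exact (em y).hom_inv_id
      inv_hom_id := by funext y; exact (em y).inv_hom_id }

/-- Let `𝒜` be an abelian category with set-indexed coproducts and a generator such that
every object is a coproduct of simple objects and, for every simple object `S`, the functor
`Hom(S, -) : 𝒜 ⥤ Ab` preserves coproducts.  Then `𝒜` is equivalent to a product, over some
set `X`, of categories of vector spaces over division rings `D x`. -/
theorem stmt_2 {𝒜 : Type u} [Category.{v} 𝒜] [Abelian 𝒜] [HasCoproducts.{v} 𝒜]
    (G : 𝒜) (hG : IsSeparator G)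
    (hss : ∀ M : 𝒜, ∃ (ι : Type v) (S : ι → 𝒜),
      (∀ i, Simple (S i)) ∧ Nonempty (M ≅ ∐ S))
    (hpres : ∀ S : 𝒜, Simple S → ∀ ι : Type v,
      PreservesColimitsOfShape (Discrete ι) (preadditiveCoyoneda.obj (Opposite.op S))) :
    Nonempty (SemisimpleClassification 𝒜) := by
  classical
  obtain ⟨ι, S, hS, ⟨eG⟩⟩ := hss G
  let sd : Setoid ι := ⟨fun i j => Nonempty (S i ≅ S j),
    ⟨fun i => ⟨Iso.refl _⟩, fun h => ⟨h.some.symm⟩, fun h1 h2 => ⟨h1.some.trans h2.some⟩⟩⟩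
  let X : Type v := Quotient sd
  let T : X → 𝒜 := fun x => S x.out
  have hT : ∀ x, Simple (T x) := fun x => hS _
  have hTinj : ∀ x y : X, (T x ≅ T y) → x = y := by
    intro x y v
    rw [← Quotient.out_eq x, ← Quotient.out_eq y]
    exact Quotient.sound ⟨v⟩
  have hTsurj : ∀ A : 𝒜, Simple A → ∃ x, Nonempty (T x ≅ A) := by
    intro A hA
    haveI := hA
    have hsep := (isSeparator_def G).mp hG
    have hex : ∃ h : G ⟶ A, h ≠ 0 := by
      by_contra hnone
      push_neg at hnone
      exact id_nonzero A (hsep (𝟙 A) 0 fun h => by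
        rw [Category.comp_id, Limits.comp_zero, hnone h])
    obtain ⟨h, hne⟩ := hex
    have hexi : ∃ i, Sigma.ι S i ≫ (eG.inv ≫ h) ≠ 0 := by
      by_contra hz
      push_neg at hz
      have hz2 : eG.inv ≫ h = 0 := by
        apply colimit.hom_ext
        rintro ⟨i⟩
        simpa using hz i
      apply hne
      calc h = eG.hom ≫ (eG.inv ≫ h) := by simp
        _ = 0 := by rw [hz2, Limits.comp_zero]
    obtain ⟨i, hi⟩ := hexi
    haveI := hS i
    haveI : IsIso (Sigma.ι S i ≫ (eG.inv ≫ h)) := isIso_of_hom_simple hi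
    refine ⟨Quotient.mk sd i, ⟨?_⟩⟩
    have hrel : Nonempty (S (Quotient.mk sd i).out ≅ S i) :=
      Quotient.exact (Quotient.out_eq (Quotient.mk sd i))
    exact hrel.some.trans (asIso (Sigma.ι S i ≫ (eG.inv ≫ h)))
  haveI hFf : (Ffun T).Faithful := Ffaithful T hTsurj hss
  haveI hFful : (Ffun T).Full := Ffull T hT hTinj hTsurj hss hpres
  haveI hFes : (Ffun T).EssSurj := FessSurj T hT hTinj hpres
  haveI hFeq : (Ffun T).IsEquivalence := ⟨hFf, hFful, hFes⟩
  haveI : ∀ x, Simple (T x) := hT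
  haveI : ∀ x, Simple (op (T x)) := fun x => simple_op' (T x)
  exact ⟨{ X := X
           D := fun x => (End (T x))ᵐᵒᵖ
           divisionRing := fun x => inferInstance
           equiv := (Ffun T).asEquivalence }⟩
end

section
/- Let A be an abelian category satisfying AB5, let M be an object of A, and let (N_x)_{x∈X} be a family of subobjects of M. Suppose that for every finite subset Z ⊆ X the induced morphism ∐_{z∈Z} N_z → M is a monomorphism. Then the induced morphism ∐_{x∈X} N_x → M is a monomorphism. -/
open CategoryTheory Limits

universe v u

/-- In an AB5 abelian category, if `(N x)_{x ∈ X}` is a family of subobjects of `M` such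
that for every finite subset `Z ⊆ X` the induced morphism `∐_{z ∈ Z} N z ⟶ M` is a
monomorphism, then the induced morphism `∐_{x ∈ X} N x ⟶ M` is a monomorphism. -/
theorem stmt_3 {𝒜 : Type u} [Category.{v} 𝒜] [Abelian 𝒜] [HasColimits 𝒜] [AB5 𝒜]
    (M : 𝒜) {X : Type v} (N : X → Subobject M)
    (h : ∀ Z : Finset X, Mono (Sigma.desc (fun z : {x // x ∈ Z} => (N z.1).arrow))) :
    Mono (Sigma.desc (fun x : X => (N x).arrow)) := by
  classical
  let F : Discrete X ⥤ 𝒜 := Discrete.functor (fun x => ((N x : Subobject M) : 𝒜))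
  -- each finite-subset desc over `Finset (Discrete X)` is mono
  have hmono : ∀ J : Finset (Discrete X),
      Mono (Sigma.desc (fun j : {j // j ∈ J} => (N j.1.as).arrow)) := by
    intro J
    let Z : Finset X := J.image Discrete.as
    let e : {j // j ∈ J} ≃ {x // x ∈ Z} :=
      { toFun := fun j => ⟨j.1.as, Finset.mem_image_of_mem _ j.2⟩
        invFun := fun z => ⟨⟨z.1⟩, by
          obtain ⟨j, hj, hj'⟩ := Finset.mem_image.1 z.2
          cases j; cases hj'; exact hj⟩
        left_inv := fun j => rfl
        right_inv := fun z => rfl }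
    have key : Sigma.desc (fun j : {j // j ∈ J} => (N j.1.as).arrow) =
        (Sigma.reindex e (fun z : {x // x ∈ Z} => ((N z.1 : Subobject M) : 𝒜))).hom ≫
          Sigma.desc (fun z : {x // x ∈ Z} => (N z.1).arrow) := by
      apply Sigma.hom_ext
      intro j
      have h2 := Sigma.ι_reindex_hom_assoc e
        (fun z : {x // x ∈ Z} => ((N z.1 : Subobject M) : 𝒜)) j
        (Sigma.desc fun z : {x // x ∈ Z} => (N z.1).arrow)
      simp only [Sigma.ι_desc] at h2 ⊢
      exact h2.symm
    rw [key]
    have := h Z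
    exact mono_comp _ _
  -- the natural transformation from the finite coproducts to the constant functor
  let φ : CoproductsFromFiniteFiltered.liftToFinsetObj F ⟶
      (Functor.const (Finset (Discrete X))).obj M :=
    { app := fun J => Sigma.desc (fun j : {j // j ∈ J} => (N j.1.as).arrow)
      naturality := by
        intro J J' f
        apply Sigma.hom_ext
        intro j
        simp [CoproductsFromFiniteFiltered.liftToFinsetObj, F] }
  have : ∀ J, Mono (φ.app J) := fun J => hmono J
  have hφ : Mono φ := NatTrans.mono_of_mono_app φ
  have hcolimφ : Mono (colim.map φ) := colim.map_mono φ
  -- the canonical map from the colimit of the constant functor to `M`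
  let δ : colim.obj ((Functor.const (Finset (Discrete X))).obj M) ⟶ M :=
    colimit.desc _ ⟨M, ⟨fun _ => 𝟙 M, by simp⟩⟩
  have hδ : IsIso δ := by
    refine ⟨colimit.ι ((Functor.const (Finset (Discrete X))).obj M) ∅, ?_, ?_⟩
    · apply colimit.hom_ext
      intro J
      have := colimit.w ((Functor.const (Finset (Discrete X))).obj M)
        (homOfLE (Finset.empty_subset J))
      simp_all [δ]
    · simp [δ]
  -- express the big desc through the filtered colimit
  have key : Sigma.desc (fun x : X => (N x).arrow) =
      (colimit.isoColimitCocone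
        (CoproductsFromFiniteFiltered.liftToFinsetColimitCocone F)).hom ≫
        colim.map φ ≫ δ := by
    apply Sigma.hom_ext
    intro x
    rw [colimit.ι_desc]
    have h1 : colimit.ι F ⟨x⟩ ≫ (colimit.isoColimitCocone
        (CoproductsFromFiniteFiltered.liftToFinsetColimitCocone F)).hom =
        (CoproductsFromFiniteFiltered.liftToFinsetColimitCocone F).cocone.ι.app ⟨x⟩ :=
      colimit.isoColimitCocone_ι_hom _ _
    rw [← Category.assoc, h1]
    simp [CoproductsFromFiniteFiltered.liftToFinsetColimitCocone, φ, δ, F]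
    erw [Category.assoc, colimit.ι_desc]
    simp [φ]
    erw [Category.comp_id, Sigma.ι_desc]
  rw [key]
  have : Mono (colim.map φ ≫ δ) := mono_comp _ _
  exact @mono_comp _ _ _ _ _ _ inferInstance _ this
end

section
/- Let A be an abelian category satisfying AB5 and let S be a simple object of A. Then the functor Hom_A(S,−) preserves direct limits of diagrams of monomorphisms: for every directed poset Z and every Z-shaped diagram (M_w → M_z)_{w<z} in A whose transition morphisms are all monomorphisms, the canonical map colim_{z∈Z} Hom_A(S, M_z) → Hom_A(S, colim_{z∈Z} M_z) is a bijection; in particular, every morphism S → colim_{z∈Z} M_z factors through one of the canonical morphisms M_z → colim_{z∈Z} M_z. -/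
open CategoryTheory Limits

universe v u

section Aux

variable {Z : Type v} [Preorder Z] [IsDirected Z (· ≤ ·)] [Nonempty Z]
variable {𝒜 : Type u} [Category.{v} 𝒜]

/-- The tautological cocone over a constant functor on a directed nonempty preorder. -/
def stmt5ConstCocone (X : 𝒜) : Cocone ((Functor.const Z).obj X) where
  pt := X
  ι := { app := fun _ => 𝟙 X, naturality := fun _ _ _ => by simp }

/-- The tautological cocone over a constant functor is a colimit cocone. -/
noncomputable def stmt5ConstCoconeIsColimit (X : 𝒜) : IsColimit (stmt5ConstCocone (Z := Z) X) where
  desc s := s.ι.app (Classical.arbitrary Z)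
  fac s w := by
    obtain ⟨u, hw, h0⟩ := directed_of (· ≤ ·) w (Classical.arbitrary Z)
    have h1 := s.w (homOfLE hw)
    have h2 := s.w (homOfLE h0)
    simp only [Functor.const_obj_map, Category.id_comp] at h1 h2
    dsimp [stmt5ConstCocone]
    rw [Category.id_comp, ← h2, h1]
  uniq s m hm := by exact (Category.id_comp m).symm.trans (hm (Classical.arbitrary Z))

/-- The colimit of a constant functor on a directed nonempty preorder is the constant value. -/
noncomputable def stmt5ConstColimIso (X : 𝒜) [HasColimit ((Functor.const Z).obj X)] :
    colimit ((Functor.const Z).obj X) ≅ X :=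
  colimit.isoColimitCocone ⟨_, stmt5ConstCoconeIsColimit X⟩

lemma stmt5_ι_constColimIso (X : 𝒜) [HasColimit ((Functor.const Z).obj X)] (w : Z) :
    colimit.ι ((Functor.const Z).obj X) w = (stmt5ConstColimIso (Z := Z) X).inv := by
  rw [← Iso.comp_hom_eq_id]
  exact colimit.isoColimitCocone_ι_hom ⟨_, stmt5ConstCoconeIsColimit X⟩ w

end Aux

section Mono

variable {𝒜 : Type u} [Category.{v} 𝒜] [Abelian 𝒜] [HasColimits 𝒜] [AB5 𝒜]

/-- In an AB5 abelian category, colimit injections of a directed diagram of monos are monos. -/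
lemma stmt5_mono_colimit_ι {Z : Type v} [PartialOrder Z] [IsDirected Z (· ≤ ·)] [Nonempty Z]
    (F : Z ⥤ 𝒜) (hmono : ∀ (w z : Z) (h : w ≤ z), Mono (F.map (homOfLE h))) (z : Z) :
    Mono (colimit.ι F z) := by
  let Z' := {w : Z // z ≤ w}
  haveI : IsDirected Z' (· ≤ ·) := ⟨fun a b => by
    obtain ⟨c, hac, hbc⟩ := directed_of (· ≤ ·) a.1 b.1
    exact ⟨⟨c, a.2.trans hac⟩, hac, hbc⟩⟩
  haveI : Nonempty Z' := ⟨⟨z, le_refl z⟩⟩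
  let incl : Z' ⥤ Z := Monotone.functor (f := (Subtype.val : Z' → Z)) (fun _ _ h => h)
  haveI : incl.Final := by
    apply Functor.final_of_exists_of_isFiltered
    · intro d
      obtain ⟨c, hdc, hzc⟩ := directed_of (· ≤ ·) d z
      exact ⟨⟨c, hzc⟩, ⟨homOfLE hdc⟩⟩
    · intro d c s s'
      exact ⟨c, 𝟙 c, Subsingleton.elim _ _⟩
  let β : (Functor.const Z').obj (F.obj z) ⟶ incl ⋙ F :=
    { app := fun w => F.map (homOfLE w.2)
      naturality := fun w w' h => by
        dsimp
        rw [Category.id_comp, ← F.map_comp]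
        congr 1 }
  haveI : ∀ w : Z', Mono (β.app w) := fun w => hmono z w.1 w.2
  haveI : Mono β := NatTrans.mono_of_mono_app β
  haveI : Mono (colimMap β) := (colim (J := Z') (C := 𝒜)).map_mono β
  have key : colimit.ι F z =
      (stmt5ConstColimIso (F.obj z)).inv ≫ colimMap β ≫ (Functor.Final.colimitIso incl F).hom := by
    rw [← stmt5_ι_constColimIso (F.obj z) (⟨z, le_refl z⟩ : Z'), ι_colimMap_assoc,
      Functor.Final.ι_colimitIso_hom]
    have : β.app ⟨z, le_refl z⟩ = 𝟙 (F.obj z) := F.map_id z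
    rw [this]
    exact (Category.id_comp _).symm
  rw [key]
  infer_instance

end Mono

/-- In an AB5 abelian category, for a simple object `S`, the functor `Hom(S, -)` preserves
direct limits of diagrams of monomorphisms: for every directed poset `Z` and every
`Z`-shaped diagram `F` all of whose transition morphisms are monomorphisms, the cocone
obtained by applying `Hom(S, -)` to the colimit cocone of `F` is again a colimit cocone
(i.e. the canonical map `colim_z Hom(S, F z) → Hom(S, colim_z F z)` is bijective); in
particular, every morphism `S ⟶ colim_z F z` factors through one of the canonical
morphisms `F z ⟶ colim_z F z`. -/
theorem stmt_5 {𝒜 : Type u} [Category.{v} 𝒜] [Abelian 𝒜] [HasColimits 𝒜] [AB5 𝒜]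
    (S : 𝒜) (hS : Simple S)
    {Z : Type v} [PartialOrder Z] [IsDirected Z (· ≤ ·)] [Nonempty Z]
    (F : Z ⥤ 𝒜) (hmono : ∀ (w z : Z) (h : w ≤ z), Mono (F.map (homOfLE h))) :
    Nonempty (IsColimit ((preadditiveCoyoneda.obj (Opposite.op S)).mapCocone
      (colimit.cocone F))) ∧
    ∀ f : S ⟶ colimit F, ∃ (z : Z) (g : S ⟶ F.obj z), g ≫ colimit.ι F z = f := by
  haveI := hS
  have monoι : ∀ z : Z, Mono (colimit.ι F z) := stmt5_mono_colimit_ι F hmono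
  -- Part 2: the factorization property.
  have key : ∀ f : S ⟶ colimit F, ∃ (z : Z) (g : S ⟶ F.obj z), g ≫ colimit.ι F z = f := by
    intro f
    set φ : (Functor.const Z).obj S ⟶ (Functor.const Z).obj (colimit F) :=
      (Functor.const Z).map f with hφ
    set ψ : F ⟶ (Functor.const Z).obj (colimit F) := (colimit.cocone F).ι with hψ
    haveI : ∀ w : Z, Mono (ψ.app w) := fun w => monoι w
    haveI : Mono ψ := NatTrans.mono_of_mono_app ψ
    by_cases hw : ∃ w : Z, ¬ IsZero ((pullback φ ψ).obj w)
    · obtain ⟨w, hw⟩ := hw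
      have hnz : (pullback.fst φ ψ).app w ≠ 0 := by
        intro h0
        apply hw
        rw [IsZero.iff_id_eq_zero, ← cancel_mono ((pullback.fst φ ψ).app w)]
        simp [h0]
      haveI : Simple (((Functor.const Z).obj S).obj w) := hS
      haveI : IsIso ((pullback.fst φ ψ).app w) := isIso_of_mono_of_nonzero hnz
      refine ⟨w, inv ((pullback.fst φ ψ).app w) ≫ (pullback.snd φ ψ).app w, ?_⟩
      have hcond := congr_app (pullback.condition (f := φ) (g := ψ)) w
      simp only [NatTrans.comp_app] at hcond
      have hcond' : (pullback.fst φ ψ).app w ≫ f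
          = (pullback.snd φ ψ).app w ≫ colimit.ι F w := hcond
      rw [Category.assoc, ← hcond', IsIso.inv_hom_id_assoc]
    · exfalso
      push_neg at hw
      have hz : IsZero (colimit (pullback φ ψ)) := by
        rw [IsZero.iff_id_eq_zero]
        apply colimit.hom_ext
        intro w
        exact (hw w).eq_of_src _ _
      have hz2 : IsZero (pullback (colim.map φ) (colim.map ψ)) :=
        hz.of_iso (PreservesPullback.iso (colim (J := Z) (C := 𝒜)) φ ψ).symm
      have hψcolim : colim.map ψ = (stmt5ConstColimIso (Z := Z) (colimit F)).inv := by
        apply colimit.hom_ext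
        intro w
        rw [colim_map, ι_colimMap, ← stmt5_ι_constColimIso (Z := Z) (colimit F) w]
        rfl
      have hsq : (stmt5ConstColimIso (Z := Z) S).inv ≫ colim.map φ = f ≫ colim.map ψ := by
        have w0 : Z := Classical.arbitrary Z
        rw [hψcolim, colim_map, ← stmt5_ι_constColimIso (Z := Z) S w0,
          ← stmt5_ι_constColimIso (Z := Z) (colimit F) w0, ι_colimMap]
        rfl
      have ht : pullback.lift _ _ hsq ≫ pullback.fst (colim.map φ) (colim.map ψ)
          = (stmt5ConstColimIso (Z := Z) S).inv := pullback.lift_fst _ _ _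
      have h0 : (stmt5ConstColimIso (Z := Z) S).inv = 0 := by
        rw [← ht, hz2.eq_of_tgt (pullback.lift _ _ hsq) 0, zero_comp]
      exact id_nonzero S
        (by rw [← Iso.inv_hom_id (stmt5ConstColimIso (Z := Z) S), h0, zero_comp])
  refine ⟨?_, key⟩
  -- Part 1: `Hom(S, -)` applied to the colimit cocone is a colimit cocone.
  set coyo := preadditiveCoyoneda.obj (Opposite.op S) with hcoyo
  set c := coyo.mapCocone (colimit.cocone F) with hc
  set d := colimit.desc (F ⋙ coyo) c with hd
  have happ : ∀ (z : Z) (g : S ⟶ F.obj z),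
      d (colimit.ι (F ⋙ coyo) z g) = g ≫ colimit.ι F z := by
    intro z g
    show (colimit.ι (F ⋙ coyo) z ≫ d) g = _
    rw [hd, colimit.ι_desc]
    rfl
  have hbij : Function.Bijective d := by
    constructor
    · intro a b hab
      obtain ⟨z₁, g₁, rfl⟩ := Concrete.colimit_exists_rep (F ⋙ coyo) a
      obtain ⟨z₂, g₂, rfl⟩ := Concrete.colimit_exists_rep (F ⋙ coyo) b
      obtain ⟨z, h₁, h₂⟩ := directed_of (· ≤ ·) z₁ z₂
      rw [← colimit.w_apply (F ⋙ coyo) (homOfLE h₁),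
        ← colimit.w_apply (F ⋙ coyo) (homOfLE h₂)] at hab ⊢
      erw [happ, happ] at hab
      congr 1
      haveI := monoι z
      exact (cancel_mono (colimit.ι F z)).1 hab
    · intro x
      obtain ⟨z, g, hg⟩ := key x
      exact ⟨colimit.ι (F ⋙ coyo) z g, by rw [happ]; exact hg⟩
  haveI : IsIso d := by
    rw [ConcreteCategory.isIso_iff_bijective]
    exact hbij
  haveI : IsIso ((colimit.isColimit (F ⋙ coyo)).desc c) := this
  exact ⟨IsColimit.ofPointIso (colimit.isColimit (F ⋙ coyo))⟩
end

section
/- For every complete, separated topological ring R with a right linear topology there exist an associative ring A and a left A-module M such that R is isomorphic, as a topological ring, to the opposite ring (End_A(M))^op of the endomorphism ring of M, endowed with the finite topology; that is, there is a ring isomorphism R ≅ (End_A(M))^op which is a homeomorphism when End_A(M) carries the topology induced from the product topology on the function space M → M, where M is given the discrete topology. -/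
open Topology

universe u

/-- The finite topology on the endomorphism ring `End_A(M)` of a module `M`: the topology
induced by the inclusion `End_A(M) ⊆ (M → M)`, where `M` carries the discrete topology and
`M → M` the product topology. -/
def endFiniteTopology (A : Type*) [Ring A] (M : Type*) [AddCommGroup M] [Module A M] :
    TopologicalSpace (Module.End A M) :=
  TopologicalSpace.induced (fun f (m : M) => f m)
    (@Pi.topologicalSpace M (fun _ => M) (fun _ => ⊥))

/-- The finite topology on the opposite ring `(End_A(M))ᵒᵖ`, transported along `unop`. -/
def endOpFiniteTopology (A : Type*) [Ring A] (M : Type*) [AddCommGroup M] [Module A M] :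
    TopologicalSpace (Module.End A M)ᵐᵒᵖ :=
  TopologicalSpace.induced MulOpposite.unop (endFiniteTopology A M)

/-- A realization of a topological ring `R` as the opposite ring `(End_A(M))ᵒᵖ` of the
endomorphism ring of a module `M` over some ring `A`, endowed with the finite topology:
a ring isomorphism `R ≃+* (End_A(M))ᵒᵖ` which is a homeomorphism for the finite topology
on the codomain. -/
structure EndRealization (R : Type u) [Ring R] [TopologicalSpace R] where
  A : Type u
  [ringA : Ring A]
  M : Type u
  [addCommGroupM : AddCommGroup M]
  [moduleM : Module A M]
  e : R ≃+* (Module.End A M)ᵐᵒᵖ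
  continuous_toFun : Continuous[inferInstance, endOpFiniteTopology A M] e
  continuous_invFun : Continuous[endOpFiniteTopology A M, inferInstance] e.symm

open MulOpposite

namespace Stmt6

variable {R : Type u} [Ring R] [TopologicalSpace R]

abbrev Lam (R : Type u) [Ring R] [TopologicalSpace R] : Type u :=
  {I : Submodule Rᵐᵒᵖ R // IsOpen (I : Set R)}

noncomputable instance : DecidableEq (Lam R) := Classical.decEq _

abbrev MM (R : Type u) [Ring R] [TopologicalSpace R] : Type u :=
  DirectSum (Lam R) (fun I => R ⧸ I.1)

abbrev AA (R : Type u) [Ring R] [TopologicalSpace R] : Type u := Module.End Rᵐᵒᵖ (MM R)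

noncomputable instance : Ring (AA R) := @Module.End.instRing Rᵐᵒᵖ (MM R) _ _ _

noncomputable abbrev lofM (J : Lam R) : (R ⧸ J.1) →ₗ[Rᵐᵒᵖ] MM R :=
  DirectSum.lof Rᵐᵒᵖ (Lam R) (fun I : Lam R => R ⧸ I.1) J

noncomputable def uu (J : Lam R) : MM R := lofM J (Submodule.Quotient.mk 1)

lemma smul_lof (s : R) (J : Lam R) (a : R) :
    op s • (lofM J (Submodule.Quotient.mk a)) = lofM J (Submodule.Quotient.mk (a * s)) := by
  rw [← LinearMap.map_smul, ← Submodule.Quotient.mk_smul, op_smul_eq_mul]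

lemma smul_uu (s : R) (J : Lam R) : op s • uu J = lofM J (Submodule.Quotient.mk s) := by
  rw [uu, smul_lof, one_mul]

/-- turn an AddSubgroup closed under right multiplication into a `Submodule Rᵐᵒᵖ R`. -/
def toSubmodule (I : AddSubgroup R) (hI : ∀ a ∈ I, ∀ r : R, a * r ∈ I) : Submodule Rᵐᵒᵖ R where
  carrier := I
  add_mem' := fun h1 h2 => I.add_mem h1 h2
  zero_mem' := I.zero_mem
  smul_mem' := fun c a ha => by
    show a * c.unop ∈ I
    exact hI a ha c.unop

/-- the left-multiplication linear map. -/
def lmul (a : R) : R →ₗ[Rᵐᵒᵖ] R where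
  toFun s := a * s
  map_add' := mul_add a
  map_smul' := fun t s => by
    show a * (s * t.unop) = (a * s) * t.unop
    rw [mul_assoc]

/-- the orbit map `s ↦ op s • x`. -/
def phi (x : MM R) : R →ₗ[Rᵐᵒᵖ] MM R where
  toFun s := op s • x
  map_add' := fun s t => by
    show op (s + t) • x = op s • x + op t • x
    rw [op_add, add_smul]
  map_smul' := fun t s => by
    show op (s * t.unop) • x = t • (op s • x)
    rw [op_mul, mul_smul, op_unop]
variable [IsTopologicalRing R]

/-- every element of `MM R` is annihilated by an open right ideal. -/
lemma ann_exists (x : MM R) : ∃ J : Lam R, ∀ s ∈ J.1, op s • x = 0 := by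
  induction x using DirectSum.induction_on with
  | zero => exact ⟨⟨⊤, by rw [Submodule.top_coe]; exact isOpen_univ⟩, fun s _ => smul_zero _⟩
  | of i m =>
    obtain ⟨a, rfl⟩ := Submodule.Quotient.mk_surjective _ m
    refine ⟨⟨i.1.comap (lmul a), ?_⟩, fun s hs => ?_⟩
    · exact i.2.preimage (continuous_mul_left a)
    · have : a * s ∈ i.1 := hs
      rw [show DirectSum.of _ i (Submodule.Quotient.mk a) = lofM i (Submodule.Quotient.mk a) from rfl,
        smul_lof, (Submodule.Quotient.mk_eq_zero _).2 this, map_zero]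
  | add x y hx hy =>
    obtain ⟨J1, h1⟩ := hx
    obtain ⟨J2, h2⟩ := hy
    refine ⟨⟨J1.1 ⊓ J2.1, J1.2.inter J2.2⟩, fun s hs => ?_⟩
    rw [smul_add, h1 s hs.1, h2 s hs.2, add_zero]

/-- right multiplication as an `AA R`-endomorphism, packaged into the opposite ring. -/
noncomputable def rho : R →+* (Module.End (AA R) (MM R))ᵐᵒᵖ where
  toFun r := op
    { toFun := fun x => op r • x
      map_add' := fun x y => smul_add _ x y
      map_smul' := fun (a : AA R) x => (a.map_smul (op r) x).symm }
  map_one' := by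
    apply unop_injective
    ext x : 1
    show op (1 : R) • x = x
    rw [op_one, one_smul]
  map_mul' := fun r s => by
    apply unop_injective
    ext x : 1
    show op (r * s) • x = op s • (op r • x)
    rw [op_mul, mul_smul]
  map_zero' := by
    apply unop_injective
    ext x : 1
    show op (0 : R) • x = 0
    rw [op_zero, zero_smul]
  map_add' := fun r s => by
    apply unop_injective
    ext x : 1
    show op (r + s) • x = op r • x + op s • x
    rw [op_add, add_smul]

lemma rho_apply (r : R) (x : MM R) : (rho r).unop x = op r • x := rfl

/-- the chosen representative of the `J`-component of `F (uu J)`. -/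
noncomputable def rrep (F : Module.End (AA R) (MM R)) (J : Lam R) : R :=
  Quotient.out ((F (uu J)) J)

lemma rrep_spec (F : Module.End (AA R) (MM R)) (J : Lam R) :
    Submodule.Quotient.mk (rrep F J) = (F (uu J)) J := by
  rw [rrep, ← Submodule.Quotient.mk''_eq_mk]
  exact Quotient.out_eq' _

/-- Key matching lemma: if `J` annihilates `x`, then `F` agrees with right
multiplication by `rrep F J` at `x`. -/
lemma matching (F : Module.End (AA R) (MM R)) (x : MM R) (J : Lam R)
    (h : ∀ s ∈ J.1, op s • x = 0) : F x = op (rrep F J) • x := by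
  have hker : J.1 ≤ LinearMap.ker (phi x) := fun s hs => by
    simpa [LinearMap.mem_ker, phi] using h s hs
  set ψ : (R ⧸ J.1) →ₗ[Rᵐᵒᵖ] MM R := J.1.liftQ (M₂ := MM R) (phi x) hker with hψ
  set ex : AA R := ψ ∘ₗ DirectSum.component Rᵐᵒᵖ (Lam R) (fun I => R ⧸ I.1) J with hex
  have he : ex (uu J) = x := by
    show ψ (DirectSum.component Rᵐᵒᵖ (Lam R) (fun I => R ⧸ I.1) J (uu J)) = x
    rw [uu, DirectSum.component.lof_self, Submodule.liftQ_apply]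
    show op (1 : R) • x = x
    rw [op_one, one_smul]
  calc F x = F (ex • uu J) := by rw [Module.End.smul_def, he]
    _ = ex • F (uu J) := F.map_smul ex (uu J)
    _ = ψ ((F (uu J)) J) := by
        rw [Module.End.smul_def]
        show ψ (DirectSum.component Rᵐᵒᵖ (Lam R) (fun I => R ⧸ I.1) J (F (uu J))) = _
        rw [← DirectSum.apply_eq_component]
    _ = op (rrep F J) • x := by rw [← rrep_spec, Submodule.liftQ_apply]; rfl

section Main
variable [T2Space R]

lemma mem_all_eq_zero
    (hlin : ∀ U ∈ nhds (0 : R), ∃ I : AddSubgroup R,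
      IsOpen (I : Set R) ∧ (∀ a ∈ I, ∀ r : R, a * r ∈ I) ∧ (I : Set R) ⊆ U)
    {r : R} (h : ∀ J : Lam R, r ∈ J.1) : r = 0 := by
  by_contra hr
  have hU : ({r}ᶜ : Set R) ∈ nhds (0 : R) :=
    (isOpen_compl_singleton).mem_nhds (by simpa using (Ne.symm hr))
  obtain ⟨I, hIo, hIr, hIU⟩ := hlin _ hU
  have : r ∈ toSubmodule I hIr := h ⟨toSubmodule I hIr, hIo⟩
  exact hIU this rfl

lemma rho_injective
    (hlin : ∀ U ∈ nhds (0 : R), ∃ I : AddSubgroup R,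
      IsOpen (I : Set R) ∧ (∀ a ∈ I, ∀ r : R, a * r ∈ I) ∧ (I : Set R) ⊆ U) :
    Function.Injective (rho (R := R)) := by
  intro a b hab
  have h : ∀ J : Lam R, a - b ∈ J.1 := by
    intro J
    have : op a • uu J = op b • uu J := by
      rw [← rho_apply, ← rho_apply, hab]
    rw [smul_uu, smul_uu] at this
    have := DirectSum.of_injective (β := fun I : Lam R => R ⧸ I.1) J this
    exact (Submodule.Quotient.eq _).1 this
  have h0 := mem_all_eq_zero hlin h
  have : a = b := by
    have := sub_eq_zero.mp h0
    exact this
  exact this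

/-- the basic sets of the Cauchy filter associated with `F`. -/
def BB (F : Module.End (AA R) (MM R)) (J : Lam R) : Set R :=
  (fun J' : Lam R => rrep F J') '' {J' : Lam R | J'.1 ≤ J.1}

lemma uu_ann (J : Lam R) {J' : Lam R} (hle : J'.1 ≤ J.1) :
    ∀ s ∈ J'.1, op s • uu J = 0 := fun s hs => by
  rw [smul_uu, (Submodule.Quotient.mk_eq_zero _).2 (hle hs), map_zero]

lemma rrep_congr (F : Module.End (AA R) (MM R)) {J J1 J2 : Lam R}
    (h1 : J1.1 ≤ J.1) (h2 : J2.1 ≤ J.1) : rrep F J1 - rrep F J2 ∈ J.1 := by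
  have e1 : F (uu J) = op (rrep F J1) • uu J := matching F (uu J) J1 (uu_ann J h1)
  have e2 : F (uu J) = op (rrep F J2) • uu J := matching F (uu J) J2 (uu_ann J h2)
  have : op (rrep F J1) • uu J = op (rrep F J2) • uu J := by rw [← e1, ← e2]
  rw [smul_uu, smul_uu] at this
  exact (Submodule.Quotient.eq _).1 (DirectSum.of_injective (β := fun I : Lam R => R ⧸ I.1) J this)

lemma BB_directed (F : Module.End (AA R) (MM R)) :
    Directed (fun x1 x2 => x1 ≥ x2) (fun J => Filter.principal (BB F J)) := by
  intro J1 J2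
  refine ⟨⟨J1.1 ⊓ J2.1, J1.2.inter J2.2⟩, Filter.principal_mono.2 ?_, Filter.principal_mono.2 ?_⟩
  · rintro x ⟨J', hJ', rfl⟩
    exact ⟨J', show J'.1 ≤ J1.1 from le_trans hJ' inf_le_left, rfl⟩
  · rintro x ⟨J', hJ', rfl⟩
    exact ⟨J', show J'.1 ≤ J2.1 from le_trans hJ' inf_le_right, rfl⟩

lemma rho_surjective
    (hcomplete : @CompleteSpace R (IsTopologicalAddGroup.rightUniformSpace R))
    (hlin : ∀ U ∈ nhds (0 : R), ∃ I : AddSubgroup R,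
      IsOpen (I : Set R) ∧ (∀ a ∈ I, ∀ r : R, a * r ∈ I) ∧ (I : Set R) ⊆ U) :
    Function.Surjective (rho (R := R)) := by
  intro Fop
  set F := Fop.unop with hF
  letI : UniformSpace R := IsTopologicalAddGroup.rightUniformSpace R
  haveI : IsUniformAddGroup R := isUniformAddGroup_of_addCommGroup
  haveI := hcomplete
  set 𝓕 : Filter R := ⨅ J : Lam R, Filter.principal (BB F J) with h𝓕
  haveI hNE : Nonempty (Lam R) := ⟨⟨⊤, by rw [Submodule.top_coe]; exact isOpen_univ⟩⟩
  have hBBmem : ∀ J : Lam R, BB F J ∈ 𝓕 := fun J =>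
    Filter.mem_iInf_of_mem J (Filter.mem_principal_self _)
  have hcauchy : Cauchy 𝓕 := by
    constructor
    · exact Filter.iInf_neBot_of_directed (BB_directed F)
        (fun J => Filter.principal_neBot_iff.2 ⟨rrep F J, J, show J.1 ≤ J.1 from le_rfl, rfl⟩)
    · rw [uniformity_eq_comap_nhds_zero, ← Filter.map_le_iff_le_comap]
      intro U hU
      obtain ⟨I, hIo, hIr, hIU⟩ := hlin U hU
      set JU : Lam R := ⟨toSubmodule I hIr, hIo⟩ with hJU
      rw [Filter.mem_map]
      refine Filter.mem_of_superset (Filter.prod_mem_prod (hBBmem JU) (hBBmem JU)) ?_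
      rintro ⟨a, b⟩ ⟨⟨Ja, hJa, rfl⟩, ⟨Jb, hJb, rfl⟩⟩
      exact hIU (rrep_congr F hJb hJa)
  obtain ⟨r, hr⟩ := CompleteSpace.complete hcauchy
  refine ⟨r, ?_⟩
  apply unop_injective
  ext x : 1
  show op r • x = F x
  obtain ⟨J0, hJ0⟩ := ann_exists x
  -- the set {s | s - r ∈ J0} is a neighborhood of r
  have hW : {s : R | s - r ∈ J0.1} ∈ nhds r := by
    have ho : IsOpen {s : R | s - r ∈ J0.1} :=
      J0.2.preimage (continuous_id.sub continuous_const)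
    exact ho.mem_nhds (by simp)
  have hWF : {s : R | s - r ∈ J0.1} ∈ 𝓕 := hr hW
  rw [h𝓕, Filter.mem_iInf_of_directed (BB_directed F)] at hWF
  obtain ⟨J1, hJ1⟩ := hWF
  rw [Filter.mem_principal] at hJ1
  set J2 : Lam R := ⟨J1.1 ⊓ J0.1, J1.2.inter J0.2⟩ with hJ2
  have hmem : rrep F J2 ∈ BB F J1 := ⟨J2, show J2.1 ≤ J1.1 from inf_le_left, rfl⟩
  have hd : rrep F J2 - r ∈ J0.1 := hJ1 hmem
  have hm : F x = op (rrep F J2) • x := matching F x J2 (fun s hs => hJ0 s hs.2)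
  have : op (rrep F J2) • x = op r • x := by
    have : rrep F J2 = r + (rrep F J2 - r) := by abel
    rw [this, op_add, add_smul, hJ0 _ hd, add_zero]
  rw [hm, this]

/-- continuity of `r ↦ op r • x` into the discrete topology. -/
lemma cont_coord
    (x : MM R) : @Continuous R (MM R) _ ⊥ (fun r : R => op r • x) := by
  rw [continuous_def]
  intro S _
  rw [isOpen_iff_forall_mem_open]
  intro r0 hr0
  obtain ⟨J0, hJ0⟩ := ann_exists x
  refine ⟨{s : R | s - r0 ∈ J0.1}, fun s hs => ?_, J0.2.preimage (continuous_id.sub continuous_const), by simp⟩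
  show op s • x ∈ S
  have : s = r0 + (s - r0) := by abel
  rw [this, op_add, add_smul, hJ0 _ hs, add_zero]
  exact hr0

lemma cylinder_open (y m : MM R) :
    IsOpen[endOpFiniteTopology (AA R) (MM R)]
      {g : (Module.End (AA R) (MM R))ᵐᵒᵖ | (MulOpposite.unop g) y = m} := by
  letI tM : TopologicalSpace (MM R) := ⊥
  haveI : DiscreteTopology (MM R) := ⟨rfl⟩
  letI tE : TopologicalSpace (Module.End (AA R) (MM R)) := endFiniteTopology (AA R) (MM R)
  letI tO : TopologicalSpace (Module.End (AA R) (MM R))ᵐᵒᵖ := endOpFiniteTopology (AA R) (MM R)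
  have h1 : IsOpen {h : MM R → MM R | h y = m} := by
    have := (continuous_apply (A := fun _ : MM R => MM R) y).isOpen_preimage {m} (isOpen_discrete _)
    exact this
  have h2 : IsOpen[TopologicalSpace.induced (fun (f : Module.End (AA R) (MM R)) (m : MM R) => f m)
      (@Pi.topologicalSpace (MM R) (fun _ => MM R) (fun _ => ⊥))]
      {f : Module.End (AA R) (MM R) | ⇑f y = m} :=
    isOpen_induced_iff.mpr ⟨{h : MM R → MM R | h y = m}, h1, rfl⟩
  show IsOpen[TopologicalSpace.induced MulOpposite.unop (endFiniteTopology (AA R) (MM R))]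
      {g : (Module.End (AA R) (MM R))ᵐᵒᵖ | (MulOpposite.unop g) y = m}
  exact isOpen_induced_iff.mpr ⟨_, h2, rfl⟩

end Main
end Stmt6


open Stmt6 MulOpposite

/-- Every complete, separated topological ring `R` with a right linear topology (the open
right ideals form a base of neighborhoods of zero) is isomorphic, as a topological ring, to
the opposite ring of the endomorphism ring of some module `M` over some ring `A`, endowed
with the finite topology. -/
theorem stmt_6 {R : Type u} [Ring R] [TopologicalSpace R] [IsTopologicalRing R] [T2Space R]
    (hcomplete : @CompleteSpace R (IsTopologicalAddGroup.rightUniformSpace R))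
    (hlin : ∀ U ∈ nhds (0 : R), ∃ I : AddSubgroup R,
      IsOpen (I : Set R) ∧ (∀ a ∈ I, ∀ r : R, a * r ∈ I) ∧ (I : Set R) ⊆ U) :
    Nonempty (EndRealization R) := by
  have hbij : Function.Bijective (rho (R := R)) :=
    ⟨rho_injective hlin, rho_surjective hcomplete hlin⟩
  set e : R ≃+* (Module.End (AA R) (MM R))ᵐᵒᵖ := RingEquiv.ofBijective _ hbij with he
  have hcoe : ∀ r : R, (e r : (Module.End (AA R) (MM R))ᵐᵒᵖ) = rho r := fun r => rfl
  refine ⟨{ A := AA R, M := MM R, e := e, continuous_toFun := ?_, continuous_invFun := ?_ }⟩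
  · show Continuous[_, TopologicalSpace.induced MulOpposite.unop (endFiniteTopology (AA R) (MM R))] ⇑e
    rw [continuous_induced_rng]
    show Continuous[_, TopologicalSpace.induced _ (@Pi.topologicalSpace (MM R) (fun _ => MM R) (fun _ => ⊥))]
      (MulOpposite.unop ∘ ⇑e)
    rw [continuous_induced_rng]
    refine @continuous_pi R (MM R) (fun _ => MM R) _ (fun _ => ⊥) _ (fun x => ?_)
    show @Continuous R (MM R) _ ⊥ (fun r : R => (e r).unop x)
    have : (fun r : R => (e r).unop x) = fun r : R => op r • x := by
      funext r; rw [hcoe]; rfl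
    rw [this]
    exact cont_coord x
  · rw [@continuous_def _ _ (endOpFiniteTopology (AA R) (MM R)) _]
    intro U hU
    rw [@isOpen_iff_forall_mem_open _ (endOpFiniteTopology (AA R) (MM R)) _]
    intro g hg
    set v : R := e.symm g with hv
    have hvU : v ∈ U := hg
    have hU' : (fun w : R => v + w) ⁻¹' U ∈ nhds (0 : R) :=
      (continuous_add_left v).continuousAt.preimage_mem_nhds
        (by rw [add_zero]; exact hU.mem_nhds hvU)
    obtain ⟨I, hIo, hIr, hIU⟩ := hlin _ hU'
    set J : Lam R := ⟨toSubmodule I hIr, hIo⟩ with hJ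
    refine ⟨{h : (Module.End (AA R) (MM R))ᵐᵒᵖ | (MulOpposite.unop h) (uu J) = (MulOpposite.unop g) (uu J)},
      ?_, cylinder_open (uu J) _, rfl⟩
    intro h hh
    show e.symm h ∈ U
    set s : R := e.symm h with hs
    have h1 : (MulOpposite.unop h) (uu J) = op s • uu J := by
      conv_lhs => rw [← e.apply_symm_apply h]
      rw [hcoe]; rfl
    have h2 : (MulOpposite.unop g) (uu J) = op v • uu J := by
      conv_lhs => rw [← e.apply_symm_apply g]
      rw [hcoe]; rfl
    have h3 : op s • uu J = op v • uu J := by rw [← h1, ← h2]; exact hh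
    rw [smul_uu, smul_uu] at h3
    have h4 := (Submodule.Quotient.eq _).1
      (DirectSum.of_injective (β := fun I : Lam R => R ⧸ I.1) J h3)
    have h5 : s - v ∈ I := h4
    have := hIU h5
    have : v + (s - v) ∈ U := this
    rwa [add_sub_cancel] at this
end

section
/- Let R be a complete, separated topological ring with a right linear topology, and let E ⊆ R be a topologically left T-nilpotent subset. Let Ē denote the topological closure in R of the subring without unit (non-unital subring) generated by E. Then Ē is also a topologically left T-nilpotent subset of R. -/
universe u

/-- A subset `E` of a topological ring is topologically left T-nilpotent if for every
sequence `a 0, a 1, a 2, …` of elements of `E`, the sequence of products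
`a 0, a 0 * a 1, a 0 * a 1 * a 2, …` converges to zero. -/
def IsTopologicallyLeftTNilpotent {R : Type*} [Ring R] [TopologicalSpace R]
    (E : Set R) : Prop :=
  ∀ a : ℕ → R, (∀ n, a n ∈ E) →
    Filter.Tendsto (fun n => ((List.range (n + 1)).map a).prod) Filter.atTop (nhds 0)

namespace Stmt7Aux

/-! ### Partial products -/

/-- The partial product `a 0 * a 1 * ⋯ * a (n-1)`. -/
def pp {R : Type*} [Ring R] (a : ℕ → R) (n : ℕ) : R := ((List.range n).map a).prod

theorem pp_zero {R : Type*} [Ring R] (a : ℕ → R) : pp a 0 = 1 := rfl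

theorem pp_succ {R : Type*} [Ring R] (a : ℕ → R) (n : ℕ) :
    pp a (n + 1) = pp a n * a n := by
  simp [pp, List.range_succ]

theorem pp_congr {R : Type*} [Ring R] {a b : ℕ → R} (n : ℕ) (h : ∀ k, k < n → a k = b k) :
    pp a n = pp b n := by
  unfold pp
  congr 1
  exact List.map_congr_left fun k hk => h k (List.mem_range.mp hk)

theorem pp_add {R : Type*} [Ring R] (a : ℕ → R) (m n : ℕ) :
    pp a (m + n) = pp a m * ((List.range n).map (fun i => a (m + i))).prod := by
  unfold pp
  rw [List.range_add, List.map_append, List.prod_append, List.map_map]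
  rfl

/-! ### König's lemma for finitely branching trees of sequences -/

/-- A node of depth `n` (described by the values `t k`, `k < n`) is *extendible* if for
every `N` there is a full sequence with values in `L` satisfying `Q N` and agreeing with
`t` below `n`. -/
def Ext {α : Type*} (L : ℕ → List α) (Q : ℕ → (ℕ → α) → Prop) (n : ℕ) (t : ℕ → α) : Prop :=
  ∀ N, ∃ t' : ℕ → α, (∀ k, t' k ∈ L k) ∧ Q N t' ∧ ∀ k, k < n → t' k = t k

theorem konig {α : Type*} (L : ℕ → List α) (Q : ℕ → (ℕ → α) → Prop)
    (hpre : ∀ n (t t' : ℕ → α), (∀ k, k < n → t k = t' k) → Q n t → Q n t')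
    (hdown : ∀ n t, Q (n + 1) t → Q n t)
    (hinf : ∀ n, ∃ t : ℕ → α, (∀ k, t k ∈ L k) ∧ Q n t) :
    ∃ t : ℕ → α, (∀ k, t k ∈ L k) ∧ ∀ n, Q n t := by
  classical
  have hQle : ∀ {m n : ℕ}, m ≤ n → ∀ t, Q n t → Q m t := by
    intro m n hmn
    induction hmn with
    | refl => exact fun t h => h
    | @step p hp ih => exact fun t ht => ih t (hdown p t ht)
  have hmax : ∀ (l : List α) (f : α → ℕ) (x : α), x ∈ l →
      f x ≤ l.foldr (fun a m => max (f a) m) 0 := by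
    intro l f x hx
    induction l with
    | nil => cases hx
    | cons a l ih =>
      rcases List.mem_cons.mp hx with rfl | h
      · exact le_max_left _ _
      · exact le_trans (ih h) (le_max_right _ _)
  have step : ∀ n t, Ext L Q n t →
      ∃ x, x ∈ L n ∧ Ext L Q (n + 1) (Function.update t n x) := by
    intro n t hext
    by_contra hno
    push_neg at hno
    have hno' : ∀ x : α, ∃ N : ℕ, x ∈ L n → ∀ t' : ℕ → α, (∀ k, t' k ∈ L k) → Q N t' →
        ∃ k, k < n + 1 ∧ t' k ≠ Function.update t n x k := by
      intro x
      by_cases hx : x ∈ L n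
      · have h1 := hno x hx
        unfold Ext at h1
        push_neg at h1
        obtain ⟨N, hN⟩ := h1
        exact ⟨N, fun _ t' ha hb => hN t' ha hb⟩
      · exact ⟨0, fun h => absurd h hx⟩
    choose N hN using hno'
    obtain ⟨t', ht'L, ht'Q, ht'ag⟩ :=
      hext (max (n + 1) ((L n).foldr (fun a m => max (N a) m) 0))
    have hxLn : t' n ∈ L n := ht'L n
    obtain ⟨k, hk, hne⟩ := hN (t' n) hxLn t' ht'L
      (hQle (le_trans (hmax _ _ _ hxLn) (le_max_right _ _)) t' ht'Q)
    rcases Nat.lt_succ_iff_lt_or_eq.mp hk with h | h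
    · exact hne (by rw [Function.update_of_ne (Nat.ne_of_lt h)]; exact ht'ag k h)
    · subst h; exact hne (by rw [Function.update_self])
  obtain ⟨t₀, ht₀L, -⟩ := hinf 0
  have hE0 : Ext L Q 0 t₀ := by
    intro N
    obtain ⟨t', h1, h2⟩ := hinf N
    exact ⟨t', h1, h2, fun k hk => absurd hk (Nat.not_lt_zero k)⟩
  let next : ℕ → (ℕ → α) → (ℕ → α) := fun n t =>
    if h : ∃ x, x ∈ L n ∧ Ext L Q (n + 1) (Function.update t n x) then
      Function.update t n h.choose
    else t
  let g : ℕ → (ℕ → α) := fun n => Nat.rec t₀ (fun k tk => next k tk) n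
  have hgs : ∀ n, g (n + 1) = next n (g n) := fun n => rfl
  have hinv : ∀ n, (∀ k, g n k ∈ L k) ∧ Ext L Q n (g n) := by
    intro n
    induction n with
    | zero => exact ⟨ht₀L, hE0⟩
    | succ m ih =>
      obtain ⟨ihL, ihE⟩ := ih
      have hcond : ∃ x, x ∈ L m ∧ Ext L Q (m + 1) (Function.update (g m) m x) := step m (g m) ihE
      have hg1 : g (m + 1) = Function.update (g m) m hcond.choose := by
        rw [hgs m]
        exact dif_pos hcond
      have hc := hcond.choose_spec
      rw [hg1]
      refine ⟨?_, hc.2⟩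
      intro k
      by_cases hk : k = m
      · subst hk; rw [Function.update_self]; exact hc.1
      · rw [Function.update_of_ne hk]; exact ihL k
  have hstab : ∀ n k, k < n → g n k = g (n + 1) k := by
    intro n k hk
    rw [hgs n]
    have hrfl : next n (g n) = if h : ∃ x, x ∈ L n ∧ Ext L Q (n + 1) (Function.update (g n) n x)
        then Function.update (g n) n h.choose else g n := rfl
    rw [hrfl]
    split
    · rw [Function.update_of_ne (by omega)]
    · rfl
  have hstab' : ∀ n m, n ≤ m → ∀ k, k < n → g n k = g m k := by
    intro n m hnm
    induction hnm with
    | refl => exact fun k _ => rfl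
    | @step p hp ih =>
      intro k hk
      exact (ih k hk).trans (hstab p k (lt_of_lt_of_le hk hp))
  refine ⟨fun k => g (k + 1) k, fun k => (hinv (k + 1)).1 k, fun n => ?_⟩
  have hag : ∀ k, k < n → g n k = g (k + 1) k :=
    fun k hk => (hstab' (k + 1) n (by omega) k (by omega)).symm
  have hQn : Q n (g n) := by
    obtain ⟨t', h1, h2, h3⟩ := (hinv n).2 n
    exact hpre n t' (g n) h3 h2
  exact hpre n (g n) (fun k => g (k + 1) k) hag hQn

/-! ### Expanding a product of sums -/

theorem expand {R : Type*} [Ring R] :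
    ∀ (n : ℕ) (J : AddSubgroup R) (L : ℕ → List R) (a : ℕ → R),
      (∀ k, k < n → (L k).sum = a k) →
      (∀ t : ℕ → R, (∀ k, k < n → t k ∈ L k) → pp t n ∈ J) →
      pp a n ∈ J := by
  intro n
  induction n with
  | zero =>
    intro J L a _ hsel
    exact hsel (fun _ => 0) (fun k hk => absurd hk (Nat.not_lt_zero k))
  | succ n ih =>
    intro J L a hsum hsel
    rw [pp_succ, ← hsum n (Nat.lt_succ_self n)]
    have key : ∀ u ∈ L n, pp a n * u ∈ J := by
      intro u hu
      have h2 : pp a n ∈ AddSubgroup.comap (AddMonoidHom.mulRight u) J := by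
        refine ih (AddSubgroup.comap (AddMonoidHom.mulRight u) J) L a
          (fun k hk => hsum k (by omega)) ?_
        intro t ht
        rw [AddSubgroup.mem_comap]
        have h3 := hsel (Function.update t n u) (fun k hk => by
          rcases Nat.lt_succ_iff_lt_or_eq.mp hk with h | h
          · rw [Function.update_of_ne (Nat.ne_of_lt h)]; exact ht k h
          · subst h; rw [Function.update_self]; exact hu)
        rw [pp_succ, Function.update_self,
          pp_congr n (fun k hk => Function.update_of_ne (Nat.ne_of_lt hk) u t)] at h3
        exact h3
      exact AddSubgroup.mem_comap.mp h2
    have h4 : ((L n).map (fun u => pp a n * u)).sum ∈ J :=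
      AddSubgroup.list_sum_mem J (fun x hx => by
        obtain ⟨u, hu, rfl⟩ := List.mem_map.mp hx
        exact key u hu)
    have h5 : ((L n).map (fun u => pp a n * u)).sum = pp a n * (L n).sum := by
      have := List.sum_map_mul_left (L n) (fun u => u) (pp a n)
      simpa using this
    rwa [h5] at h4

/-! ### Representation of elements of the generated non-unital subring -/

/-- `t` is, up to sign, a product of a nonempty list of elements of `E`. -/
def IsTerm {R : Type*} [Ring R] (E : Set R) (t : R) : Prop :=
  ∃ l : List R, l ≠ [] ∧ (∀ z ∈ l, z ∈ E) ∧ (t = l.prod ∨ t = -l.prod)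

theorem sg_rep {R : Type*} [Ring R] {E : Set R} {y : R}
    (hy : y ∈ Subsemigroup.closure E) :
    ∃ l : List R, l ≠ [] ∧ (∀ z ∈ l, z ∈ E) ∧ y = l.prod := by
  induction hy using Subsemigroup.closure_induction with
  | mem y hy =>
    exact ⟨[y], by simp, by simpa using hy, by simp⟩
  | mul x y hx hy ihx ihy =>
    obtain ⟨l₁, h1, h2, rfl⟩ := ihx
    obtain ⟨l₂, h4, h5, rfl⟩ := ihy
    refine ⟨l₁ ++ l₂, by simp [h1], ?_, by rw [List.prod_append]⟩
    intro z hz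
    rcases List.mem_append.mp hz with h | h
    · exact h2 z h
    · exact h5 z h

theorem sum_map_neg {R : Type*} [Ring R] (L : List R) :
    (L.map (fun t => -t)).sum = -L.sum := by
  induction L with
  | nil => simp
  | cons a L ih => simp [List.sum_cons, neg_add, ih, add_comm]

theorem rep {R : Type*} [Ring R] {E : Set R} {x : R}
    (hx : x ∈ NonUnitalSubring.closure E) :
    ∃ L : List R, (∀ t ∈ L, IsTerm E t) ∧ L.sum = x := by
  rw [NonUnitalSubring.mem_closure_iff] at hx
  induction hx using AddSubgroup.closure_induction with
  | mem y hy =>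
    obtain ⟨l, h1, h2, rfl⟩ := sg_rep hy
    exact ⟨[l.prod], by simp [IsTerm]; exact ⟨l, h1, h2, Or.inl rfl⟩, by simp⟩
  | zero => exact ⟨[], by simp, rfl⟩
  | add x y hx hy ihx ihy =>
    obtain ⟨L₁, h1, rfl⟩ := ihx
    obtain ⟨L₂, h3, rfl⟩ := ihy
    refine ⟨L₁ ++ L₂, ?_, by rw [List.sum_append]⟩
    intro t ht
    rcases List.mem_append.mp ht with h | h
    · exact h1 t h
    · exact h3 t h
  | neg x hx ihx =>
    obtain ⟨L, h1, rfl⟩ := ihx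
    refine ⟨L.map (fun t => -t), ?_, ?_⟩
    · intro t ht
      obtain ⟨u, hu, rfl⟩ := List.mem_map.mp ht
      obtain ⟨l, hl1, hl2, hl3⟩ := h1 u hu
      refine ⟨l, hl1, hl2, ?_⟩
      rcases hl3 with h | h
      · exact Or.inr (by rw [h])
      · exact Or.inl (by rw [h, neg_neg])
    · exact sum_map_neg L

end Stmt7Aux

open Stmt7Aux

section Main

variable {R : Type u} [Ring R]

/-- Sequences of ±products of elements of a T-nilpotent set eventually land in `I`. -/
theorem term_seq [TopologicalSpace R] (E : Set R) (hE : IsTopologicallyLeftTNilpotent E)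
    (I : AddSubgroup R) (hIo : IsOpen (I : Set R)) (hIr : ∀ a ∈ I, ∀ r : R, a * r ∈ I)
    (t : ℕ → R) (ht : ∀ k, IsTerm E (t k)) :
    ∃ n, pp t n ∈ I := by
  choose l hlne hlE hsgn using ht
  set Flat : ℕ → List R := fun n => ((List.range n).map l).flatten with hFlat
  have hstep : ∀ n, Flat (n + 1) = Flat n ++ l n := by
    intro n
    rw [hFlat]
    simp [List.range_succ]
  have hS : ∀ n, n ≤ (Flat n).length := by
    intro n
    induction n with
    | zero => simp
    | succ m ih =>
      rw [hstep m, List.length_append]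
      have : 0 < (l m).length := List.length_pos_iff.mpr (hlne m)
      omega
  have hpref : ∀ m n, m ≤ n → Flat m <+: Flat n := by
    intro m n hmn
    induction hmn with
    | refl => exact List.prefix_refl _
    | @step p hp ih =>
      exact ih.trans ⟨l p, (hstep p).symm⟩
  set e : ℕ → R := fun m => (Flat (m + 1)).getD m 0 with he
  have hgetm : ∀ m, m < (Flat (m + 1)).length := fun m => lt_of_lt_of_le (Nat.lt_succ_self m) (hS (m + 1))
  have hget : ∀ n m (hm : m < (Flat n).length), e m = (Flat n)[m] := by
    intro n m hm
    rw [he]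
    simp only
    rw [List.getD_eq_getElem _ _ (hgetm m)]
    rcases le_total (m + 1) n with h | h
    · exact ((hpref (m + 1) n h).getElem (hgetm m))
    · exact ((hpref n (m + 1) h).getElem hm).symm
  have heE : ∀ m, e m ∈ E := by
    intro m
    have h1 : e m ∈ Flat (m + 1) := by
      rw [hget (m + 1) m (hgetm m)]
      exact List.getElem_mem _
    rw [hFlat] at h1
    obtain ⟨l', hl', hm⟩ := List.mem_flatten.mp h1
    obtain ⟨k, _, rfl⟩ := List.mem_map.mp hl'
    exact hlE k _ hm
  have hflat_eq : ∀ n, (List.range (Flat n).length).map e = Flat n := by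
    intro n
    apply List.ext_getElem
    · simp
    · intro i h1 h2
      simp only [List.getElem_map, List.getElem_range]
      exact hget n i h2
  have hsign : ∀ n, pp t n = (Flat n).prod ∨ pp t n = -(Flat n).prod := by
    intro n
    induction n with
    | zero => left; rfl
    | succ m ih =>
      rw [pp_succ, hstep m, List.prod_append]
      rcases ih with h | h <;> rcases hsgn m with h' | h' <;>
        rw [h, h'] <;> simp [neg_mul, mul_neg, neg_neg]
  have hIn : (I : Set R) ∈ nhds (0 : R) := hIo.mem_nhds I.zero_mem
  have hev := (hE e heE).eventually_mem hIn
  rw [Filter.eventually_atTop] at hev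
  obtain ⟨N, hN⟩ := hev
  have hppe : pp e (N + 1) ∈ I := hN N le_rfl
  refine ⟨N + 1, ?_⟩
  have hlenN : N + 1 ≤ (Flat (N + 1)).length := hS (N + 1)
  have hflatI : (Flat (N + 1)).prod ∈ I := by
    rw [← hflat_eq (N + 1)]
    have hdecomp : (Flat (N + 1)).length = (N + 1) + ((Flat (N + 1)).length - (N + 1)) := by omega
    rw [show ((List.range (Flat (N+1)).length).map e).prod = pp e ((Flat (N+1)).length) from rfl,
      hdecomp, pp_add]
    exact hIr _ hppe _
  rcases hsign (N + 1) with h | h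
  · rw [h]; exact hflatI
  · rw [h]; exact I.neg_mem hflatI

/-- Sequences in the non-unital subring generated by a T-nilpotent set eventually land
in an open right ideal. -/
theorem subring_seq [TopologicalSpace R] (E : Set R) (hE : IsTopologicallyLeftTNilpotent E)
    (I : AddSubgroup R) (hIo : IsOpen (I : Set R)) (hIr : ∀ a ∈ I, ∀ r : R, a * r ∈ I)
    (a : ℕ → R) (ha : ∀ n, a n ∈ NonUnitalSubring.closure E) :
    ∃ n, pp a (n + 1) ∈ I := by
  by_cases h1 : (1 : R) ∈ I
  · refine ⟨0, ?_⟩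
    have := hIr 1 h1 (a 0)
    rw [one_mul] at this
    simpa [pp_succ, pp_zero] using this
  by_contra hcon
  push_neg at hcon
  choose L hL hsum using fun n => rep (ha n)
  have hLne : ∀ n, L n ≠ [] := by
    intro n h
    apply hcon n
    have ha0 : a n = 0 := by rw [← hsum n, h]; rfl
    rw [pp_succ, ha0, mul_zero]
    exact I.zero_mem
  choose d hd using fun k => List.exists_mem_of_ne_nil _ (hLne k)
  have htree : ∀ n, ∃ t : ℕ → R, (∀ k, t k ∈ L k) ∧ pp t n ∉ I := by
    intro n
    by_contra h
    push_neg at h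
    have hexp : pp a n ∈ I := by
      refine expand n I L a (fun k _ => hsum k) ?_
      intro t ht
      have heq : pp t n = pp (fun k => if hk : k < n then t k else d k) n :=
        pp_congr n (fun k hk => by simp [hk])
      rw [heq]
      exact h _ (fun k => by by_cases hk : k < n <;> simp [hk, ht k, hd k])
    cases n with
    | zero => exact h1 hexp
    | succ m => exact hcon m hexp
  obtain ⟨t, ht, hQ⟩ := konig L (fun n t => pp t n ∉ I)
    (fun n t t' hag hQ h => hQ (by rwa [pp_congr n hag]))
    (fun n t hQ h => hQ (by rw [pp_succ]; exact hIr _ h _))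
    htree
  obtain ⟨n, hn⟩ := term_seq E hE I hIo hIr t (fun k => hL k _ (ht k))
  exact hQ n hn

/-- Sequences in the closure of the non-unital subring generated by a T-nilpotent set
eventually land in an open right ideal. -/
theorem closure_seq [TopologicalSpace R] [IsTopologicalRing R]
    (E : Set R) (hE : IsTopologicallyLeftTNilpotent E)
    (I : AddSubgroup R) (hIo : IsOpen (I : Set R)) (hIr : ∀ a ∈ I, ∀ r : R, a * r ∈ I)
    (b : ℕ → R) (hb : ∀ n, b n ∈ closure ((NonUnitalSubring.closure E : NonUnitalSubring R) : Set R)) :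
    ∃ n, pp b (n + 1) ∈ I := by
  have hex : ∀ (k : ℕ) (p : R), ∃ x, x ∈ ((NonUnitalSubring.closure E : NonUnitalSubring R) : Set R)
      ∧ p * (b k - x) ∈ I := by
    intro k p
    have hc : Continuous fun y : R => p * (b k - y) :=
      continuous_const.mul (continuous_const.sub continuous_id)
    have hopen : IsOpen {y : R | p * (b k - y) ∈ I} := hIo.preimage hc
    have hbk : b k ∈ {y : R | p * (b k - y) ∈ I} := by
      simp only [Set.mem_setOf_eq, sub_self, mul_zero]
      exact I.zero_mem
    obtain ⟨x, hx1, hx2⟩ := _root_.mem_closure_iff.mp (hb k) _ hopen hbk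
    exact ⟨x, hx2, hx1⟩
  choose f hfS hfI using hex
  let q : ℕ → R := fun n => Nat.rec 1 (fun k qk => qk * f k qk) n
  have hq0 : q 0 = 1 := rfl
  have hqs : ∀ k, q (k + 1) = q k * f k (q k) := fun k => rfl
  set a : ℕ → R := fun k => f k (q k) with ha
  have haS : ∀ k, a k ∈ NonUnitalSubring.closure E := fun k => hfS k (q k)
  have haI : ∀ k, q k * (b k - a k) ∈ I := fun k => hfI k (q k)
  have hqa : ∀ n, q n = pp a n := by
    intro n
    induction n with
    | zero => rfl
    | succ m ih => rw [hqs m, pp_succ, ← ih]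
  obtain ⟨n, hn⟩ := subring_seq E hE I hIo hIr a haS
  have key : ∀ m, pp b (m + 1) - pp a (m + 1) ∈ I := by
    intro m
    induction m with
    | zero =>
      have h0 := haI 0
      rw [hq0, one_mul] at h0
      simpa [pp_succ, pp_zero] using h0
    | succ m ih =>
      have h2 := haI (m + 1)
      rw [hqa (m + 1)] at h2
      have h3 := hIr _ ih (b (m + 1))
      have h4 := I.add_mem h3 h2
      have h5 : pp b (m + 2) - pp a (m + 2) =
          (pp b (m + 1) - pp a (m + 1)) * b (m + 1) + pp a (m + 1) * (b (m + 1) - a (m + 1)) := by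
        rw [pp_succ b (m + 1), pp_succ a (m + 1)]
        noncomm_ring
      rwa [h5]
  refine ⟨n, ?_⟩
  have := I.add_mem (key n) hn
  rwa [sub_add_cancel] at this

end Main

/-- Let `R` be a complete, separated topological ring with a right linear topology and let
`E ⊆ R` be a topologically left T-nilpotent subset.  Then the topological closure of the
non-unital subring of `R` generated by `E` is also topologically left T-nilpotent. -/
theorem stmt_7 {R : Type u} [Ring R] [TopologicalSpace R] [IsTopologicalRing R] [T2Space R]
    (hcomplete : @CompleteSpace R (IsTopologicalAddGroup.rightUniformSpace R))
    (hlin : ∀ U ∈ nhds (0 : R), ∃ I : AddSubgroup R,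
      IsOpen (I : Set R) ∧ (∀ a ∈ I, ∀ r : R, a * r ∈ I) ∧ (I : Set R) ⊆ U)
    (E : Set R) (hE : IsTopologicallyLeftTNilpotent E) :
    IsTopologicallyLeftTNilpotent
      (closure ((NonUnitalSubring.closure E : NonUnitalSubring R) : Set R)) := by
  intro b hb
  rw [Filter.tendsto_def]
  intro U hU
  obtain ⟨I, hIo, hIr, hIU⟩ := hlin U hU
  obtain ⟨n₀, h₀⟩ := closure_seq E hE I hIo hIr b hb
  have mono : ∀ m, pp b (n₀ + 1 + m) ∈ I := by
    intro m
    induction m with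
    | zero => exact h₀
    | succ k ih =>
      rw [show n₀ + 1 + (k + 1) = (n₀ + 1 + k) + 1 by omega, pp_succ]
      exact hIr _ ih _
  rw [Filter.mem_atTop_sets]
  refine ⟨n₀, fun n hn => ?_⟩
  obtain ⟨m, rfl⟩ := Nat.exists_eq_add_of_le hn
  apply hIU
  have := mono m
  rw [show n₀ + 1 + m = n₀ + m + 1 by omega] at this
  exact this
end

section
/- Let R be an associative ring with Jacobson radical H(R), let Z be a finite linearly ordered set, and let (e_z)_{z∈Z} be a family of idempotent elements of R such that e_w e_z ∈ H(R) for all pairs z < w in Z. Then: (1) the sum of the left ideals Σ_{z∈Z} R e_z is direct (the family of left ideals (R e_z)_{z∈Z} is independent) and is a direct summand of R as a left R-module; (2) for every right R-module N, the sum of the additive subgroups Σ_{z∈Z} N e_z in N is direct (the family of subgroups (N e_z)_{z∈Z} is independent). -/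
universe u

open MulOpposite

namespace Stmt8Aux

variable {R : Type u} [Ring R]

lemma exists_left_inv {x : R} (hx : x ∈ (⊥ : Ideal R).jacobson) :
    ∃ z : R, z * (1 - x) = 1 := by
  obtain ⟨z, hz⟩ := Ideal.mem_jacobson_iff.mp hx (-1)
  rw [Ideal.mem_bot, sub_eq_zero] at hz
  refine ⟨z, ?_⟩
  calc z * (1 - x) = z * -1 * x + z := by
        rw [mul_sub, mul_one]
        rw [mul_neg_one, neg_mul]
        abel
    _ = 1 := hz

lemma isUnit_one_sub {x : R} (hx : x ∈ (⊥ : Ideal R).jacobson) : IsUnit (1 - x) := by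
  obtain ⟨z, hz⟩ := exists_left_inv hx
  have hz1 : z = 1 - -(z * x) := by
    rw [sub_neg_eq_add]
    have h' : z - z * x = 1 := by
      have := hz
      rw [mul_sub, mul_one] at this
      exact this
    calc z = z - z * x + z * x := by abel
      _ = 1 + z * x := by rw [h']
  obtain ⟨w, hw⟩ := exists_left_inv (Submodule.neg_mem _ (Ideal.mul_mem_left _ z hx))
  rw [← hz1] at hw
  have hwx : w = 1 - x := by
    calc w = w * (z * (1 - x)) := by rw [hz, mul_one]
      _ = w * z * (1 - x) := by rw [mul_assoc]
      _ = 1 - x := by rw [hw, one_mul]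
  have huz : (1 - x) * z = 1 := by rw [← hwx]; exact hw
  exact ⟨⟨1 - x, z, huz, hz⟩, rfl⟩

/-- The one-step orthogonalization: if `g, ε` are idempotents with `g * ε` in the
Jacobson radical, there is an idempotent `f ∈ R ε` with `ε f = ε` and `g f = 0`. -/
lemma orth_step {g ε : R} (hg : IsIdempotentElem g) (hε : IsIdempotentElem ε)
    (hge : g * ε ∈ (⊥ : Ideal R).jacobson) :
    ∃ f : R, IsIdempotentElem f ∧ ε * f = ε ∧ g * f = 0 ∧ f ∈ Ideal.span {ε} := by
  obtain ⟨u, hu⟩ := isUnit_one_sub hge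
  have hvw : (↑u : R) * ↑u⁻¹ = 1 := u.mul_inv
  have hwv : (↑u⁻¹ : R) * ↑u = 1 := u.inv_mul
  have hε' : ∀ x : R, ε * (ε * x) = ε * x := fun x => by rw [← mul_assoc, hε.eq]
  have hg' : ∀ x : R, g * (g * x) = g * x := fun x => by rw [← mul_assoc, hg.eq]
  refine ⟨↑u * ε * ↑u⁻¹, ?_, ?_, ?_, ?_⟩
  · show (↑u * ε * ↑u⁻¹) * (↑u * ε * ↑u⁻¹) = ↑u * ε * ↑u⁻¹
    calc (↑u * ε * ↑u⁻¹) * (↑u * ε * ↑u⁻¹)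
        = ↑u * ε * ((↑u⁻¹ * ↑u) * (ε * ↑u⁻¹)) := by simp [mul_assoc]
      _ = ↑u * ε * (ε * ↑u⁻¹) := by rw [hwv, one_mul]
      _ = ↑u * (ε * (ε * ↑u⁻¹)) := by rw [mul_assoc]
      _ = ↑u * (ε * ↑u⁻¹) := by rw [hε']
      _ = ↑u * ε * ↑u⁻¹ := by rw [mul_assoc]
  · have h1 : ε * ↑u * ε = ε * ↑u := by
      rw [hu]
      simp only [mul_sub, sub_mul, mul_one, one_mul, mul_assoc, hε.eq, hε']
    calc ε * (↑u * ε * ↑u⁻¹) = (ε * ↑u * ε) * ↑u⁻¹ := by simp [mul_assoc]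
      _ = (ε * ↑u) * ↑u⁻¹ := by rw [h1]
      _ = ε * (↑u * ↑u⁻¹) := by rw [mul_assoc]
      _ = ε := by rw [hvw, mul_one]
  · have h2 : g * ↑u * ε = 0 := by
      rw [hu]
      simp only [mul_sub, sub_mul, mul_one, one_mul, mul_assoc, hε.eq, hε', hg.eq, hg']
      simp [sub_self]
    calc g * (↑u * ε * ↑u⁻¹) = (g * ↑u * ε) * ↑u⁻¹ := by simp [mul_assoc]
      _ = 0 := by rw [h2, zero_mul]
  · have hui : (↑u⁻¹ : R) = 1 + ↑u⁻¹ * (g * ε) := by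
      have h : (↑u⁻¹ : R) * (1 - g * ε) = 1 := by rw [← hu]; exact u.inv_mul
      rw [mul_sub, mul_one] at h
      exact eq_add_of_sub_eq h
    have h3 : ↑u * ε * ↑u⁻¹ = (↑u * (1 + ε * ↑u⁻¹ * g)) * ε := by
      calc ↑u * ε * ↑u⁻¹ = ↑u * (ε * ↑u⁻¹) := by rw [mul_assoc]
        _ = ↑u * (ε * (1 + ↑u⁻¹ * (g * ε))) := by rw [← hui]
        _ = (↑u * (1 + ε * ↑u⁻¹ * g)) * ε := by simp [mul_add, add_mul, mul_assoc]
    rw [h3]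
    exact Submodule.mem_span_singleton.mpr ⟨↑u * (1 + ε * ↑u⁻¹ * g), by rw [smul_eq_mul]⟩

/-- Combining two idempotents `p q` with `q p = 0` into one with the same left span. -/
lemma combine {p q : R} (hp : IsIdempotentElem p) (hq : IsIdempotentElem q) (hqp : q * p = 0) :
    IsIdempotentElem (p + q - p * q) ∧ p * (p + q - p * q) = p ∧ q * (p + q - p * q) = q := by
  have h1 : p * (p + q - p * q) = p := by
    rw [mul_sub, mul_add, hp.eq, ← mul_assoc, hp.eq, add_sub_cancel_right]
  have h2 : q * (p + q - p * q) = q := by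
    rw [mul_sub, mul_add, hqp, hq.eq, ← mul_assoc, hqp, zero_mul, zero_add, sub_zero]
  refine ⟨?_, h1, h2⟩
  show (p + q - p * q) * (p + q - p * q) = p + q - p * q
  rw [sub_mul, add_mul, h1, h2, mul_assoc, h2]

variable {Z : Type*} [LinearOrder Z]

/-- The main construction: a family `f z` of idempotents with `e z * f z = e z`,
`f z ∈ R e z`, vanishing lower-triangular products, together with a "total" idempotent
`F` with `f z * F = f z` and `F` in the span of the `e`'s. -/
lemma build (e : Z → R) (he : ∀ z, IsIdempotentElem (e z))
    (hrad : ∀ {z w : Z}, z < w → e w * e z ∈ (⊥ : Ideal R).jacobson) (s : Finset Z) :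
    ∃ (f : Z → R) (F : R), IsIdempotentElem F ∧ F ∈ Ideal.span (e '' ↑s) ∧
      (∀ z ∈ s, IsIdempotentElem (f z) ∧ e z * f z = e z ∧ f z * F = f z ∧
        f z ∈ Ideal.span {e z}) ∧
      (∀ z ∈ s, ∀ w ∈ s, w < z → f z * f w = 0) := by
  classical
  induction s using Finset.induction_on_min with
  | empty =>
      refine ⟨fun _ => 0, 0, by simp [IsIdempotentElem], Submodule.zero_mem _, ?_, ?_⟩ <;> simp
  | insert a t hat ih =>
      obtain ⟨f, F, hFidem, hFmem, h1, h2⟩ := ih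
      have hanot : a ∉ t := fun h => lt_irrefl a (hat a h)
      have hFa : F * e a ∈ (⊥ : Ideal R).jacobson := by
        refine Submodule.span_induction ?_ ?_ ?_ ?_ hFmem
        · rintro x ⟨w, hw, rfl⟩
          exact hrad (hat w hw)
        · simp
        · intro x y _ _ hx hy
          rw [add_mul]
          exact Ideal.add_mem _ hx hy
        · intro r x _ hx
          rw [smul_eq_mul, mul_assoc]
          exact Ideal.mul_mem_left _ _ hx
      obtain ⟨fa, hfa_idem, hfa_e, hfa_F, hfa_span⟩ := orth_step hFidem (he a) hFa
      obtain ⟨hF'idem, hfaF', hFF'⟩ := combine hfa_idem hFidem hfa_F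
      have hsub1 : Ideal.span (e '' ↑t) ≤ Ideal.span (e '' ↑(insert a t)) := by
        apply Ideal.span_mono
        apply Set.image_mono
        simp [Finset.coe_insert, Set.subset_insert]
      have hsub2 : Ideal.span {e a} ≤ Ideal.span (e '' ↑(insert a t)) := by
        apply Ideal.span_mono
        simp only [Set.singleton_subset_iff, Finset.coe_insert]
        exact ⟨a, Set.mem_insert a _, rfl⟩
      have hzfa : ∀ z ∈ t, f z * fa = 0 := by
        intro z hz
        obtain ⟨_, _, hfF, _⟩ := h1 z hz
        rw [← hfF, mul_assoc, hfa_F, mul_zero]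
      refine ⟨Function.update f a fa, fa + F - fa * F, hF'idem, ?_, ?_, ?_⟩
      · exact Submodule.sub_mem _ (Submodule.add_mem _ (hsub2 hfa_span) (hsub1 hFmem))
          (Ideal.mul_mem_left _ _ (hsub1 hFmem))
      · intro z hz
        rcases Finset.mem_insert.mp hz with rfl | hz
        · rw [Function.update_self]
          exact ⟨hfa_idem, hfa_e, hfaF', hfa_span⟩
        · have hza : z ≠ a := fun h => hanot (h ▸ hz)
          rw [Function.update_of_ne hza]
          obtain ⟨hi, hee, hfF, hsp⟩ := h1 z hz
          refine ⟨hi, hee, ?_, hsp⟩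
          rw [mul_sub, mul_add, hzfa z hz, hfF, ← mul_assoc, hzfa z hz, zero_mul, zero_add,
            sub_zero]
      · intro z hz w hw hwz
        rcases Finset.mem_insert.mp hz with rfl | hzt
        · exfalso
          rcases Finset.mem_insert.mp hw with hwa | hwt
          · exact lt_irrefl _ (hwa ▸ hwz)
          · exact absurd (hat w hwt) (not_lt.mpr hwz.le)
        · have hza : z ≠ a := fun h => hanot (h ▸ hzt)
          rw [Function.update_of_ne hza]
          rcases Finset.mem_insert.mp hw with hwa | hwt
          · rw [hwa, Function.update_self]
            exact hzfa z hzt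
          · have hwa : w ≠ a := fun h => hanot (h ▸ hwt)
            rw [Function.update_of_ne hwa]
            exact h2 z hzt w hwt hwz

/-- The key vanishing lemma: in any right `R`-module, a finite sum of elements
`x z ∈ N e z` vanishing forces each term to vanish. -/
lemma key {Z : Type*} [LinearOrder Z] (e f : Z → R)
    (hef : ∀ z, e z * f z = e z) (hforth : ∀ z w, w < z → f z * f w = 0)
    {N : Type*} [AddCommGroup N] [Module Rᵐᵒᵖ N]
    (x : Z → N) (hx : ∀ z, ∃ n : N, op (e z) • n = x z) :
    ∀ s : Finset Z, ∑ z ∈ s, x z = 0 → ∀ z ∈ s, x z = 0 := by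
  classical
  intro s
  induction s using Finset.induction_on_min with
  | empty => intro _ z hz; simp at hz
  | insert a t hat ih =>
      intro hsum
      have hanot : a ∉ t := fun h => lt_irrefl a (hat a h)
      have hxa : x a = 0 := by
        have hsm : ∀ w ∈ t, op (f a) • x w = 0 := by
          intro w hw
          obtain ⟨n, hn⟩ := hx w
          have hew : e w * f a = 0 := by
            rw [← hef w, mul_assoc, hforth w a (hat w hw), mul_zero]
          rw [← hn, smul_smul, ← op_mul, hew, op_zero, zero_smul]
        have hfa : op (f a) • x a = x a := by
          obtain ⟨n, hn⟩ := hx a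
          rw [← hn, smul_smul, ← op_mul, hef a]
        have h0 : op (f a) • ∑ z ∈ insert a t, x z = 0 := by rw [hsum, smul_zero]
        rwa [Finset.smul_sum, Finset.sum_insert hanot, hfa, Finset.sum_eq_zero hsm,
          add_zero] at h0
      have hsum' : ∑ z ∈ t, x z = 0 := by
        rwa [Finset.sum_insert hanot, hxa, zero_add] at hsum
      intro z hz
      rcases Finset.mem_insert.mp hz with rfl | hz
      · exact hxa
      · exact ih hsum' z hz

end Stmt8Aux

/-- Let `R` be a ring with Jacobson radical `H(R)`, `Z` a finite linearly ordered index
set, and `(e z)_{z ∈ Z}` a family of idempotents of `R` with `e w * e z ∈ H(R)` whenever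
`z < w`.  Then (1) the family of left ideals `(R • e z)` is independent (their sum is
direct) and their sum is a direct summand of `R` as a left `R`-module, and (2) for every
right `R`-module `N`, the family of additive subgroups `(N • e z)` is independent. -/
theorem stmt_8 {R : Type u} [Ring R] {Z : Type*} [LinearOrder Z] [Fintype Z]
    (e : Z → R) (he : ∀ z, IsIdempotentElem (e z))
    (hrad : ∀ {z w : Z}, z < w → e w * e z ∈ (⊥ : Ideal R).jacobson) :
    (iSupIndep (fun z => Ideal.span {e z}) ∧
      ∃ K : Ideal R, IsCompl (⨆ z, Ideal.span {e z} : Ideal R) K) ∧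
    (∀ (N : Type u) [AddCommGroup N] [Module Rᵐᵒᵖ N],
      iSupIndep (fun z =>
        (DistribMulAction.toAddMonoidHom N (MulOpposite.op (e z))).range)) := by
  classical
  obtain ⟨f, F, hFidem, hFmem, h1, h2⟩ := Stmt8Aux.build e he hrad Finset.univ
  simp only [Finset.mem_univ, forall_true_left, true_implies] at h1 h2
  have hef : ∀ z, e z * f z = e z := fun z => (h1 z).2.1
  have hforth : ∀ z w, w < z → f z * f w = 0 := fun z w h => h2 z w h
  constructor
  · constructor
    · -- independence of the left ideals
      refine iSupIndep_of_dfinsupp_lsum_injective _ ?_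
      rw [injective_iff_map_eq_zero]
      intro v hv
      have hsum : ∑ z ∈ v.support, ((v z : R)) = 0 := by
        rw [DFinsupp.lsum_apply_apply, DFinsupp.sumAddHom_apply] at hv
        exact hv
      have hx : ∀ z, ∃ n : R, op (e z) • n = ((v z : R)) := by
        intro z
        obtain ⟨c, hc⟩ := Submodule.mem_span_singleton.mp (v z).2
        exact ⟨c, by rw [op_smul_eq_mul, ← smul_eq_mul, hc]⟩
      have hall := Stmt8Aux.key e f hef hforth (fun z => ((v z : R))) hx v.support hsum
      ext z
      by_cases hz : z ∈ v.support
      · simpa using Submodule.coe_eq_zero.mp (hall z hz)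
      · simpa using DFinsupp.notMem_support_iff.mp hz
    · -- the sum is a direct summand
      have heF : ∀ z, e z * F = e z := by
        intro z
        obtain ⟨_, hee, hfF, _⟩ := h1 z
        rw [← hee, mul_assoc, hfF]
      have hsup : (⨆ z, Ideal.span {e z} : Ideal R) = Ideal.span {F} := by
        apply le_antisymm
        · refine iSup_le fun z => ?_
          rw [Ideal.span_le, Set.singleton_subset_iff]
          exact Submodule.mem_span_singleton.mpr ⟨e z, by rw [smul_eq_mul, heF]⟩
        · rw [Ideal.span_le, Set.singleton_subset_iff]
          have : Ideal.span (e '' ↑(Finset.univ : Finset Z)) ≤ ⨆ z, Ideal.span {e z} := by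
            rw [Ideal.span_le]
            rintro x ⟨w, _, rfl⟩
            exact Submodule.mem_iSup_of_mem w (Submodule.mem_span_singleton_self _)
          exact this hFmem
      refine ⟨Ideal.span {1 - F}, ?_⟩
      rw [hsup]
      constructor
      · rw [Submodule.disjoint_def]
        intro x hx1 hx2
        obtain ⟨ax, hax⟩ := Submodule.mem_span_singleton.mp hx1
        obtain ⟨b, hb⟩ := Submodule.mem_span_singleton.mp hx2
        rw [smul_eq_mul] at hax hb
        have hxF : x * F = x := by
          rw [← hax, mul_assoc, hFidem.eq]
        have hxF0 : x * F = 0 := by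
          rw [← hb, mul_assoc, sub_mul, one_mul, hFidem.eq, sub_self, mul_zero]
        rw [← hxF, hxF0]
      · rw [codisjoint_iff, Ideal.eq_top_iff_one]
        exact Submodule.mem_sup.mpr ⟨F, Submodule.mem_span_singleton_self _,
          1 - F, Submodule.mem_span_singleton_self _, by abel⟩
  · -- independence for any right module N
    intro N _ _
    refine iSupIndep_of_dfinsuppSumAddHom_injective' _ ?_
    rw [injective_iff_map_eq_zero]
    intro v hv
    rw [DFinsupp.sumAddHom_apply] at hv
    have hx : ∀ z, ∃ n : N, op (e z) • n = ((v z : N)) := by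
      intro z
      obtain ⟨n, hn⟩ := AddMonoidHom.mem_range.mp (v z).2
      exact ⟨n, hn⟩
    have hall := Stmt8Aux.key e f hef hforth (fun z => ((v z : N))) hx v.support hv
    ext z
    by_cases hz : z ∈ v.support
    · simpa using hall z hz
    · simpa using DFinsupp.notMem_support_iff.mp hz
end

section
/- Let R be a complete, separated topological ring with a right linear topology, let Z be a linearly ordered set of indices, and let (e_z)_{z∈Z} be a family of idempotent elements of R such that e_w e_z lies in the Jacobson radical H(R) for every pair of indices z < w in Z, the family (e_z) converges to zero in R along the cofinite filter on Z, and the sum u = Σ_{z∈Z} e_z exists (the family is summable) and is an invertible element of R. Then (u⁻¹e_z)_{z∈Z} and (e_z u⁻¹)_{z∈Z} are two families of pairwise orthogonal idempotents in R, each converging to zero along the cofinite filter, with Σ_{z∈Z} u⁻¹e_z = 1 = Σ_{z∈Z} e_z u⁻¹. -/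
universe u v

section JacAux
variable {R : Type u} [Ring R]

lemma jac_mem_iff' {x : R} :
    x ∈ (⊥ : Ideal R).jacobson ↔ ∀ M : Ideal R, M.IsMaximal → x ∈ M := by
  constructor
  · intro hx M hM
    exact (Submodule.mem_sInf.mp hx) M ⟨bot_le, hM⟩
  · intro h
    exact Submodule.mem_sInf.mpr fun M hM => h M hM.2

lemma jac_left' {x : R} (hx : x ∈ (⊥ : Ideal R).jacobson) (c : R) :
    c * x ∈ (⊥ : Ideal R).jacobson := by
  simpa [smul_eq_mul] using Submodule.smul_mem _ c hx

lemma jac_exists_left_inv {x : R} (hx : x ∈ (⊥ : Ideal R).jacobson) :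
    ∃ z : R, z * (1 - x) = 1 := by
  have hspan : Ideal.span ({1 - x} : Set R) = ⊤ := by
    by_contra hne
    obtain ⟨M, hM, hle⟩ := Ideal.exists_le_maximal _ hne
    have hxM : x ∈ M := jac_mem_iff'.mp hx M hM
    have h1x : (1 - x) ∈ M := hle (Ideal.subset_span rfl)
    have h1 : (1 : R) ∈ M := by
      have := M.add_mem h1x hxM
      simpa using this
    exact hM.ne_top ((Ideal.eq_top_iff_one M).mpr h1)
  have h1 : (1 : R) ∈ Ideal.span ({1 - x} : Set R) := by
    rw [hspan]; exact Submodule.mem_top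
  obtain ⟨z, hz⟩ := Submodule.mem_span_singleton.mp h1
  exact ⟨z, by simpa [smul_eq_mul] using hz⟩

lemma jac_isUnit_one_sub {x : R} (hx : x ∈ (⊥ : Ideal R).jacobson) :
    IsUnit (1 - x) := by
  obtain ⟨z, hz⟩ := jac_exists_left_inv hx
  have hz' : z = 1 + z * x := by
    have h : z - z * x = 1 := by
      have h0 := hz; rw [mul_sub, mul_one] at h0; exact h0
    calc z = (z - z * x) + z * x := by abel
    _ = 1 + z * x := by rw [h]
  have hzx : -(z * x) ∈ (⊥ : Ideal R).jacobson := neg_mem (jac_left' hx z)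
  obtain ⟨w, hw⟩ := jac_exists_left_inv hzx
  have hw' : w * z = 1 := by
    rw [sub_neg_eq_add, ← hz'] at hw; exact hw
  have hwz : w = 1 - x := by
    calc w = w * (z * (1 - x)) := by rw [hz, mul_one]
    _ = (w * z) * (1 - x) := by rw [mul_assoc]
    _ = 1 - x := by rw [hw', one_mul]
  exact ⟨⟨1 - x, z, by rw [← hwz]; exact hw', hz⟩, rfl⟩

lemma isUnit_one_sub_swap {a b : R} (h : IsUnit (1 - a * b)) : IsUnit (1 - b * a) := by
  obtain ⟨W, hW⟩ := h
  set w' : R := ↑W⁻¹ with hw'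
  have hww' : (1 - a * b) * w' = 1 := by rw [← hW]; exact W.mul_inv
  have hw'w : w' * (1 - a * b) = 1 := by rw [← hW]; exact W.inv_mul
  refine ⟨⟨1 - b * a, 1 + b * w' * a, ?_, ?_⟩, rfl⟩
  · have h1 : (a * b) * w' = w' - 1 := by
      have h2 : w' - (a * b) * w' = 1 := by
        have h0 := hww'; rw [sub_mul, one_mul] at h0; exact h0
      calc (a * b) * w' = w' - (w' - (a*b) * w') := by abel
      _ = w' - 1 := by rw [h2]
  
    have expand : (1 - b * a) * (1 + b * w' * a)
        = 1 + b * w' * a - b * a - b * ((a * b) * w') * a := by noncomm_ring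
    rw [expand, h1]; noncomm_ring
  · have h1 : w' * (a * b) = w' - 1 := by
      have h2 : w' - w' * (a * b) = 1 := by
        have h0 := hw'w; rw [mul_sub, mul_one] at h0; exact h0
      calc w' * (a * b) = w' - (w' - w' * (a*b)) := by abel
      _ = w' - 1 := by rw [h2]
    have expand : (1 + b * w' * a) * (1 - b * a)
        = 1 + b * w' * a - b * a - b * (w' * (a * b)) * a := by noncomm_ring
    rw [expand, h1]; noncomm_ring

lemma jac_right' {x : R} (hx : x ∈ (⊥ : Ideal R).jacobson) (r : R) :
    x * r ∈ (⊥ : Ideal R).jacobson := by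
  rw [jac_mem_iff']
  intro M hM
  by_contra hxr
  have hlt : M < M ⊔ Ideal.span {x * r} := by
    rw [left_lt_sup]
    intro hle
    exact hxr (hle (Ideal.subset_span rfl))
  have hsup : M ⊔ Ideal.span {x * r} = ⊤ := hM.1.2 _ hlt
  have h1 : (1 : R) ∈ M ⊔ Ideal.span {x * r} := by rw [hsup]; exact Submodule.mem_top
  obtain ⟨m, hm, y, hy, hmy⟩ := Submodule.mem_sup.mp h1
  obtain ⟨c, hc⟩ := Submodule.mem_span_singleton.mp hy
  have hu1 : IsUnit (1 - r * (c * x)) := by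
    have h3 : r * (c * x) ∈ (⊥ : Ideal R).jacobson := by
      have := jac_left' hx (r * c)
      simpa [mul_assoc] using this
    exact jac_isUnit_one_sub h3
  have hunit : IsUnit (1 - (c * x) * r) := isUnit_one_sub_swap (a := r) (b := c * x) hu1
  have hm' : m = 1 - (c * x) * r := by
    have hy' : y = (c * x) * r := by rw [← hc]; simp [smul_eq_mul, mul_assoc]
    calc m = (m + y) - y := by abel
    _ = 1 - (c * x) * r := by rw [hmy, hy']
  exact hM.ne_top (Ideal.eq_top_of_isUnit_mem M hm (hm' ▸ hunit))

lemma jac_isUnit_one_add {x : R} (hx : x ∈ (⊥ : Ideal R).jacobson) :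
    IsUnit (1 + x) := by
  have := jac_isUnit_one_sub (neg_mem hx)
  simpa [sub_neg_eq_add] using this

end JacAux

section MatAux
variable {R : Type u} [Ring R] {ι : Type v} [Fintype ι] [DecidableEq ι]

lemma colinv_single (B : Matrix ι ι R) (l : ι)
    (hcol : ∀ i j, j ≠ l → B i j = 0)
    (hJ : ∀ i, B i l ∈ (⊥ : Ideal R).jacobson) :
    IsUnit (1 + B) := by
  obtain ⟨Q, hQ⟩ := jac_isUnit_one_add (hJ l)
  set q : R := ↑Q⁻¹ with hq
  have hq1 : (1 + B l l) * q = 1 := by rw [← hQ]; exact Q.mul_inv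
  have hq2 : q * (1 + B l l) = 1 := by rw [← hQ]; exact Q.inv_mul
  set D : Matrix ι ι R := Matrix.of (fun i j => if j = l then B i l * q else 0) with hD
  have hDapp : ∀ i j, D i j = if j = l then B i l * q else 0 := fun i j => rfl
  have hBD : ∀ i j, (B * D) i j = if j = l then B i l * (B l l * q) else 0 := by
    intro i j
    rw [Matrix.mul_apply]
    have hterm : ∀ k, B i k * D k j = if k = l then (if j = l then B i l * (B l l * q) else 0) else 0 := by
      intro k
      by_cases hk : k = l
      · by_cases hj : j = l
        · simp only [hk, hDapp, if_pos rfl, if_pos hj, mul_assoc, eq_self_iff_true, if_true]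
        · simp only [hk, hDapp, if_pos rfl, if_neg hj, mul_zero, eq_self_iff_true, if_true]
      · rw [hcol i k hk, zero_mul, if_neg hk]
    rw [Finset.sum_congr rfl (fun k _ => hterm k), Finset.sum_ite_eq' Finset.univ l]
    simp
  have hDB : ∀ i j, (D * B) i j = if j = l then B i l * q * B l l else 0 := by
    intro i j
    rw [Matrix.mul_apply]
    have hterm : ∀ k, D i k * B k j = if k = l then (if j = l then B i l * q * B l l else 0) else 0 := by
      intro k
      by_cases hk : k = l
      · by_cases hj : j = l
        · simp only [hk, hj, hDapp, if_pos rfl, eq_self_iff_true, if_true]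
        · simp only [hk, hDapp, if_pos rfl, if_neg hj, hcol l j hj, mul_zero, eq_self_iff_true, if_true]
      · simp only [hDapp, if_neg hk, zero_mul]
    rw [Finset.sum_congr rfl (fun k _ => hterm k), Finset.sum_ite_eq' Finset.univ l]
    simp
  refine ⟨⟨1 + B, 1 - D, ?_, ?_⟩, rfl⟩
  · have expand : (1 + B) * (1 - D) = 1 + (B - D - B * D) := by noncomm_ring
    rw [expand]
    have hzero : B - D - B * D = 0 := by
      ext i j
      simp only [Matrix.sub_apply, Matrix.zero_apply, hBD i j, hDapp i j]
      by_cases hj : j = l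
      · rw [if_pos hj, if_pos hj, hj]
        have : B i l - B i l * q - B i l * (B l l * q) = B i l * (1 - (1 + B l l) * q) := by noncomm_ring
        rw [this, hq1]
        simp
      · rw [if_neg hj, if_neg hj, hcol i j hj]
        simp
    rw [hzero, add_zero]
  · have expand : (1 - D) * (1 + B) = 1 + (B - D - D * B) := by noncomm_ring
    rw [expand]
    have hzero : B - D - D * B = 0 := by
      ext i j
      simp only [Matrix.sub_apply, Matrix.zero_apply, hDB i j, hDapp i j]
      by_cases hj : j = l
      · rw [if_pos hj, if_pos hj, hj]
        have : B i l - B i l * q - B i l * q * B l l = B i l * (1 - q * (1 + B l l)) := by noncomm_ring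
        rw [this, hq2]
        simp
      · rw [if_neg hj, if_neg hj, hcol i j hj]
        simp
    rw [hzero, add_zero]

lemma colinv (N : Matrix ι ι R) (hN : ∀ i j, N i j ∈ (⊥ : Ideal R).jacobson) :
    IsUnit (1 + N) := by
  suffices H : ∀ s : Finset ι, ∀ N : Matrix ι ι R,
      (∀ i j, N i j ∈ (⊥ : Ideal R).jacobson) → (∀ i j, j ∉ s → N i j = 0) →
      IsUnit (1 + N) by
    exact H Finset.univ N hN (fun i j hj => absurd (Finset.mem_univ j) hj)
  intro s
  induction s using Finset.induction_on with
  | empty =>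
    intro N hNJ hsupp
    have : N = 0 := by ext i j; exact hsupp i j (Finset.notMem_empty j)
    rw [this, add_zero]; exact isUnit_one
  | insert l s' hl ih =>
    intro N hNJ hsupp
    set N' : Matrix ι ι R := Matrix.of (fun i j => if j = l then 0 else N i j) with hN'
    set C : Matrix ι ι R := Matrix.of (fun i j => if j = l then N i j else 0) with hC
    have hN'app : ∀ i j, N' i j = if j = l then 0 else N i j := fun i j => rfl
    have hCapp : ∀ i j, C i j = if j = l then N i j else 0 := fun i j => rfl
    have hsplit : N = N' + C := by
      ext i j
      rw [Matrix.add_apply, hN'app, hCapp]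
      by_cases hj : j = l
      · rw [if_pos hj, if_pos hj, zero_add]
      · rw [if_neg hj, if_neg hj, add_zero]
    have hN'unit : IsUnit (1 + N') := by
      apply ih
      · intro i j
        rw [hN'app]
        by_cases hj : j = l
        · rw [if_pos hj]; exact Ideal.zero_mem _
        · rw [if_neg hj]; exact hNJ i j
      · intro i j hj
        rw [hN'app]
        by_cases hjl : j = l
        · rw [if_pos hjl]
        · rw [if_neg hjl]
          exact hsupp i j (by simp [hjl, hj])
    obtain ⟨U, hU⟩ := hN'unit
    set B : Matrix ι ι R := (Units.val (U⁻¹)) * C with hB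
    have hBcol : ∀ i j, j ≠ l → B i j = 0 := by
      intro i j hj
      rw [hB, Matrix.mul_apply]
      apply Finset.sum_eq_zero
      intro k _
      rw [hCapp, if_neg hj, mul_zero]
    have hBJ : ∀ i, B i l ∈ (⊥ : Ideal R).jacobson := by
      intro i
      rw [hB, Matrix.mul_apply]
      apply Ideal.sum_mem
      intro k _
      rw [hCapp, if_pos rfl]
      exact jac_left' (hNJ k l) _
    have hfac : 1 + N = (1 + N') * (1 + B) := by
      have h1 : (1 + N') * (1 + B) = (1 + N') + (1 + N') * B := by noncomm_ring
      rw [h1, hB, ← mul_assoc]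
      have h2 : (1 + N') * (Units.val (U⁻¹)) = 1 := by rw [← hU]; exact U.mul_inv
      rw [h2, one_mul, hsplit]
      abel
    rw [hfac]
    exact (IsUnit.mul ⟨U, hU⟩ (colinv_single B l hBcol hBJ))

end MatAux

section MainAux

variable {R : Type u} [Ring R] [TopologicalSpace R] [IsTopologicalRing R] [T2Space R]
variable {Z : Type v} [LinearOrder Z]

/-- The central algebraic claim: `e a * (v * e b) = δ_{ab} e a`. -/
theorem main_claim
    (hlin : ∀ U ∈ nhds (0 : R), ∃ I : AddSubgroup R,
      IsOpen (I : Set R) ∧ (∀ a ∈ I, ∀ r : R, a * r ∈ I) ∧ (I : Set R) ⊆ U)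
    (e : Z → R) (he : ∀ z, IsIdempotentElem (e z))
    (hrad : ∀ {z w : Z}, z < w → e w * e z ∈ (⊥ : Ideal R).jacobson)
    (hzero : Filter.Tendsto e Filter.cofinite (nhds 0))
    (u v : R) (hu : HasSum e u) (huv : u * v = 1) (hvu : v * u = 1) :
    ∀ a b : Z, e a * (v * e b) = if a = b then e a else 0 := by
  classical
  -- basic rewriting helpers
  have hvu' : ∀ x : R, v * (u * x) = x := fun x => by rw [← mul_assoc, hvu, one_mul]
  have huv' : ∀ x : R, u * (v * x) = x := fun x => by rw [← mul_assoc, huv, one_mul]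
  -- open subgroups are closed
  have hclosed : ∀ P : AddSubgroup R, IsOpen (P : Set R) → IsClosed (P : Set R) :=
    fun P h => AddSubgroup.isClosed_of_isOpen P h
  -- adaptation of ideals to a left multiplier
  have adapt1 : ∀ (c : R) (P : AddSubgroup R), IsOpen (P : Set R) →
      (∀ x ∈ P, ∀ r : R, x * r ∈ P) →
      ∃ P' : AddSubgroup R, IsOpen (P' : Set R) ∧ (∀ x ∈ P', ∀ r : R, x * r ∈ P') ∧
        P' ≤ P ∧ ∀ x ∈ P', c * x ∈ P := by
    intro c P hPo hPr
    have hc : Continuous fun x : R => c * x := continuous_const.mul continuous_id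
    have hmem : (P : Set R) ∈ nhds (c * 0) := by
      rw [mul_zero]
      exact hPo.mem_nhds P.zero_mem
    have hU : ((fun x : R => c * x) ⁻¹' (P : Set R)) ∈ nhds (0 : R) :=
      hc.continuousAt.preimage_mem_nhds hmem
    obtain ⟨Q, hQo, hQr, hQsub⟩ := hlin _ hU
    refine ⟨Q ⊓ P, ?_, ?_, inf_le_right, ?_⟩
    · have : ((Q ⊓ P : AddSubgroup R) : Set R) = (Q : Set R) ∩ (P : Set R) := rfl
      rw [this]; exact hQo.inter hPo
    · intro x hx r
      exact ⟨hQr x hx.1 r, hPr x hx.2 r⟩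
    · intro x hx
      exact hQsub hx.1
  -- adaptation to finitely many left multipliers
  have adaptF : ∀ (s : Finset R) (P : AddSubgroup R), IsOpen (P : Set R) →
      (∀ x ∈ P, ∀ r : R, x * r ∈ P) →
      ∃ P' : AddSubgroup R, IsOpen (P' : Set R) ∧ (∀ x ∈ P', ∀ r : R, x * r ∈ P') ∧
        P' ≤ P ∧ ∀ c ∈ s, ∀ x ∈ P', c * x ∈ P := by
    intro s
    induction s using Finset.induction_on with
    | empty =>
      intro P hPo hPr
      exact ⟨P, hPo, hPr, le_refl _, fun c hc => absurd hc (Finset.notMem_empty c)⟩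
    | insert c s' hc ih =>
      intro P hPo hPr
      obtain ⟨P₁, hP₁o, hP₁r, hP₁le, hP₁c⟩ := ih P hPo hPr
      obtain ⟨P₂, hP₂o, hP₂r, hP₂le, hP₂c⟩ := adapt1 c P₁ hP₁o hP₁r
      refine ⟨P₂, hP₂o, hP₂r, le_trans hP₂le hP₁le, ?_⟩
      intro d hd x hx
      rcases Finset.mem_insert.mp hd with h | h
      · subst h
        exact hP₁le (hP₂c x hx)
      · exact hP₁c d h x (hP₂le hx)
  -- sums modulo closed subgroups
  have summem : ∀ {f : Z → R} {s : R}, HasSum f s → ∀ (P : AddSubgroup R),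
      IsClosed (P : Set R) → ∀ (G : Finset Z), (∀ m, m ∉ G → f m ∈ P) →
      s - ∑ m ∈ G, f m ∈ P := by
    intro f s hs P hPc G hG
    have hcl : IsClosed ((fun y : R => y - ∑ m ∈ G, f m) ⁻¹' (P : Set R)) :=
      IsClosed.preimage (continuous_sub_right _) hPc
    have hev : ∀ᶠ (F : Finset Z) in Filter.atTop,
        (∑ m ∈ F, f m) ∈ ((fun y : R => y - ∑ m ∈ G, f m) ⁻¹' (P : Set R)) := by
      rw [Filter.eventually_atTop]
      refine ⟨G, fun F hGF => ?_⟩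
      have hsplit : ∑ m ∈ F \ G, f m + ∑ m ∈ G, f m = ∑ m ∈ F, f m := Finset.sum_sdiff hGF
      have heq : (∑ m ∈ F, f m) - ∑ m ∈ G, f m = ∑ m ∈ F \ G, f m := by
        rw [← hsplit]; abel
      show (∑ m ∈ F, f m) - ∑ m ∈ G, f m ∈ (P : Set R)
      rw [heq]
      exact AddSubgroup.sum_mem _ (fun m hm => hG m (Finset.mem_sdiff.mp hm).2)
    have hres : s ∈ (fun y : R => y - ∑ m ∈ G, f m) ⁻¹' (P : Set R) :=
      IsClosed.mem_of_tendsto hcl hs hev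
    exact hres
  -- finiteness of the exceptional set
  have hfin : ∀ (P : AddSubgroup R), IsOpen (P : Set R) → {m : Z | e m ∉ P}.Finite := by
    intro P hPo
    have hmem : (P : Set R) ∈ nhds (0 : R) := hPo.mem_nhds P.zero_mem
    have h2 : e ⁻¹' (P : Set R) ∈ Filter.cofinite := Filter.mem_map.mp (hzero hmem)
    rw [Filter.mem_cofinite] at h2
    exact h2
  -- the "Jacobson + P" subgroup
  have hQj : ∀ (P : AddSubgroup R) (x : R), x ∈ (⊥ : Ideal R).jacobson →
      x ∈ (⊥ : Ideal R).jacobson.toAddSubgroup ⊔ P :=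
    fun P x hx => AddSubgroup.mem_sup_left ((Submodule.mem_toAddSubgroup _).mpr hx)
  have hQp : ∀ (P : AddSubgroup R) (x : R), x ∈ P →
      x ∈ (⊥ : Ideal R).jacobson.toAddSubgroup ⊔ P :=
    fun P x hx => AddSubgroup.mem_sup_right hx
  have hQmulr : ∀ (P : AddSubgroup R), (∀ x ∈ P, ∀ r : R, x * r ∈ P) →
      ∀ x ∈ (⊥ : Ideal R).jacobson.toAddSubgroup ⊔ P, ∀ r : R,
      x * r ∈ (⊥ : Ideal R).jacobson.toAddSubgroup ⊔ P := by
    intro P hPr x hx r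
    obtain ⟨j, hj, p, hp, hjp⟩ := AddSubgroup.mem_sup.mp hx
    have : x * r = j * r + p * r := by rw [← hjp, add_mul]
    rw [this]
    exact add_mem (hQj P _ (jac_right' ((Submodule.mem_toAddSubgroup _).mp hj) r)) (hQp P _ (hPr p hp r))

  -- (B) lower part : for l < k,  e k * (v * e l) ∈ J + P
  have blow : ∀ (P : AddSubgroup R), IsOpen (P : Set R) → (∀ x ∈ P, ∀ r : R, x * r ∈ P) →
      ∀ k l : Z, l < k →
      e k * (v * e l) ∈ (⊥ : Ideal R).jacobson.toAddSubgroup ⊔ P := by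
    intro P hPo hPr k
    obtain ⟨P', hP'o, hP'r, hP'le, hP'c⟩ := adapt1 (e k * v) P hPo hPr
    set Gs : Finset Z := (hfin P' hP'o).toFinset with hGs
    have hGmem : ∀ m, m ∉ Gs → e m ∈ P' := by
      intro m hm
      by_contra h
      exact hm ((Set.Finite.mem_toFinset _).mpr h)
    have KEY : ∀ n : ℕ, ∀ l : Z, l < k → ((Gs.filter (fun x => x < l)).card ≤ n) →
        e k * (v * e l) ∈ (⊥ : Ideal R).jacobson.toAddSubgroup ⊔ P := by
      intro n
      induction n using Nat.strong_induction_on with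
      | _ n IH =>
        intro l hlk hcard
        have hsum : HasSum (fun m => e k * (v * (e m * e l))) (e k * e l) := by
          have h := ((hu.mul_right (e l)).mul_left v).mul_left (e k)
          rwa [hvu' (e l)] at h
        have hlS : l ∉ Gs.erase l := Finset.notMem_erase l Gs
        have htails : ∀ m, m ∉ insert l (Gs.erase l) → e k * (v * (e m * e l)) ∈ P := by
          intro m hm
          have hml : m ≠ l := fun h => hm (by rw [h]; exact Finset.mem_insert_self l _)
          have hmG : m ∉ Gs := by
            intro h
            exact hm (Finset.mem_insert_of_mem (Finset.mem_erase.mpr ⟨hml, h⟩))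
          have h1 : e m * e l ∈ P' := hP'r _ (hGmem m hmG) _
          have h2 := hP'c _ h1
          rwa [mul_assoc] at h2
        have h0 := summem hsum P (hclosed P hPo) (insert l (Gs.erase l)) htails
        rw [Finset.sum_insert hlS] at h0
        have hfl : e k * (v * (e l * e l)) = e k * (v * e l) := by rw [he l]
        rw [hfl] at h0
        -- the finite correction sum lies in J + P
        have hT : (∑ m ∈ Gs.erase l, e k * (v * (e m * e l))) ∈
            (⊥ : Ideal R).jacobson.toAddSubgroup ⊔ P := by
          apply AddSubgroup.sum_mem
          intro m hm
          have hml : m ≠ l := (Finset.mem_erase.mp hm).1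
          have hmG : m ∈ Gs := (Finset.mem_erase.mp hm).2
          rcases lt_or_gt_of_ne hml with hlt | hgt
          · -- m < l : recurse
            have hmk : m < k := lt_trans hlt hlk
            have hsub : Gs.filter (fun x => x < m) ⊂ Gs.filter (fun x => x < l) := by
              rw [Finset.ssubset_iff_of_subset]
              · exact ⟨m, Finset.mem_filter.mpr ⟨hmG, hlt⟩,
                  fun hmem => absurd (Finset.mem_filter.mp hmem).2 (lt_irrefl m)⟩
              · intro x hx
                rcases Finset.mem_filter.mp hx with ⟨h1, h2⟩
                exact Finset.mem_filter.mpr ⟨h1, lt_trans h2 hlt⟩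
            have hlt' : (Gs.filter (fun x => x < m)).card < n :=
              lt_of_lt_of_le (Finset.card_lt_card hsub) hcard
            have hrec := IH _ hlt' m hmk (le_refl _)
            have hrw : e k * (v * (e m * e l)) = (e k * (v * e m)) * e l := by
              rw [mul_assoc, mul_assoc]
            rw [hrw]
            exact hQmulr P hPr _ hrec _
          · -- l < m : Jacobson junk
            have hj : e m * e l ∈ (⊥ : Ideal R).jacobson := hrad hgt
            exact hQj P _ (jac_left' (jac_left' hj v) (e k))
        -- assemble
        have hfinal : e k * (v * e l) =
            (e k * e l) - (∑ m ∈ Gs.erase l, e k * (v * (e m * e l)))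
              - (e k * e l - (e k * (v * e l) + ∑ m ∈ Gs.erase l, e k * (v * (e m * e l)))) := by
          abel
        rw [hfinal]
        exact sub_mem (sub_mem (hQj P _ (hrad hlk)) hT) (hQp P _ h0)
    intro l hlk
    exact KEY _ l hlk (le_refl _)

  -- (B) diagonal part : e k * (v * e k) - e k ∈ J + P
  have bdiag : ∀ (P : AddSubgroup R), IsOpen (P : Set R) → (∀ x ∈ P, ∀ r : R, x * r ∈ P) →
      ∀ k : Z,
      e k * (v * e k) - e k ∈ (⊥ : Ideal R).jacobson.toAddSubgroup ⊔ P := by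
    intro P hPo hPr k
    obtain ⟨P', hP'o, hP'r, hP'le, hP'c⟩ := adapt1 (e k * v) P hPo hPr
    set Gs : Finset Z := (hfin P' hP'o).toFinset with hGs
    have hGmem : ∀ m, m ∉ Gs → e m ∈ P' := by
      intro m hm
      by_contra h
      exact hm ((Set.Finite.mem_toFinset _).mpr h)
    have hsum : HasSum (fun m => e k * (v * (e m * e k))) (e k * e k) := by
      have h := ((hu.mul_right (e k)).mul_left v).mul_left (e k)
      rwa [hvu' (e k)] at h
    have hlS : k ∉ Gs.erase k := Finset.notMem_erase k Gs
    have htails : ∀ m, m ∉ insert k (Gs.erase k) → e k * (v * (e m * e k)) ∈ P := by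
      intro m hm
      have hml : m ≠ k := fun h => hm (by rw [h]; exact Finset.mem_insert_self k _)
      have hmG : m ∉ Gs := by
        intro h
        exact hm (Finset.mem_insert_of_mem (Finset.mem_erase.mpr ⟨hml, h⟩))
      have h1 : e m * e k ∈ P' := hP'r _ (hGmem m hmG) _
      have h2 := hP'c _ h1
      rwa [mul_assoc] at h2
    have h0 := summem hsum P (hclosed P hPo) (insert k (Gs.erase k)) htails
    rw [Finset.sum_insert hlS] at h0
    have hfl : e k * (v * (e k * e k)) = e k * (v * e k) := by rw [he k]
    rw [hfl, he k] at h0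
    have hT : (∑ m ∈ Gs.erase k, e k * (v * (e m * e k))) ∈
        (⊥ : Ideal R).jacobson.toAddSubgroup ⊔ P := by
      apply AddSubgroup.sum_mem
      intro m hm
      have hml : m ≠ k := (Finset.mem_erase.mp hm).1
      rcases lt_or_gt_of_ne hml with hlt | hgt
      · have hrec := blow P hPo hPr k m hlt
        have hrw : e k * (v * (e m * e k)) = (e k * (v * e m)) * e k := by
          rw [mul_assoc, mul_assoc]
        rw [hrw]
        exact hQmulr P hPr _ hrec _
      · exact hQj P _ (jac_left' (jac_left' (hrad hgt) v) (e k))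
    have hfinal : e k * (v * e k) - e k =
        (0 : R) - (∑ m ∈ Gs.erase k, e k * (v * (e m * e k)))
          - (e k - (e k * (v * e k) + ∑ m ∈ Gs.erase k, e k * (v * (e m * e k)))) := by
      abel
    rw [hfinal]
    exact sub_mem (sub_mem (zero_mem _) hT) (hQp P _ h0)

  -- (B) upper part : for k < l,  e k * (v * e l) ∈ J + P
  have bup : ∀ (P : AddSubgroup R), IsOpen (P : Set R) → (∀ x ∈ P, ∀ r : R, x * r ∈ P) →
      ∀ k l : Z, k < l →
      e k * (v * e l) ∈ (⊥ : Ideal R).jacobson.toAddSubgroup ⊔ P := by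
    intro P hPo hPr k
    obtain ⟨P₁, hP₁o, hP₁r, hP₁le, hP₁c⟩ := adapt1 (e k * v) P hPo hPr
    set Gs : Finset Z := (hfin P₁ hP₁o).toFinset with hGs
    have hGmem : ∀ m, m ∉ Gs → e m ∈ P₁ := by
      intro m hm
      by_contra h
      exact hm ((Set.Finite.mem_toFinset _).mpr h)
    have KEY : ∀ n : ℕ, ∀ l : Z, k < l →
        ((Gs.filter (fun x => k < x ∧ x < l)).card ≤ n) →
        e k * (v * e l) ∈ (⊥ : Ideal R).jacobson.toAddSubgroup ⊔ P := by
      intro n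
      induction n using Nat.strong_induction_on with
      | _ n IH =>
        intro l hkl hcard
        have hkne : k ≠ l := ne_of_lt hkl
        have hsum : HasSum (fun m => e k * (v * (e m * (v * e l)))) (e k * (v * e l)) := by
          have h := ((hu.mul_right (v * e l)).mul_left v).mul_left (e k)
          rwa [huv' (e l)] at h
        set G₂ : Finset Z := (Gs.erase k).erase l with hG₂
        have hkG₂ : k ∉ G₂ := by
          intro h
          exact (Finset.notMem_erase k Gs) (Finset.mem_of_mem_erase h)
        have hlG₂ : l ∉ G₂ := Finset.notMem_erase l _
        have hkin : k ∉ insert l G₂ := by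
          intro h
          rcases Finset.mem_insert.mp h with h | h
          · exact hkne h
          · exact hkG₂ h
        have htails : ∀ m, m ∉ insert k (insert l G₂) → e k * (v * (e m * (v * e l))) ∈ P := by
          intro m hm
          have hmk : m ≠ k := fun h => hm (by rw [h]; exact Finset.mem_insert_self k _)
          have hml : m ≠ l := fun h => hm (by
            rw [h]; exact Finset.mem_insert_of_mem (Finset.mem_insert_self l _))
          have hmG : m ∉ Gs := by
            intro h
            exact hm (Finset.mem_insert_of_mem (Finset.mem_insert_of_mem
              (Finset.mem_erase.mpr ⟨hml, Finset.mem_erase.mpr ⟨hmk, h⟩⟩)))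
          have h1 : e m * (v * e l) ∈ P₁ := hP₁r _ (hGmem m hmG) _
          have h2 := hP₁c _ h1
          rwa [mul_assoc] at h2
        have h0 := summem hsum P (hclosed P hPo) (insert k (insert l G₂)) htails
        rw [Finset.sum_insert hkin, Finset.sum_insert hlG₂] at h0
        -- the k-term
        have hfk : e k * (v * (e k * (v * e l))) =
            e k * (v * e l) + (e k * (v * e k) - e k) * (v * e l) := by
          have h1 : e k * (v * (e k * (v * e l))) = (e k * (v * e k)) * (v * e l) := by
            rw [mul_assoc, mul_assoc]
          rw [h1, sub_mul, add_sub_cancel]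
        -- the l-term
        have hfl : e k * (v * (e l * (v * e l))) =
            e k * (v * e l) + e k * (v * (e l * (v * e l) - e l)) := by
          rw [← mul_add, ← mul_add, add_sub_cancel]
        have hqk : (e k * (v * e k) - e k) * (v * e l) ∈
            (⊥ : Ideal R).jacobson.toAddSubgroup ⊔ P :=
          hQmulr P hPr _ (bdiag P hPo hPr k) _
        have hql : e k * (v * (e l * (v * e l) - e l)) ∈
            (⊥ : Ideal R).jacobson.toAddSubgroup ⊔ P := by
          obtain ⟨j, hj, p, hp, hjp⟩ := AddSubgroup.mem_sup.mp (bdiag P₁ hP₁o hP₁r l)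
          have hrw : e k * (v * (e l * (v * e l) - e l)) = e k * (v * j) + (e k * v) * p := by
            rw [← hjp, mul_add, mul_add, mul_assoc]
          rw [hrw]
          refine add_mem (hQj P _ ?_) (hQp P _ (hP₁c _ hp))
          exact jac_left' (jac_left' ((Submodule.mem_toAddSubgroup _).mp hj) v) (e k)
        have hT : (∑ m ∈ G₂, e k * (v * (e m * (v * e l)))) ∈
            (⊥ : Ideal R).jacobson.toAddSubgroup ⊔ P := by
          apply AddSubgroup.sum_mem
          intro m hm
          have hml : m ≠ l := (Finset.mem_erase.mp hm).1
          have hmk : m ≠ k := (Finset.mem_erase.mp (Finset.mem_of_mem_erase hm)).1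
          have hmG : m ∈ Gs := Finset.mem_of_mem_erase (Finset.mem_of_mem_erase hm)
          rcases lt_or_gt_of_ne hmk with hmltk | hkltm
          · -- m < k : lower part
            have hrec := blow P hPo hPr k m hmltk
            have hrw : e k * (v * (e m * (v * e l))) = (e k * (v * e m)) * (v * e l) := by
              rw [mul_assoc, mul_assoc]
            rw [hrw]
            exact hQmulr P hPr _ hrec _
          · rcases lt_or_gt_of_ne hml with hmltl | hlltm
            · -- k < m < l : recurse
              have hsub : Gs.filter (fun x => k < x ∧ x < m) ⊂
                  Gs.filter (fun x => k < x ∧ x < l) := by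
                rw [Finset.ssubset_iff_of_subset]
                · exact ⟨m, Finset.mem_filter.mpr ⟨hmG, hkltm, hmltl⟩,
                    fun hmem => absurd (Finset.mem_filter.mp hmem).2.2 (lt_irrefl m)⟩
                · intro x hx
                  rcases Finset.mem_filter.mp hx with ⟨h1, h2, h3⟩
                  exact Finset.mem_filter.mpr ⟨h1, h2, lt_trans h3 hmltl⟩
              have hlt' : (Gs.filter (fun x => k < x ∧ x < m)).card < n :=
                lt_of_lt_of_le (Finset.card_lt_card hsub) hcard
              have hrec := IH _ hlt' m hkltm (le_refl _)
              have hrw : e k * (v * (e m * (v * e l))) =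
                  (e k * (v * e m)) * (e m * (v * e l)) := by
                rw [mul_assoc, mul_assoc, ← mul_assoc (e m) (e m) (v * e l), he m]
              rw [hrw]
              exact hQmulr P hPr _ hrec _
            · -- l < m : lower part at P₁
              obtain ⟨j, hj, p, hp, hjp⟩ :=
                AddSubgroup.mem_sup.mp (blow P₁ hP₁o hP₁r m l hlltm)
              have hrw : e k * (v * (e m * (v * e l))) = e k * (v * j) + (e k * v) * p := by
                rw [← hjp, mul_add, mul_add, mul_assoc]
              rw [hrw]
              refine add_mem (hQj P _ ?_) (hQp P _ (hP₁c _ hp))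
              exact jac_left' (jac_left' ((Submodule.mem_toAddSubgroup _).mp hj) v) (e k)
        -- assemble
        rw [hfk, hfl] at h0
        have hfinal : e k * (v * e l) =
            (0 : R) - ((e k * (v * e k) - e k) * (v * e l))
              - (e k * (v * (e l * (v * e l) - e l)))
              - (∑ m ∈ G₂, e k * (v * (e m * (v * e l))))
              - (e k * (v * e l)
                  - (e k * (v * e l) + (e k * (v * e k) - e k) * (v * e l)
                    + (e k * (v * e l) + e k * (v * (e l * (v * e l) - e l))
                      + ∑ m ∈ G₂, e k * (v * (e m * (v * e l)))))) := by
          abel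
        rw [hfinal]
        exact sub_mem (sub_mem (sub_mem (sub_mem (zero_mem _) hqk) hql) hT) (hQp P _ h0)
    intro l hkl
    exact KEY _ l hkl (le_refl _)

  -- combined decomposition
  have bx : ∀ (P : AddSubgroup R), IsOpen (P : Set R) → (∀ x ∈ P, ∀ r : R, x * r ∈ P) →
      ∀ k l : Z, (e k * (v * e l) - if k = l then e k else 0) ∈
        (⊥ : Ideal R).jacobson.toAddSubgroup ⊔ P := by
    intro P hPo hPr k l
    rcases lt_trichotomy k l with h | h | h
    · rw [if_neg (ne_of_lt h), sub_zero]
      exact bup P hPo hPr k l h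
    · subst h
      rw [if_pos rfl]
      exact bdiag P hPo hPr k
    · rw [if_neg (ne_of_gt h), sub_zero]
      exact blow P hPo hPr k l h
  intro a b
  have claim : ∀ (P₀ : AddSubgroup R), IsOpen (P₀ : Set R) →
      (∀ x ∈ P₀, ∀ r : R, x * r ∈ P₀) →
      (e a * (v * e b) - if a = b then e a else 0) ∈ P₀ := by
    intro P₀ hP₀o hP₀r
    obtain ⟨P₁, hP₁o, hP₁r, hP₁le, hP₁c⟩ := adapt1 (e a * v) P₀ hP₀o hP₀r
    set F : Finset Z := insert a (insert b (hfin P₁ hP₁o).toFinset) with hF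
    have haF : a ∈ F := Finset.mem_insert_self a _
    have hbF : b ∈ F := Finset.mem_insert_of_mem (Finset.mem_insert_self b _)
    have htailF : ∀ m, m ∉ F → e m ∈ P₁ := by
      intro m hm
      by_contra h
      exact hm (Finset.mem_insert_of_mem (Finset.mem_insert_of_mem
        ((Set.Finite.mem_toFinset _).mpr h)))
    obtain ⟨P₃, hP₃o, hP₃r, hP₃le, hP₃c⟩ := adaptF (F.image e) P₁ hP₁o hP₁r
    set X : Z → Z → R := fun k l => e k * (v * e l) - if k = l then e k else 0 with hX
    -- decompositions
    have hdec : ∀ k l : Z, ∃ j : R, ∃ p : R, j ∈ (⊥ : Ideal R).jacobson ∧ p ∈ P₃ ∧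
        X k l = j + p := by
      intro k l
      obtain ⟨j, hj, p, hp, hjp⟩ := AddSubgroup.mem_sup.mp (bx P₃ hP₃o hP₃r k l)
      exact ⟨j, p, (Submodule.mem_toAddSubgroup _).mp hj, hp, by rw [hX]; exact hjp.symm⟩
    choose xj xp hxj hxp hxs using hdec
    -- matrix inverse
    set N : Matrix {x // x ∈ F} {x // x ∈ F} R := Matrix.of (fun kk ll => xj ↑kk ↑ll) with hN
    have hNunit : IsUnit (1 + N) := colinv N (fun i j => hxj _ _)
    obtain ⟨U, hU⟩ := hNunit
    set Y : Matrix {x // x ∈ F} {x // x ∈ F} R := Units.val (U⁻¹) with hY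
    have hYprop : ∀ ll bb : {x // x ∈ F},
        Y ll bb + ∑ mm : {x // x ∈ F}, xj ↑ll ↑mm * Y mm bb = if ll = bb then 1 else 0 := by
      intro ll bb
      have h1' : ((1 + N) * Y) ll bb = (1 : Matrix {x // x ∈ F} {x // x ∈ F} R) ll bb := by
        rw [hY, ← hU, U.mul_inv]
      rw [Matrix.add_mul, Matrix.one_mul, Matrix.add_apply, Matrix.mul_apply,
        Matrix.one_apply] at h1'
      simpa only [hN, Matrix.of_apply] using h1'
    -- idempotent helpers
    have hXe : ∀ k l : Z, X k l * e l = X k l := by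
      intro k l
      rw [hX]
      simp only
      rw [sub_mul]
      congr 1
      · rw [mul_assoc, mul_assoc, he l]
      · by_cases h : k = l
        · subst h; rw [if_pos rfl, he k]
        · rw [if_neg h, zero_mul]
    -- rho
    have hrho : ∀ c : Z, c ∈ F →
        (X a c + ∑ m ∈ F, X a m * X m c) ∈ P₀ := by
      intro c hc
      have hsum : HasSum (fun m => e a * (v * (e m * (v * e c)))) (e a * (v * e c)) := by
        have h := ((hu.mul_right (v * e c)).mul_left v).mul_left (e a)
        rwa [huv' (e c)] at h
      have htails : ∀ m, m ∉ F → e a * (v * (e m * (v * e c))) ∈ P₀ := by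
        intro m hm
        have h1 : e m * (v * e c) ∈ P₁ := hP₁r _ (htailF m hm) _
        have h2 := hP₁c _ h1
        rwa [mul_assoc] at h2
      have h0 := summem hsum P₀ (hclosed P₀ hP₀o) F htails
      have hterm : ∀ m, e a * (v * (e m * (v * e c)))
          = (e a * (v * e m)) * (e m * (v * e c)) := by
        intro m
        rw [mul_assoc, mul_assoc, ← mul_assoc (e m) (e m) (v * e c), he m]
      rw [Finset.sum_congr rfl (fun m _ => hterm m)] at h0
      -- expand the finite sum
      have hexp : ∑ m ∈ F, (e a * (v * e m)) * (e m * (v * e c))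
          = e a * (v * e c) + (X a c + ∑ m ∈ F, X a m * X m c) := by
        have hAd : ∀ k l : Z, e k * (v * e l) = X k l + (if k = l then e k else 0) := by
          intro k l
          rw [hX]
          simp only
          rw [sub_add_cancel]
        have hstep1 : ∀ m ∈ F, (e a * (v * e m)) * (e m * (v * e c))
            = (if a = m then e a * (e m * (v * e c)) else 0)
              + (X a m * X m c + (if m = c then X a m * e m else 0)) := by
          intro m _
          rw [hAd a m, add_mul, hAd m c, mul_add]
          rw [ite_mul, zero_mul]
          rw [mul_ite, mul_zero]
          abel
        rw [Finset.sum_congr rfl hstep1, Finset.sum_add_distrib, Finset.sum_add_distrib]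
        rw [Finset.sum_ite_eq F a (fun m => e a * (e m * (v * e c))), if_pos haF]
        rw [Finset.sum_ite_eq' F c (fun m => X a m * e m), if_pos hc]
        rw [← mul_assoc, he a, hXe a c]
        abel
      rw [hexp] at h0
      have heq : X a c + ∑ m ∈ F, X a m * X m c
          = (0 : R) - (e a * (v * e c)
            - (e a * (v * e c) + (X a c + ∑ m ∈ F, X a m * X m c))) := by
        abel
      rw [heq]
      exact sub_mem (zero_mem _) h0

    -- pass to the subtype
    set bb : {x // x ∈ F} := ⟨b, hbF⟩ with hbb
    set ρ : {x // x ∈ F} → R :=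
      fun cc => X a ↑cc + ∑ mm : {x // x ∈ F}, X a ↑mm * X ↑mm ↑cc with hρ
    have hρP₀ : ∀ cc : {x // x ∈ F}, ρ cc ∈ P₀ := by
      intro cc
      have h := hrho ↑cc cc.2
      rw [← Finset.sum_coe_sort F (fun m => X a m * X m ↑cc)] at h
      simpa only [hρ] using h
    set jkf : {x // x ∈ F} → R :=
      fun ll => ∑ mm : {x // x ∈ F}, xp ↑ll ↑mm * Y mm bb with hjkf
    have hjkP₃ : ∀ ll, jkf ll ∈ P₃ := by
      intro ll
      exact AddSubgroup.sum_mem _ (fun mm _ => hP₃r _ (hxp _ _) _)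
    have hrow : ∀ ll : {x // x ∈ F},
        ∑ mm : {x // x ∈ F}, X ↑ll ↑mm * Y mm bb
          = ((if ll = bb then (1 : R) else 0) - Y ll bb) + jkf ll := by
      intro ll
      have hsplit : ∀ mm : {x // x ∈ F}, X ↑ll ↑mm * Y mm bb
          = xj ↑ll ↑mm * Y mm bb + xp ↑ll ↑mm * Y mm bb := by
        intro mm
        rw [hxs ↑ll ↑mm, add_mul]
      rw [Finset.sum_congr rfl (fun mm _ => hsplit mm), Finset.sum_add_distrib]
      have h4 : ∑ mm : {x // x ∈ F}, xj ↑ll ↑mm * Y mm bb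
          = (if ll = bb then (1 : R) else 0) - Y ll bb := by
        rw [← hYprop ll bb]; abel
      rw [h4, hjkf]
    have hfinal : X a b = (∑ cc : {x // x ∈ F}, ρ cc * Y cc bb)
        - ∑ mm : {x // x ∈ F}, X a ↑mm * jkf mm := by
      have hs1 : ∑ cc : {x // x ∈ F}, ρ cc * Y cc bb
          = (∑ cc : {x // x ∈ F}, X a ↑cc * Y cc bb)
            + ∑ cc : {x // x ∈ F},
                (∑ mm : {x // x ∈ F}, X a ↑mm * X ↑mm ↑cc) * Y cc bb := by
        rw [← Finset.sum_add_distrib]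
        apply Finset.sum_congr rfl
        intro cc _
        rw [hρ]
        simp only
        rw [add_mul]
      have hs2 : ∑ cc : {x // x ∈ F},
            (∑ mm : {x // x ∈ F}, X a ↑mm * X ↑mm ↑cc) * Y cc bb
          = ∑ mm : {x // x ∈ F},
              X a ↑mm * (∑ cc : {x // x ∈ F}, X ↑mm ↑cc * Y cc bb) := by
        have hcc : ∀ cc : {x // x ∈ F},
            (∑ mm : {x // x ∈ F}, X a ↑mm * X ↑mm ↑cc) * Y cc bb
              = ∑ mm : {x // x ∈ F}, X a ↑mm * (X ↑mm ↑cc * Y cc bb) := by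
          intro cc
          rw [Finset.sum_mul]
          exact Finset.sum_congr rfl (fun mm _ => by rw [mul_assoc])
        rw [Finset.sum_congr rfl (fun cc _ => hcc cc), Finset.sum_comm]
        exact Finset.sum_congr rfl (fun mm _ => by rw [← Finset.mul_sum])
      have hs3 : ∀ mm : {x // x ∈ F},
          X a ↑mm * (∑ cc : {x // x ∈ F}, X ↑mm ↑cc * Y cc bb)
            = ((if mm = bb then X a ↑mm else 0) - X a ↑mm * Y mm bb)
              + X a ↑mm * jkf mm := by
        intro mm
        rw [hrow mm, mul_add, mul_sub, mul_ite, mul_one, mul_zero]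
      have hs4 : ∑ mm : {x // x ∈ F},
            (((if mm = bb then X a ↑mm else 0) - X a ↑mm * Y mm bb)
              + X a ↑mm * jkf mm)
          = (X a b - ∑ mm : {x // x ∈ F}, X a ↑mm * Y mm bb)
            + ∑ mm : {x // x ∈ F}, X a ↑mm * jkf mm := by
        rw [Finset.sum_add_distrib, Finset.sum_sub_distrib]
        congr 2
        rw [Finset.sum_ite_eq' Finset.univ bb (fun mm => X a ↑mm),
          if_pos (Finset.mem_univ bb)]
      rw [hs1, hs2, Finset.sum_congr rfl (fun mm _ => hs3 mm), hs4]
      abel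
    have hmem2 : ∀ mm : {x // x ∈ F}, X a ↑mm * jkf mm ∈ P₀ := by
      intro mm
      have hpm : jkf mm ∈ P₃ := hjkP₃ mm
      have hem : e ↑mm ∈ F.image e := Finset.mem_image_of_mem e mm.2
      have h5 : e ↑mm * jkf mm ∈ P₁ := hP₃c _ hem _ hpm
      have h6 : (e a * v) * (e ↑mm * jkf mm) ∈ P₀ := hP₁c _ h5
      have h7 : (e a * (v * e ↑mm)) * jkf mm = (e a * v) * (e ↑mm * jkf mm) := by
        simp only [mul_assoc]
      have h8 : X a ↑mm * jkf mm
          = (e a * (v * e ↑mm)) * jkf mm - (if a = ↑mm then e a else 0) * jkf mm := by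
        rw [hX]
        simp only
        rw [sub_mul]
      rw [h8, h7]
      refine sub_mem h6 ?_
      by_cases ham : a = ↑mm
      · rw [if_pos ham]
        have h9 : e a * jkf mm ∈ P₁ := hP₃c _ (Finset.mem_image_of_mem e haF) _ hpm
        exact hP₁le h9
      · rw [if_neg ham, zero_mul]
        exact zero_mem _
    have hgoal : (e a * (v * e b) - if a = b then e a else 0) = X a b := by rw [hX]
    rw [hgoal, hfinal]
    exact sub_mem (AddSubgroup.sum_mem _ (fun cc _ => hP₀r _ (hρP₀ cc) _))
      (AddSubgroup.sum_mem _ (fun mm _ => hmem2 mm))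

  by_contra hne
  have hD : (e a * (v * e b) - if a = b then e a else 0) ≠ 0 := sub_ne_zero.mpr hne
  have hopen : IsOpen ({(e a * (v * e b) - if a = b then e a else 0)}ᶜ : Set R) :=
    isOpen_compl_singleton
  have hmem : ({(e a * (v * e b) - if a = b then e a else 0)}ᶜ : Set R) ∈ nhds (0 : R) :=
    hopen.mem_nhds (by simp [hD.symm])
  obtain ⟨P₀, hP₀o, hP₀r, hP₀sub⟩ := hlin _ hmem
  exact hP₀sub (claim P₀ hP₀o hP₀r) rfl


end MainAux

/-- Let `R` be a complete, separated topological ring with a right linear topology, `Z` a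
linearly ordered index set, and `(e z)_{z ∈ Z}` a family of idempotents of `R` such that
`e w * e z` lies in the Jacobson radical for `z < w`, the family converges to zero along
the cofinite filter, and the sum `u = Σ_z e z` exists and is invertible, with (two-sided)
inverse `v`.  Then `(v * e z)` and `(e z * v)` are families of pairwise orthogonal
idempotents, each converging to zero along the cofinite filter, with
`Σ_z v * e z = 1 = Σ_z e z * v`. -/
theorem stmt_9 {R : Type u} [Ring R] [TopologicalSpace R] [IsTopologicalRing R] [T2Space R]
    (hcomplete : @CompleteSpace R (IsTopologicalAddGroup.rightUniformSpace R))
    (hlin : ∀ U ∈ nhds (0 : R), ∃ I : AddSubgroup R,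
      IsOpen (I : Set R) ∧ (∀ a ∈ I, ∀ r : R, a * r ∈ I) ∧ (I : Set R) ⊆ U)
    {Z : Type*} [LinearOrder Z]
    (e : Z → R) (he : ∀ z, IsIdempotentElem (e z))
    (hrad : ∀ {z w : Z}, z < w → e w * e z ∈ (⊥ : Ideal R).jacobson)
    (hzero : Filter.Tendsto e Filter.cofinite (nhds 0))
    (u v : R) (hu : HasSum e u) (huv : u * v = 1) (hvu : v * u = 1) :
    ((∀ z, IsIdempotentElem (v * e z)) ∧
      (∀ z w, z ≠ w → (v * e z) * (v * e w) = 0) ∧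
      Filter.Tendsto (fun z => v * e z) Filter.cofinite (nhds 0) ∧
      HasSum (fun z => v * e z) 1) ∧
    ((∀ z, IsIdempotentElem (e z * v)) ∧
      (∀ z w, z ≠ w → (e z * v) * (e w * v) = 0) ∧
      Filter.Tendsto (fun z => e z * v) Filter.cofinite (nhds 0) ∧
      HasSum (fun z => e z * v) 1) := by
  have main := main_claim hlin e he hrad hzero u v hu huv hvu
  have hzz : ∀ z, e z * (v * e z) = e z := fun z => by rw [main z z, if_pos rfl]
  have hzw : ∀ z w, z ≠ w → e z * (v * e w) = 0 := fun z w h => by rw [main z w, if_neg h]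
  constructor
  · refine ⟨?_, ?_, ?_, ?_⟩
    · intro z
      show (v * e z) * (v * e z) = v * e z
      rw [mul_assoc, hzz z]
    · intro z w h
      rw [mul_assoc, hzw z w h, mul_zero]
    · have h := Filter.Tendsto.const_mul v hzero
      rwa [mul_zero] at h
    · have h := hu.mul_left v
      rwa [hvu] at h
  · refine ⟨?_, ?_, ?_, ?_⟩
    · intro z
      show (e z * v) * (e z * v) = e z * v
      have h7 : (e z * v) * (e z * v) = (e z * (v * e z)) * v := by simp only [mul_assoc]
      rw [h7, hzz z]
    · intro z w h
      have h7 : (e z * v) * (e w * v) = (e z * (v * e w)) * v := by simp only [mul_assoc]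
      rw [h7, hzw z w h, zero_mul]
    · have h := Filter.Tendsto.mul_const v hzero
      rwa [zero_mul] at h
    · have h := hu.mul_right v
      rwa [huv] at h
end

section
/- Let A be a split abelian category, i.e., an abelian category in which every short exact sequence splits. Then for every object M of A, the endomorphism ring End_A(M) is von Neumann regular: for every f ∈ End_A(M) there exists g ∈ End_A(M) with f ∘ g ∘ f = f. -/
open CategoryTheory

universe v u

/-- In a split abelian category (one in which every short exact sequence splits;
equivalently, every epimorphism is split and every monomorphism is split), the endomorphism
ring of every object `M` is von Neumann regular: for every `f : M ⟶ M` there is a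
`g : M ⟶ M` with `f ≫ g ≫ f = f`. -/
theorem stmt_13 {𝒜 : Type u} [Category.{v} 𝒜] [Abelian 𝒜]
    (hepi : ∀ {X Y : 𝒜} (f : X ⟶ Y), Epi f → IsSplitEpi f)
    (hmono : ∀ {X Y : 𝒜} (f : X ⟶ Y), Mono f → IsSplitMono f)
    (M : 𝒜) (f : M ⟶ M) :
    ∃ g : M ⟶ M, f ≫ g ≫ f = f := by
  obtain ⟨⟨s, hs⟩⟩ := hepi (Abelian.factorThruImage f) inferInstance
  obtain ⟨⟨r, hr⟩⟩ := hmono (Abelian.image.ι f) inferInstance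
  refine ⟨r ≫ s, ?_⟩
  have hf : Abelian.factorThruImage f ≫ Abelian.image.ι f = f := Abelian.image.fac f
  have key : ∀ {X : 𝒜} (e : M ⟶ X) (m : X ⟶ M) (s' : X ⟶ M) (r' : M ⟶ X),
      s' ≫ e = 𝟙 X → m ≫ r' = 𝟙 X → (e ≫ m) ≫ (r' ≫ s') ≫ (e ≫ m) = e ≫ m := by
    intro X e m s' r' h1 h2
    calc (e ≫ m) ≫ (r' ≫ s') ≫ (e ≫ m)
        = e ≫ (m ≫ r') ≫ (s' ≫ e) ≫ m := by simp only [Category.assoc]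
      _ = e ≫ m := by rw [h1, h2, Category.id_comp, Category.id_comp]
  have h := key (Abelian.factorThruImage f) (Abelian.image.ι f) s r hs hr
  rw [hf] at h
  exact h
end

section
/- Let R be an associative ring and M an R-module which is coperfect (every descending chain of cyclic submodules of M stabilizes) and satisfies rad(M) = 0, where rad(M) denotes the intersection of all maximal proper submodules of M. Then M is a semisimple module, i.e., a direct sum of simple submodules. -/
universe u v

open Submodule

/-- Let `R` be a ring and `M` an `R`-module which is coperfect (every descending chain of
cyclic submodules stabilizes) and has zero radical (the intersection of all maximal proper
submodules of `M` is `⊥`).  Then `M` is a semisimple module. -/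
theorem stmt_16 {R : Type u} [Ring R] {M : Type v} [AddCommGroup M] [Module R M]
    (hcop : ∀ c : ℕ → Submodule R M,
      (∀ k, ∃ x, c k = Submodule.span R {x}) →
      (∀ k, c (k + 1) ≤ c k) → ∃ k, ∀ l, k ≤ l → c l = c k)
    (hrad : sInf {p : Submodule R M | IsCoatom p} = ⊥) :
    IsSemisimpleModule R M := by
  -- semisimplicity of the zero submodule
  have ssbot : IsSemisimpleModule R (⊥ : Submodule R M) := by
    have h := isSemisimpleModule_biSup_of_isSemisimpleModule_submodule
      (R := R) (M := M) (s := (∅ : Set ℕ)) (p := fun _ => ⊥) (by simp)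
    rwa [show (⨆ i ∈ (∅ : Set ℕ), (⊥ : Submodule R M)) = ⊥ by simp] at h
  -- every nonzero element avoids some coatom
  have hco : ∀ x : M, x ≠ 0 → ∃ P : Submodule R M, IsCoatom P ∧ x ∉ P := by
    intro x hx
    by_contra h
    push_neg at h
    have hmem : x ∈ (⊥ : Submodule R M) := hrad ▸ Submodule.mem_sInf.2 fun P hP => h P hP
    exact hx (by simpa using hmem)
  -- main claim: every cyclic submodule is semisimple
  have key : ∀ x : M, IsSemisimpleModule R (span R ({x} : Set M)) := by
    by_contra hk
    push_neg at hk
    set T : Set (Submodule R M) :=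
      {N | (∃ x, N = span R ({x} : Set M)) ∧ ¬ IsSemisimpleModule R N} with hT
    have hTne : T.Nonempty := by
      obtain ⟨x, hx⟩ := hk
      exact ⟨span R {x}, ⟨x, rfl⟩, hx⟩
    -- T has a minimal element, thanks to the DCC on cyclic submodules
    have hmin : ∃ C ∈ T, ∀ C' ∈ T, ¬ C' < C := by
      by_contra hno
      push_neg at hno
      obtain ⟨C₀, hC₀⟩ := hTne
      choose f hfT hflt using hno
      let c : ℕ → {N // N ∈ T} := fun n =>
        Nat.recAux ⟨C₀, hC₀⟩ (fun _ p => ⟨f p.1 p.2, hfT p.1 p.2⟩) n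
      have hlt : ∀ n, (c (n + 1)).1 < (c n).1 := fun n => hflt _ _
      obtain ⟨k, hk2⟩ := hcop (fun n => (c n).1) (fun n => (c n).2.1) (fun n => (hlt n).le)
      exact (hlt k).ne (hk2 (k + 1) (Nat.le_succ k))
    obtain ⟨C, ⟨⟨x, hCx⟩, hCss⟩, hCmin⟩ := hmin
    -- every submodule strictly below C is semisimple
    have hssub : ∀ N : Submodule R M, N < C → IsSemisimpleModule R N := by
      intro N hN
      have hsup : (⨆ c ∈ (N : Set M), span R ({c} : Set M)) = N := by
        apply le_antisymm
        · exact iSup₂_le fun c hc => (span_singleton_le_iff_mem c N).2 hc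
        · intro m hm
          exact (le_iSup₂_of_le m hm le_rfl : span R ({m} : Set M) ≤ _)
            (mem_span_singleton_self m)
      have h := isSemisimpleModule_biSup_of_isSemisimpleModule_submodule
        (s := (N : Set M)) (p := fun c => span R ({c} : Set M))
        (fun c hc => by
          by_contra hss
          exact hCmin (span R {c}) ⟨⟨c, rfl⟩, hss⟩
            (lt_of_le_of_lt ((span_singleton_le_iff_mem c N).2 hc) hN))
      rwa [hsup] at h
    have hx0 : x ≠ 0 := by
      rintro rfl
      apply hCss
      rw [hCx, span_zero_singleton]
      exact ssbot
    have hxC : x ∈ C := hCx ▸ mem_span_singleton_self x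
    obtain ⟨P, hPco, hxP⟩ := hco x hx0
    have hDC : C ⊓ P < C := by
      refine lt_of_le_of_ne inf_le_left fun h => hxP ?_
      have : x ∈ C ⊓ P := h.symm ▸ hxC
      exact (Submodule.mem_inf.1 this).2
    rcases eq_or_ne (C ⊓ P) ⊥ with hDbot | hDbot
    · -- C is an atom, hence simple, hence semisimple: contradiction
      have hcompl : IsCompl C P := by
        constructor
        · exact disjoint_iff.2 hDbot
        · rw [codisjoint_iff]
          refine hPco.2 _ (lt_of_le_of_ne le_sup_right fun h => hxP ?_)
          exact h ▸ (le_sup_left : C ≤ C ⊔ P) hxC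
      have hatom : IsAtom C := hcompl.isAtom_iff_isCoatom.2 hPco
      exact hCss (haveI := isSimpleModule_iff_isAtom.2 hatom; inferInstance)
    · obtain ⟨d, hdD, hd0⟩ := exists_mem_ne_zero_of_ne_bot hDbot
      have hdC : d ∈ C := (Submodule.mem_inf.1 hdD).1
      have hdP : d ∈ P := (Submodule.mem_inf.1 hdD).2
      obtain ⟨P', hP'co, hdP'⟩ := hco d hd0
      have hQC : C ⊓ P' < C := by
        refine lt_of_le_of_ne inf_le_left fun h => hdP' ?_
        have : d ∈ C ⊓ P' := h.symm ▸ hdC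
        exact (Submodule.mem_inf.1 this).2
      have hDss := hssub (C ⊓ P) hDC
      have hQss := hssub (C ⊓ P') hQC
      have hDP' : (C ⊓ P) ⊔ P' = ⊤ := by
        refine hP'co.2 _ (lt_of_le_of_ne le_sup_right fun h => hdP' ?_)
        exact h ▸ (le_sup_left : C ⊓ P ≤ (C ⊓ P) ⊔ P') hdD
      have hCDQ : C = (C ⊓ P) ⊔ (C ⊓ P') := by
        calc C = ((C ⊓ P) ⊔ P') ⊓ C := by rw [hDP', top_inf_eq]
        _ = (C ⊓ P) ⊔ (P' ⊓ C) := sup_inf_assoc_of_le P' inf_le_left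
        _ = (C ⊓ P) ⊔ (C ⊓ P') := by rw [inf_comm P' C]
      exact hCss (by rw [hCDQ]; exact IsSemisimpleModule.sup hDss hQss)
  refine isSemisimpleModule_of_isSemisimpleModule_submodule'
    (p := fun x : M => span R ({x} : Set M)) key ?_
  rw [eq_top_iff]
  intro m _
  exact Submodule.mem_iSup_of_mem m (mem_span_singleton_self m)
end

section
/- Let R be a topological ring with a right linear topology such that every discrete right R-module is coperfect. Then for every surjective homomorphism L → M of discrete right R-modules, the induced map rad(L) → rad(M) between the radicals is surjective, where rad(−) denotes the intersection of all maximal proper submodules. -/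
universe u

section Helpers

variable {A : Type*} [Ring A] {M : Type*} [AddCommGroup M] [Module A M]
variable {N : Type*} [AddCommGroup N] [Module A N]

open Submodule

/-- If every descending chain of cyclic submodules stabilizes, then every nonempty
family of cyclic submodules has a minimal element. -/
theorem exists_minimal_cyclic
    (hc : ∀ c : ℕ → Submodule A M,
      (∀ k, ∃ x, c k = Submodule.span A {x}) →
      (∀ k, c (k + 1) ≤ c k) → ∃ k, ∀ l, k ≤ l → c l = c k)
    (S : Set (Submodule A M)) (hS : ∀ C ∈ S, ∃ x, C = Submodule.span A {x})
    (hne : S.Nonempty) : ∃ C ∈ S, ∀ C' ∈ S, ¬ C' < C := by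
  by_contra h
  push_neg at h
  obtain ⟨C₀, hC₀⟩ := hne
  choose g hgS hglt using h
  let seq : ℕ → {C // C ∈ S} := fun n =>
    Nat.rec ⟨C₀, hC₀⟩ (fun _ p => ⟨g p.1 p.2, hgS p.1 p.2⟩) n
  have hseq : ∀ k, (seq (k + 1)).1 < (seq k).1 := fun k => hglt (seq k).1 (seq k).2
  obtain ⟨k, hk⟩ := hc (fun k => (seq k).1) (fun k => hS _ (seq k).2)
    (fun k => (hseq k).le)
  exact absurd (hk (k + 1) (Nat.le_succ k)) (ne_of_lt (hseq k))

/-- Under the stabilization hypothesis, every nonzero submodule contains an atom. -/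
theorem exists_atom_le
    (hc : ∀ c : ℕ → Submodule A M,
      (∀ k, ∃ x, c k = Submodule.span A {x}) →
      (∀ k, c (k + 1) ≤ c k) → ∃ k, ∀ l, k ≤ l → c l = c k)
    (C : Submodule A M) (hCbot : C ≠ ⊥) : ∃ A', IsAtom A' ∧ A' ≤ C := by
  obtain ⟨x, hxC, hx0⟩ := (Submodule.ne_bot_iff C).mp hCbot
  set S : Set (Submodule A M) :=
    {C' | (∃ y, C' = Submodule.span A {y}) ∧ C' ≤ C ∧ C' ≠ ⊥} with hSdef
  have hne : S.Nonempty := by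
    refine ⟨Submodule.span A {x}, ⟨x, rfl⟩, ?_, ?_⟩
    · exact (Submodule.span_singleton_le_iff_mem x C).mpr hxC
    · simpa [Submodule.span_singleton_eq_bot] using hx0
  obtain ⟨C₀, hC₀S, hmin⟩ := exists_minimal_cyclic hc S (fun C' hC' => hC'.1) hne
  refine ⟨C₀, ⟨hC₀S.2.2, ?_⟩, hC₀S.2.1⟩
  intro b hb
  by_contra hbbot
  obtain ⟨z, hzb, hz0⟩ := (Submodule.ne_bot_iff b).mp hbbot
  have hzS : Submodule.span A {z} ∈ S := by
    refine ⟨⟨z, rfl⟩, ?_, ?_⟩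
    · exact le_trans ((Submodule.span_singleton_le_iff_mem z b).mpr hzb)
        (le_trans hb.le hC₀S.2.1)
    · simpa [Submodule.span_singleton_eq_bot] using hz0
  exact hmin _ hzS (lt_of_le_of_lt ((Submodule.span_singleton_le_iff_mem z b).mpr hzb) hb)

/-- If the radical is zero and descending chains of cyclic submodules stabilize,
then every element lies in the socle (the sup of all atoms). -/
theorem mem_socle_of_rad_bot
    (hc : ∀ c : ℕ → Submodule A M,
      (∀ k, ∃ x, c k = Submodule.span A {x}) →
      (∀ k, c (k + 1) ≤ c k) → ∃ k, ∀ l, k ≤ l → c l = c k)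
    (hrad : sInf {Q : Submodule A M | IsCoatom Q} = ⊥)
    (w : M) : w ∈ sSup {A' : Submodule A M | IsAtom A'} := by
  set Soc : Submodule A M := sSup {A' : Submodule A M | IsAtom A'} with hSoc
  set S : Set (Submodule A M) :=
    {C | (∃ y, C = Submodule.span A {y}) ∧ w ∈ C ⊔ Soc} with hSdef
  have hne : S.Nonempty :=
    ⟨Submodule.span A {w}, ⟨w, rfl⟩,
      Submodule.mem_sup_left (Submodule.mem_span_singleton_self w)⟩
  obtain ⟨C, hCS, hmin⟩ := exists_minimal_cyclic hc S (fun C' hC' => hC'.1) hne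
  rcases eq_or_ne C ⊥ with hCbot | hCbot
  · have := hCS.2
    rwa [hCbot, bot_sup_eq] at this
  -- C ≠ ⊥ : derive a contradiction with minimality
  exfalso
  obtain ⟨A', hA', hA'C⟩ := exists_atom_le hc C hCbot
  obtain ⟨a₀, ha₀A, ha₀0⟩ := (Submodule.ne_bot_iff A').mp hA'.1
  -- find a coatom not containing a₀
  have hnotrad : a₀ ∉ sInf {Q : Submodule A M | IsCoatom Q} := by
    rw [hrad]; simpa using ha₀0
  obtain ⟨Q, hQco, ha₀Q⟩ : ∃ Q, IsCoatom Q ∧ a₀ ∉ Q := by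
    by_contra hq
    push_neg at hq
    exact hnotrad (Submodule.mem_sInf.mpr fun Q hQ => hq Q hQ)
  -- Q ⊔ A' = ⊤
  have hQA : Q ⊔ A' = ⊤ := by
    refine hQco.2 _ (lt_of_le_of_ne le_sup_left ?_)
    intro hEq
    exact ha₀Q (hEq ▸ Submodule.mem_sup_right ha₀A)
  -- decompose w
  obtain ⟨y, hyC, s, hsSoc, hw⟩ := Submodule.mem_sup.mp hCS.2
  have hy_top : y ∈ Q ⊔ A' := hQA ▸ Submodule.mem_top
  obtain ⟨q, hqQ, a, haA, hy⟩ := Submodule.mem_sup.mp hy_top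
  have hqC : q ∈ C := by
    have haC : a ∈ C := hA'C haA
    have hqe : q = y - a := by rw [← hy]; abel
    rw [hqe]; exact sub_mem hyC haC
  -- w ∈ span q ⊔ Soc
  have hwq : w ∈ Submodule.span A {q} ⊔ Soc := by
    have hAle : A' ≤ Soc := le_sSup hA'
    have haSoc : a ∈ Soc := hAle haA
    refine Submodule.mem_sup.mpr ⟨q, Submodule.mem_span_singleton_self q, a + s, ?_, ?_⟩
    · exact add_mem haSoc hsSoc
    · rw [← hw, ← hy]; abel
  have hqSpan : Submodule.span A {q} ∈ S := ⟨⟨q, rfl⟩, hwq⟩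
  have hle : Submodule.span A {q} ≤ C := (Submodule.span_singleton_le_iff_mem q C).mpr hqC
  have hneq : Submodule.span A {q} ≠ C := by
    intro hEq
    have ha₀mem : a₀ ∈ Q := by
      have hCQ : C ≤ Q := hEq ▸ (Submodule.span_singleton_le_iff_mem q Q).mpr hqQ
      exact hCQ (hA'C ha₀A)
    exact ha₀Q ha₀mem
  exact hmin _ hqSpan (lt_of_le_of_ne hle hneq)

/-- If every element is in the socle, then any element lying in all coatoms above a
submodule `K'` lies in `K'` itself. -/
theorem mem_of_mem_coatoms_above
    (hsoc : ∀ w : M, w ∈ sSup {A' : Submodule A M | IsAtom A'})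
    (K' : Submodule A M) (w₀ : M)
    (hA : ∀ Q : Submodule A M, IsCoatom Q → K' ≤ Q → w₀ ∈ Q) : w₀ ∈ K' := by
  by_contra hw₀
  -- Zorn: maximal submodule above K' avoiding w₀
  have hzorn : ∃ P, Maximal (· ∈ {P : Submodule A M | K' ≤ P ∧ w₀ ∉ P}) P := by
    refine zorn_le₀ _ ?_
    intro c hc hchain
    rcases c.eq_empty_or_nonempty with rfl | ⟨y, hy⟩
    · exact ⟨K', ⟨le_rfl, hw₀⟩, fun z hz => absurd hz (Set.notMem_empty z)⟩
    refine ⟨sSup c, ⟨le_trans (hc hy).1 (le_sSup hy), ?_⟩, fun z hz => le_sSup hz⟩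
    intro hmem
    obtain ⟨p, hpc, hwp⟩ := (Submodule.mem_sSup_of_directed ⟨y, hy⟩
      hchain.directedOn).mp hmem
    exact (hc hpc).2 hwp
  obtain ⟨P, hPmax⟩ := hzorn
  have hKP : K' ≤ P := hPmax.prop.1
  have hw₀P : w₀ ∉ P := hPmax.prop.2
  -- every strictly larger submodule contains w₀
  have hcov : ∀ X : Submodule A M, P < X → w₀ ∈ X := by
    intro X hPX
    by_contra hwX
    exact hPX.not_ge (hPmax.2 ⟨le_trans hKP hPX.le, hwX⟩ hPX.le)
  -- ⊤ = P ⊔ span w₀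
  have htop : (⊤ : Submodule A M) ≤ P ⊔ Submodule.span A {w₀} := by
    have h1 : (⊤ : Submodule A M) ≤ sSup {A' : Submodule A M | IsAtom A'} :=
      fun z _ => hsoc z
    refine le_trans h1 (sSup_le ?_)
    intro A' hA'
    by_cases hAP : A' ≤ P
    · exact le_trans hAP le_sup_left
    · have hPlt : P < P ⊔ A' := by
        refine lt_of_le_of_ne le_sup_left ?_
        intro hEq
        exact hAP (by rw [hEq]; exact le_sup_right)
      have hwPA : w₀ ∈ P ⊔ A' := hcov _ hPlt
      obtain ⟨p, hpP, a, haA, hpa⟩ := Submodule.mem_sup.mp hwPA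
      have ha0 : a ≠ 0 := by
        intro h0
        rw [h0, add_zero] at hpa
        exact hw₀P (hpa ▸ hpP)
      have hAa : A' = Submodule.span A {a} := by
        have hle : Submodule.span A {a} ≤ A' :=
          (Submodule.span_singleton_le_iff_mem a A').mpr haA
        rcases hA'.le_iff.mp hle with h | h
        · exact absurd (Submodule.span_singleton_eq_bot.mp h) ha0
        · exact h.symm
      have hamem : a ∈ P ⊔ Submodule.span A {w₀} := by
        have hae : a = w₀ - p := by rw [← hpa]; abel
        rw [hae]
        exact sub_mem (Submodule.mem_sup_right (Submodule.mem_span_singleton_self w₀))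
          (Submodule.mem_sup_left hpP)
      rw [hAa]
      exact (Submodule.span_singleton_le_iff_mem a _).mpr hamem
  -- P is a coatom
  have hPco : IsCoatom P := by
    constructor
    · intro hEq
      exact hw₀P (hEq ▸ Submodule.mem_top)
    · intro X hPX
      have hwX : w₀ ∈ X := hcov X hPX
      have hle : P ⊔ Submodule.span A {w₀} ≤ X :=
        sup_le hPX.le ((Submodule.span_singleton_le_iff_mem w₀ X).mpr hwX)
      exact top_le_iff.mp (le_trans htop hle)
  exact hw₀P (hA P hPco hKP)

/-- The image of a coatom containing the kernel under a surjective map is a coatom. -/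
theorem isCoatom_map {f : M →ₗ[A] N} (hf : Function.Surjective f)
    {Q : Submodule A M} (hQ : IsCoatom Q) (hk : LinearMap.ker f ≤ Q) :
    IsCoatom (Submodule.map f Q) := by
  constructor
  · intro hEq
    have h1 : Submodule.comap f (Submodule.map f Q) = ⊤ := by
      rw [hEq, Submodule.comap_top]
    rw [Submodule.comap_map_eq, sup_eq_left.mpr hk] at h1
    exact hQ.1 h1
  · intro X hX
    have hcomap : Q ≤ Submodule.comap f X := by
      rw [← sup_eq_left.mpr hk, ← Submodule.comap_map_eq]
      exact Submodule.comap_mono hX.le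
    have hXmap : Submodule.map f (Submodule.comap f X) = X := by
      rw [Submodule.map_comap_eq, LinearMap.range_eq_top.mpr hf, top_inf_eq]
    have hne : Q ≠ Submodule.comap f X := by
      intro hEq
      exact hX.ne (by rw [← hXmap, ← hEq])
    have htop : Submodule.comap f X = ⊤ := hQ.2 _ (lt_of_le_of_ne hcomap hne)
    rw [← hXmap, htop, Submodule.map_top, LinearMap.range_eq_top.mpr hf]

/-- The preimage of a coatom under a surjective map is a coatom containing the kernel. -/
theorem isCoatom_comap {f : M →ₗ[A] N} (hf : Function.Surjective f)
    {Q' : Submodule A N} (hQ' : IsCoatom Q') :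
    IsCoatom (Submodule.comap f Q') ∧ LinearMap.ker f ≤ Submodule.comap f Q' := by
  have hker : LinearMap.ker f ≤ Submodule.comap f Q' := by
    intro x hx
    simp only [Submodule.mem_comap]
    rw [LinearMap.mem_ker.mp hx]
    exact Q'.zero_mem
  refine ⟨⟨?_, ?_⟩, hker⟩
  · intro hEq
    have h1 : Submodule.map f (⊤ : Submodule A M) ≤ Q' := by
      rw [← hEq]
      exact Submodule.map_le_iff_le_comap.mpr le_rfl
    rw [Submodule.map_top, LinearMap.range_eq_top.mpr hf] at h1
    exact hQ'.1 (top_le_iff.mp h1)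
  · intro X hX
    have hmap : Q' ≤ Submodule.map f X := by
      have h1 := Submodule.map_mono (f := f) hX.le
      rwa [Submodule.map_comap_eq, LinearMap.range_eq_top.mpr hf, top_inf_eq] at h1
    have hne : Q' ≠ Submodule.map f X := by
      intro hEq
      have : X ≤ Submodule.comap f Q' := by
        rw [hEq]
        exact Submodule.le_comap_map f X
      exact hX.not_ge this
    have htop : Submodule.map f X = ⊤ := hQ'.2 _ (lt_of_le_of_ne hmap hne)
    have hXtop : X ⊔ LinearMap.ker f = ⊤ := by
      rw [← Submodule.comap_map_eq, htop, Submodule.comap_top]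
    rw [← hXtop, sup_eq_left.mpr (le_trans hker hX.le)]

end Helpers

/-- Let `R` be a topological ring with a right linear topology (the open right ideals,
i.e. open submodules of `R` as a right module over itself, form a base of neighborhoods of
zero) such that every discrete right `R`-module is coperfect.  Then for every surjective
homomorphism `f : L → M` of discrete right `R`-modules, the induced map
`rad L → rad M` between the radicals (intersections of all maximal proper submodules) is
surjective. -/
theorem stmt_17 {R : Type u} [Ring R] [TopologicalSpace R] [IsTopologicalRing R]
    (hlin : ∀ U ∈ nhds (0 : R), ∃ I : Submodule Rᵐᵒᵖ R,
      IsOpen (I : Set R) ∧ (I : Set R) ⊆ U)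
    (hcop : ∀ (N : Type u) [AddCommGroup N] [Module Rᵐᵒᵖ N],
      (∀ n : N, IsOpen {r : R | MulOpposite.op r • n = 0}) →
      ∀ c : ℕ → Submodule Rᵐᵒᵖ N,
        (∀ k, ∃ x, c k = Submodule.span Rᵐᵒᵖ {x}) →
        (∀ k, c (k + 1) ≤ c k) → ∃ k, ∀ l, k ≤ l → c l = c k)
    (L : Type u) [AddCommGroup L] [Module Rᵐᵒᵖ L]
    (M : Type u) [AddCommGroup M] [Module Rᵐᵒᵖ M]
    (hL : ∀ n : L, IsOpen {r : R | MulOpposite.op r • n = 0})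
    (hM : ∀ n : M, IsOpen {r : R | MulOpposite.op r • n = 0})
    (f : L →ₗ[Rᵐᵒᵖ] M) (hf : Function.Surjective f) :
    ∀ m ∈ sInf {p : Submodule Rᵐᵒᵖ M | IsCoatom p},
      ∃ l ∈ sInf {q : Submodule Rᵐᵒᵖ L | IsCoatom q}, f l = m := by
  intro m hm
  obtain ⟨l₀, hl₀⟩ := hf m
  set radL : Submodule Rᵐᵒᵖ L := sInf {q : Submodule Rᵐᵒᵖ L | IsCoatom q} with hradL
  set π : L →ₗ[Rᵐᵒᵖ] (L ⧸ radL) := radL.mkQ with hπdef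
  have hπsurj : Function.Surjective π := Submodule.mkQ_surjective radL
  have hkerπ : LinearMap.ker π = radL := Submodule.ker_mkQ radL
  -- the quotient is a discrete module
  have hWdisc : ∀ n : L ⧸ radL, IsOpen {r : R | MulOpposite.op r • n = 0} := by
    intro n
    obtain ⟨x, rfl⟩ := hπsurj n
    have hU : IsOpen {r : R | MulOpposite.op r • x = 0} := hL x
    have hS : {r : R | MulOpposite.op r • π x = 0}
        = ⋃ a ∈ {r : R | MulOpposite.op r • π x = 0},
            (fun r : R => a + r) '' {r : R | MulOpposite.op r • x = 0} := by
      ext r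
      simp only [Set.mem_iUnion, Set.mem_image, Set.mem_setOf_eq]
      constructor
      · intro hr
        exact ⟨r, hr, 0, by simp, by simp⟩
      · rintro ⟨a, ha, u, hu, rfl⟩
        rw [MulOpposite.op_add, add_smul, ha, zero_add, ← map_smul π, hu, map_zero]
    rw [hS]
    exact isOpen_biUnion fun a _ => (Homeomorph.addLeft a).isOpenMap _ hU
  -- the radical of the quotient is zero
  have hradW : sInf {Q : Submodule Rᵐᵒᵖ (L ⧸ radL) | IsCoatom Q} = ⊥ := by
    rw [eq_bot_iff]
    intro z hz
    obtain ⟨y, rfl⟩ := hπsurj z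
    rw [Submodule.mem_bot]
    by_contra hz0
    have hy : y ∉ radL := by
      intro hy
      apply hz0
      rw [hπdef, Submodule.mkQ_apply, Submodule.Quotient.mk_eq_zero]
      exact hy
    obtain ⟨Q, hQco, hyQ⟩ : ∃ Q, IsCoatom Q ∧ y ∉ Q := by
      by_contra hq
      push_neg at hq
      exact hy (Submodule.mem_sInf.mpr fun Q hQ => hq Q hQ)
    have hQrad : radL ≤ Q := sInf_le hQco
    have hQker : LinearMap.ker π ≤ Q := by rw [hkerπ]; exact hQrad
    have hQ' := isCoatom_map hπsurj hQco hQker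
    have hmem : π y ∈ Submodule.map π Q := Submodule.mem_sInf.mp hz _ hQ'
    have hyQ' : y ∈ Q ⊔ LinearMap.ker π := by
      rw [← Submodule.comap_map_eq]
      exact hmem
    rw [hkerπ, sup_eq_left.mpr hQrad] at hyQ'
    exact hyQ hyQ'
  -- every element of the quotient lies in its socle
  have hWcop := hcop (L ⧸ radL) hWdisc
  have hsoc : ∀ w : L ⧸ radL, w ∈ sSup {A' : Submodule Rᵐᵒᵖ (L ⧸ radL) | IsAtom A'} :=
    fun w => mem_socle_of_rad_bot hWcop hradW w
  -- π l₀ lies in every coatom above the image of ker f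
  set K' : Submodule Rᵐᵒᵖ (L ⧸ radL) := Submodule.map π (LinearMap.ker f) with hK'
  have hstepA : ∀ Q' : Submodule Rᵐᵒᵖ (L ⧸ radL), IsCoatom Q' → K' ≤ Q' → π l₀ ∈ Q' := by
    intro Q' hQ' hKQ'
    obtain ⟨hQco, hQker⟩ := isCoatom_comap hπsurj hQ'
    have hkerf : LinearMap.ker f ≤ Submodule.comap π Q' := by
      intro x hx
      exact hKQ' (Submodule.mem_map_of_mem hx)
    have hP := isCoatom_map hf hQco hkerf
    have hmP : m ∈ Submodule.map f (Submodule.comap π Q') :=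
      Submodule.mem_sInf.mp hm _ hP
    obtain ⟨q, hqQ, hfq⟩ := hmP
    have hdiff : l₀ - q ∈ LinearMap.ker f := by
      rw [LinearMap.mem_ker, map_sub, hl₀, hfq, sub_self]
    have hl₀Q : l₀ ∈ Submodule.comap π Q' := by
      have h1 := hkerf hdiff
      have h2 : l₀ = (l₀ - q) + q := by abel
      rw [h2]
      exact add_mem h1 hqQ
    exact hl₀Q
  -- conclude
  have hfinal : π l₀ ∈ K' := mem_of_mem_coatoms_above hsoc K' (π l₀) hstepA
  have hsup : l₀ ∈ LinearMap.ker f ⊔ radL := by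
    have h1 : l₀ ∈ Submodule.comap π K' := hfinal
    rw [hK', Submodule.comap_map_eq, hkerπ] at h1
    exact h1
  obtain ⟨a, ha, b, hb, hab⟩ := Submodule.mem_sup.mp hsup
  refine ⟨b, hb, ?_⟩
  have : f b = f l₀ - f a := by
    rw [← hab, map_add]
    rw [LinearMap.mem_ker.mp ha]
    abel
  rw [this, hl₀, LinearMap.mem_ker.mp ha, sub_zero]
end

section
/- Let R be a complete, separated topological ring with a countable base of neighborhoods of zero consisting of open right ideals, and assume that every discrete right R-module is coperfect. Let H denote the intersection of all open maximal right ideals of R (the topological Jacobson radical). Then for every open right ideal I of R, the intersection of all maximal right ideals of R containing I equals I + H; equivalently, the radical of the right R-module R/I (the intersection of its maximal submodules) is the submodule (I + H)/I, the image of H under the projection R → R/I. -/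
universe u



open Filter Topology

section Aux

variable {R : Type u} [Ring R]

lemma aux_eq_top_of_one_mem (K : Submodule Rᵐᵒᵖ R) (h : (1:R) ∈ K) : K = ⊤ := by
  rw [Submodule.eq_top_iff']
  intro r
  have := K.smul_mem (MulOpposite.op r) h
  rwa [op_smul_eq_mul, one_mul] at this

lemma exists_maximal_avoiding {M : Type*} [AddCommGroup M] [Module Rᵐᵒᵖ M]
    (B : Submodule Rᵐᵒᵖ M) (x : M) (hx : x ∉ B) :
    ∃ Q : Submodule Rᵐᵒᵖ M, B ≤ Q ∧ x ∉ Q ∧ ∀ K, Q < K → x ∈ K := by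
  have hzorn : ∀ c ⊆ {K : Submodule Rᵐᵒᵖ M | x ∉ K}, IsChain (· ≤ ·) c → ∀ y ∈ c,
      ∃ ub ∈ {K : Submodule Rᵐᵒᵖ M | x ∉ K}, ∀ z ∈ c, z ≤ ub := by
    intro c hcs hc y hy
    refine ⟨sSup c, ?_, fun z hz => le_sSup hz⟩
    intro hxs
    haveI : Nonempty c := ⟨⟨y, hy⟩⟩
    obtain ⟨p, hp⟩ := (Submodule.mem_iSup_of_directed _ hc.directed).mp (sSup_eq_iSup' c ▸ hxs)
    exact hcs p.2 hp
  obtain ⟨Q, hBQ, hQ⟩ := zorn_le_nonempty₀ {K : Submodule Rᵐᵒᵖ M | x ∉ K} hzorn B hx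
  refine ⟨Q, hBQ, hQ.1, fun K hK => ?_⟩
  by_contra hxK
  exact hK.not_ge (hQ.2 hxK hK.le)

lemma exists_coatom_above (B : Submodule Rᵐᵒᵖ R) (hB : (1:R) ∉ B) :
    ∃ T : Submodule Rᵐᵒᵖ R, IsCoatom T ∧ B ≤ T := by
  obtain ⟨Q, hBQ, hQ1, hmax⟩ := exists_maximal_avoiding B 1 hB
  exact ⟨Q, ⟨fun h => hQ1 (h ▸ Submodule.mem_top),
    fun K hK => aux_eq_top_of_one_mem K (hmax K hK)⟩, hBQ⟩

end Aux


section Aux2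

variable {R : Type u} [Ring R]

lemma map_comap_mkQ_self {K : Submodule Rᵐᵒᵖ R} (V : Submodule Rᵐᵒᵖ (R ⧸ K)) :
    Submodule.map K.mkQ (Submodule.comap K.mkQ V) = V := by
  rw [Submodule.map_comap_eq, Submodule.range_mkQ, top_inf_eq]

lemma comap_map_mkQ_self {K T : Submodule Rᵐᵒᵖ R} (hKT : K ≤ T) :
    Submodule.comap K.mkQ (Submodule.map K.mkQ T) = T := by
  rw [Submodule.comap_map_mkQ, sup_eq_right.mpr hKT]

lemma mem_map_mkQ {K T : Submodule Rᵐᵒᵖ R} (hKT : K ≤ T) (y : R) :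
    Submodule.Quotient.mk y ∈ Submodule.map K.mkQ T ↔ y ∈ T := by
  constructor
  · rintro ⟨t, ht, hteq⟩
    rw [Submodule.mkQ_apply] at hteq
    have : t - y ∈ K := (Submodule.Quotient.eq K).mp hteq
    have h2 : t - (t - y) ∈ T := T.sub_mem ht (hKT this)
    simpa using h2
  · intro h
    exact ⟨y, h, rfl⟩

lemma ker_le_comap_mkQ {K : Submodule Rᵐᵒᵖ R} (Z : Submodule Rᵐᵒᵖ (R ⧸ K)) :
    K ≤ Submodule.comap K.mkQ Z := by
  intro k hk
  rw [Submodule.mem_comap, Submodule.mkQ_apply, (Submodule.Quotient.mk_eq_zero K).mpr hk]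
  exact Z.zero_mem

lemma isCoatom_map_mkQ {K T : Submodule Rᵐᵒᵖ R} (hKT : K ≤ T) (hT : IsCoatom T) :
    IsCoatom (Submodule.map K.mkQ T) := by
  constructor
  · intro h
    apply hT.1
    have := comap_map_mkQ_self hKT
    rw [h, Submodule.comap_top] at this
    exact this.symm
  · intro V hV
    have hTlt : T < Submodule.comap K.mkQ V := by
      refine lt_of_le_of_ne ?_ fun h => ?_
      · rw [← comap_map_mkQ_self hKT]
        exact Submodule.comap_mono hV.le
      · have := map_comap_mkQ_self (K := K) V
        rw [← h] at this
        exact hV.ne this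
    have htop := hT.2 _ hTlt
    have := map_comap_mkQ_self (K := K) V
    rw [htop, Submodule.map_top, Submodule.range_mkQ] at this
    exact this.symm

lemma isCoatom_comap_mkQ {K : Submodule Rᵐᵒᵖ R} {Z : Submodule Rᵐᵒᵖ (R ⧸ K)} (hZ : IsCoatom Z) :
    IsCoatom (Submodule.comap K.mkQ Z) := by
  constructor
  · intro h
    apply hZ.1
    have := map_comap_mkQ_self (K := K) Z
    rw [h, Submodule.map_top, Submodule.range_mkQ] at this
    exact this.symm
  · intro E hE
    have hKE : K ≤ E := (ker_le_comap_mkQ Z).trans hE.le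
    have h1 : Z < Submodule.map K.mkQ E := by
      refine lt_of_le_of_ne ?_ fun h => ?_
      · rw [← map_comap_mkQ_self (K := K) Z]
        exact Submodule.map_mono hE.le
      · have := comap_map_mkQ_self hKE
        rw [← h] at this
        exact hE.ne this
    have htop := hZ.2 _ h1
    have := comap_map_mkQ_self hKE
    rw [htop, Submodule.comap_top] at this
    exact this.symm

lemma top_cyclic_quot (K : Submodule Rᵐᵒᵖ R) :
    (⊤ : Submodule Rᵐᵒᵖ (R ⧸ K)) =
      Submodule.span Rᵐᵒᵖ {Submodule.Quotient.mk (1:R)} := by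
  refine le_antisymm ?_ le_top
  intro z _
  obtain ⟨r, rfl⟩ := Submodule.Quotient.mk_surjective K z
  refine Submodule.mem_span_singleton.mpr ⟨MulOpposite.op r, ?_⟩
  rw [← Submodule.Quotient.mk_smul, op_smul_eq_mul, one_mul]

end Aux2


section Soc

variable {R : Type u} [Ring R]

lemma atom_below (K : Submodule Rᵐᵒᵖ R)
    (hst : ∀ c : ℕ → Submodule Rᵐᵒᵖ (R ⧸ K),
      (∀ k, ∃ g, c k = Submodule.span Rᵐᵒᵖ {g}) → (∀ k, c (k + 1) ≤ c k) →
      ∃ k, ∀ l, k ≤ l → c l = c k)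
    (C : Submodule Rᵐᵒᵖ (R ⧸ K)) (hC : C ≠ ⊥) :
    ∃ S, IsAtom S ∧ S ≤ C := by
  obtain ⟨m, hmC, hm⟩ := Submodule.exists_mem_ne_zero_of_ne_bot hC
  set 𝒮 : Set (Submodule Rᵐᵒᵖ (R ⧸ K)) :=
    {P | P ≠ ⊥ ∧ P ≤ Submodule.span Rᵐᵒᵖ {m} ∧ ∃ g, P = Submodule.span Rᵐᵒᵖ {g}} with h𝒮
  have hspanm : Submodule.span Rᵐᵒᵖ {m} ∈ 𝒮 := by
    refine ⟨?_, le_rfl, ⟨m, rfl⟩⟩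
    rw [Ne, Submodule.span_singleton_eq_bot]
    exact hm
  -- there is a minimal member of 𝒮
  have hmin : ∃ P ∈ 𝒮, ∀ P' ∈ 𝒮, P' ≤ P → P' = P := by
    by_contra hno
    push_neg at hno
    have hstep : ∀ p : {P // P ∈ 𝒮}, ∃ q : {P // P ∈ 𝒮}, q.1 < p.1 := by
      rintro ⟨P, hP⟩
      obtain ⟨P', hP', hle, hne⟩ := hno P hP
      exact ⟨⟨P', hP'⟩, lt_of_le_of_ne hle hne⟩
    let F : ℕ → {P // P ∈ 𝒮} := fun n =>
      Nat.rec (⟨Submodule.span Rᵐᵒᵖ {m}, hspanm⟩) (fun _ p => (hstep p).choose) n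
    have hFlt : ∀ n, (F (n + 1)).1 < (F n).1 := fun n => (hstep (F n)).choose_spec
    obtain ⟨k, hk⟩ := hst (fun n => (F n).1) (fun n => (F n).2.2.2) (fun n => (hFlt n).le)
    exact absurd (hk (k + 1) (Nat.le_succ k)) (hFlt k).ne
  obtain ⟨P, hP, hPmin⟩ := hmin
  refine ⟨P, ⟨hP.1, ?_⟩, hP.2.1.trans (Submodule.span_singleton_le_iff_mem m C |>.mpr hmC)⟩
  intro Q hQ
  by_contra hQne
  obtain ⟨q, hqQ, hq⟩ := Submodule.exists_mem_ne_zero_of_ne_bot hQne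
  have hqP : Submodule.span Rᵐᵒᵖ {q} ∈ 𝒮 := by
    refine ⟨?_, ?_, ⟨q, rfl⟩⟩
    · rw [Ne, Submodule.span_singleton_eq_bot]; exact hq
    · exact ((Submodule.span_singleton_le_iff_mem q Q).mpr hqQ).trans (hQ.le.trans hP.2.1)
  have := hPmin _ hqP (((Submodule.span_singleton_le_iff_mem q Q).mpr hqQ).trans hQ.le)
  rw [← this] at hQ
  exact absurd (((Submodule.span_singleton_le_iff_mem q Q).mpr hqQ)) hQ.not_ge

end Soc


section Soc2

variable {R : Type u} [Ring R]

lemma soc_eq_top (K : Submodule Rᵐᵒᵖ R)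
    (hst : ∀ c : ℕ → Submodule Rᵐᵒᵖ (R ⧸ K),
      (∀ k, ∃ g, c k = Submodule.span Rᵐᵒᵖ {g}) → (∀ k, c (k + 1) ≤ c k) →
      ∃ k, ∀ l, k ≤ l → c l = c k)
    (hrad : ∀ y : R, y ∉ K → ∃ T : Submodule Rᵐᵒᵖ R, IsCoatom T ∧ K ≤ T ∧ y ∉ T) :
    sSup {S : Submodule Rᵐᵒᵖ (R ⧸ K) | IsAtom S} = ⊤ := by
  -- every atom avoids some coatom of the quotient
  have coatom_avoid : ∀ S : Submodule Rᵐᵒᵖ (R ⧸ K), IsAtom S →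
      ∃ W : Submodule Rᵐᵒᵖ (R ⧸ K), IsCoatom W ∧ ¬ S ≤ W := by
    intro S hS
    obtain ⟨s0, hs0S, hs0⟩ := Submodule.exists_mem_ne_zero_of_ne_bot hS.1
    obtain ⟨y, rfl⟩ := Submodule.Quotient.mk_surjective K s0
    have hyK : y ∉ K := fun h => hs0 ((Submodule.Quotient.mk_eq_zero K).mpr h)
    obtain ⟨T, hT, hKT, hyT⟩ := hrad y hyK
    refine ⟨Submodule.map K.mkQ T, isCoatom_map_mkQ hKT hT, fun hle => hyT ?_⟩
    exact (mem_map_mkQ hKT y).mp (hle hs0S)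
  -- the splitting step
  have step : ∀ C : Submodule Rᵐᵒᵖ (R ⧸ K),
      (∃ g, C = Submodule.span Rᵐᵒᵖ {g}) → C ≠ ⊥ →
      ∃ C' : Submodule Rᵐᵒᵖ (R ⧸ K), (∃ g, C' = Submodule.span Rᵐᵒᵖ {g}) ∧
        C ≤ C' ⊔ sSup {S : Submodule Rᵐᵒᵖ (R ⧸ K) | IsAtom S} ∧ C' < C := by
    intro C hCcyc hCne
    obtain ⟨S, hS, hSC⟩ := atom_below K hst C hCne
    obtain ⟨W, hW, hSW⟩ := coatom_avoid S hS
    have hsup : S ⊔ W = ⊤ := by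
      refine hW.2 _ (lt_of_le_of_ne le_sup_right fun h => hSW ?_)
      exact le_sup_left.trans h.ge
    have hinf : S ⊓ W = ⊥ := by
      refine hS.2 _ (lt_of_le_of_ne inf_le_left fun h => hSW ?_)
      exact h.ge.trans inf_le_right
    obtain ⟨k₀, hk₀⟩ := hCcyc
    have hk₀C : k₀ ∈ C := hk₀ ▸ Submodule.mem_span_singleton_self k₀
    have hk₀top : k₀ ∈ S ⊔ W := by rw [hsup]; exact Submodule.mem_top
    obtain ⟨s, hs, w, hw, hswk⟩ := Submodule.mem_sup.mp hk₀top
    have hsC : s ∈ C := hSC hs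
    have hwC : w ∈ C := by
      have h2 := C.sub_mem hk₀C hsC
      rwa [← hswk, add_sub_cancel_left] at h2
    refine ⟨C ⊓ W, ⟨w, ?_⟩, ?_, ?_⟩
    · -- C ⊓ W = span {w}
      refine le_antisymm ?_ ?_
      · intro u hu
        obtain ⟨a, ha⟩ := Submodule.mem_span_singleton.mp (hk₀ ▸ hu.1 : u ∈ Submodule.span Rᵐᵒᵖ {k₀})
        have hdecomp : a • s + a • w = u := by rw [← smul_add, hswk, ha]
        have haw : a • w ∈ C ⊓ W := ⟨C.smul_mem a hwC, W.smul_mem a hw⟩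
        have has : a • s ∈ S ⊓ W := by
          constructor
          · exact S.smul_mem a hs
          · have := (C ⊓ W).sub_mem hu haw
            have h3 : u - a • w = a • s := by rw [← hdecomp]; abel
            rw [h3] at this
            exact this.2
        rw [hinf] at has
        have hz : a • s = 0 := (Submodule.mem_bot _).mp has
        have : u = a • w := by rw [← hdecomp, hz, zero_add]
        rw [this]
        exact Submodule.mem_span_singleton.mpr ⟨a, rfl⟩
      · rw [Submodule.span_singleton_le_iff_mem]
        exact ⟨hwC, hw⟩
    · -- C ≤ (C ⊓ W) ⊔ sSup atoms
      intro u hu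
      have hutop : u ∈ S ⊔ W := by rw [hsup]; exact Submodule.mem_top
      obtain ⟨s', hs', w', hw', h'⟩ := Submodule.mem_sup.mp hutop
      have hs'C : s' ∈ C := hSC hs'
      have hw'C : w' ∈ C := by
        have h2 := C.sub_mem hu hs'C
        rwa [← h', add_sub_cancel_left] at h2
      have h1 : w' ∈ C ⊓ W := ⟨hw'C, hw'⟩
      have h2 : s' ∈ sSup {S : Submodule Rᵐᵒᵖ (R ⧸ K) | IsAtom S} :=
        (le_sSup (s := {S : Submodule Rᵐᵒᵖ (R ⧸ K) | IsAtom S}) hS) hs'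
      rw [← h']
      exact Submodule.add_mem _ (Submodule.mem_sup_right h2) (Submodule.mem_sup_left h1)
    · -- strict
      refine lt_of_le_of_ne inf_le_left fun h => ?_
      have : C ≤ W := h.ge.trans inf_le_right
      exact hSW (hSC.trans this)
  -- recursion
  set A := sSup {S : Submodule Rᵐᵒᵖ (R ⧸ K) | IsAtom S} with hA
  by_contra hAne
  have hGoodTop : ((⊤ : Submodule Rᵐᵒᵖ (R ⧸ K)) = Submodule.span Rᵐᵒᵖ {Submodule.Quotient.mk (1:R)}) := top_cyclic_quot K
  let Sub := {C : Submodule Rᵐᵒᵖ (R ⧸ K) // (∃ g, C = Submodule.span Rᵐᵒᵖ {g}) ∧ C ⊔ A = ⊤}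
  have hstepfun : ∀ p : Sub, ∃ q : Sub, q.1 ≤ p.1 ∧ (p.1 ≠ ⊥ → q.1 < p.1) := by
    rintro ⟨C, hCcyc, hCsup⟩
    by_cases hCne : C = ⊥
    · exact ⟨⟨C, hCcyc, hCsup⟩, le_rfl, fun h => absurd hCne h⟩
    · obtain ⟨C', hC'cyc, hC'le, hC'lt⟩ := step C hCcyc hCne
      have hC'sup : C' ⊔ A = ⊤ := by
        have h1 : C ⊔ A ≤ C' ⊔ A := by
          refine sup_le ?_ le_sup_right
          exact hC'le.trans (sup_le le_sup_left le_sup_right)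
        rw [hCsup] at h1
        exact top_unique h1
      exact ⟨⟨C', hC'cyc, hC'sup⟩, hC'lt.le, fun _ => hC'lt⟩
  let F : ℕ → Sub := fun n => Nat.rec ⟨⊤, ⟨_, hGoodTop⟩, top_sup_eq A⟩ (fun _ p => (hstepfun p).choose) n
  have hFdesc : ∀ n, (F (n+1)).1 ≤ (F n).1 := fun n => (hstepfun (F n)).choose_spec.1
  have hFlt : ∀ n, (F n).1 ≠ ⊥ → (F (n+1)).1 < (F n).1 := fun n => (hstepfun (F n)).choose_spec.2
  obtain ⟨k, hk⟩ := hst (fun n => (F n).1) (fun n => (F n).2.1) hFdesc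
  have hFkbot : (F k).1 = ⊥ := by
    by_contra hne
    exact absurd (hk (k+1) (Nat.le_succ k)) (hFlt k hne).ne
  have := (F k).2.2
  rw [hFkbot, bot_sup_eq] at this
  exact hAne this

end Soc2

section Star

variable {R : Type u} [Ring R]

lemma star_lemma (U K : Submodule Rᵐᵒᵖ R)
    (hKdef : K = sInf {T : Submodule Rᵐᵒᵖ R | IsCoatom T ∧ U ≤ T})
    (hst : ∀ c : ℕ → Submodule Rᵐᵒᵖ (R ⧸ K),
      (∀ k, ∃ g, c k = Submodule.span Rᵐᵒᵖ {g}) → (∀ k, c (k + 1) ≤ c k) →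
      ∃ k, ∀ l, k ≤ l → c l = c k)
    (W : Submodule Rᵐᵒᵖ R) (hKW : K ≤ W)
    (y : R) (hy : y ∉ W) : ∃ D : Submodule Rᵐᵒᵖ R, IsCoatom D ∧ W ≤ D ∧ y ∉ D := by
  have hrad : ∀ z : R, z ∉ K → ∃ T : Submodule Rᵐᵒᵖ R, IsCoatom T ∧ K ≤ T ∧ z ∉ T := by
    intro z hz
    rw [hKdef] at hz
    rw [Submodule.mem_sInf] at hz
    push_neg at hz
    obtain ⟨T, hT, hzT⟩ := hz
    exact ⟨T, hT.1, hKdef ▸ sInf_le hT, hzT⟩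
  have hsoc := soc_eq_top K hst hrad
  set Wb := Submodule.map K.mkQ W with hWb
  have hyWb : Submodule.Quotient.mk y ∉ Wb := fun h => hy ((mem_map_mkQ hKW y).mp h)
  obtain ⟨Z, hWbZ, hyZ, hZmax⟩ := exists_maximal_avoiding Wb (Submodule.Quotient.mk y) hyWb
  have hYtop : Z ⊔ Submodule.span Rᵐᵒᵖ {(Submodule.Quotient.mk y : R ⧸ K)} = ⊤ := by
    refine le_antisymm le_top ?_
    conv_lhs => rw [← hsoc]
    refine sSup_le fun S hS => ?_
    have hSatom : IsAtom S := hS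
    by_cases hSZ : S ≤ Z
    · exact hSZ.trans le_sup_left
    · have hZlt : Z < Z ⊔ S := lt_of_le_of_ne le_sup_left fun h => hSZ (le_sup_right.trans h.ge)
      have hyZS : Submodule.Quotient.mk y ∈ Z ⊔ S := hZmax _ hZlt
      obtain ⟨z, hz, s, hs, hzs⟩ := Submodule.mem_sup.mp hyZS
      have hsnZ : s ∉ Z := fun h => hyZ (by rw [← hzs]; exact Z.add_mem hz h)
      have hsne : s ≠ 0 := fun h => hsnZ (h ▸ Z.zero_mem)
      have hspan : Submodule.span Rᵐᵒᵖ {s} = S := by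
        have hle : Submodule.span Rᵐᵒᵖ {s} ≤ S := (Submodule.span_singleton_le_iff_mem s S).mpr hs
        rcases lt_or_eq_of_le hle with h | h
        · exact absurd (hSatom.2 _ h)
            (fun hbot => hsne (Submodule.span_singleton_eq_bot.mp hbot))
        · exact h
      have hsY : s ∈ Z ⊔ Submodule.span Rᵐᵒᵖ {(Submodule.Quotient.mk y : R ⧸ K)} := by
        have h1 : (Submodule.Quotient.mk y : R ⧸ K) ∈
            Z ⊔ Submodule.span Rᵐᵒᵖ {(Submodule.Quotient.mk y : R ⧸ K)} :=
          (le_sup_right :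
            Submodule.span Rᵐᵒᵖ {(Submodule.Quotient.mk y : R ⧸ K)} ≤ _)
            (Submodule.mem_span_singleton_self _)
        have h2 : z ∈ Z ⊔ Submodule.span Rᵐᵒᵖ {(Submodule.Quotient.mk y : R ⧸ K)} :=
          (le_sup_left : Z ≤ _) hz
        have h3 := Submodule.sub_mem _ h1 h2
        have h4 : (Submodule.Quotient.mk y : R ⧸ K) - z = s := by rw [← hzs]; abel
        rwa [h4] at h3
      rw [← hspan]
      exact (Submodule.span_singleton_le_iff_mem s _).mpr hsY
  have hZcoatom : IsCoatom Z := by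
    constructor
    · exact fun h => hyZ (h ▸ Submodule.mem_top)
    · intro V hV
      have h1 : Z ≤ V := hV.le
      have h2 : Submodule.span Rᵐᵒᵖ {(Submodule.Quotient.mk y : R ⧸ K)} ≤ V :=
        (Submodule.span_singleton_le_iff_mem _ _).mpr (hZmax V hV)
      exact top_unique (hYtop ▸ sup_le h1 h2)
  refine ⟨Submodule.comap K.mkQ Z, isCoatom_comap_mkQ hZcoatom, ?_, ?_⟩
  · intro w hw
    have : Submodule.Quotient.mk w ∈ Wb := Submodule.mem_map_of_mem hw
    exact hWbZ this
  · intro hyD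
    exact hyZ hyD

end Star

section TopAux

variable {R : Type u} [Ring R] [TopologicalSpace R] [IsTopologicalRing R]

lemma aux_isOpen_mono {U P : Submodule Rᵐᵒᵖ R} (h : U ≤ P) (hU : IsOpen (U : Set R)) :
    IsOpen (P : Set R) :=
  @AddSubgroup.isOpen_mono R _ _ _ U.toAddSubgroup P.toAddSubgroup h hU

lemma aux_inf_open {U P : Submodule Rᵐᵒᵖ R} (hU : IsOpen (U : Set R)) (hP : IsOpen (P : Set R)) :
    IsOpen ((U ⊓ P : Submodule Rᵐᵒᵖ R) : Set R) := by
  have h : ((U ⊓ P : Submodule Rᵐᵒᵖ R) : Set R) = (U : Set R) ∩ (P : Set R) := rfl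
  rw [h]; exact hU.inter hP

end TopAux

/-- Let `R` be a complete, separated topological ring with a countable base of
neighborhoods of zero consisting of open right ideals, such that every discrete right
`R`-module is coperfect.  Let `H` be the intersection of all open maximal right ideals of
`R` (the topological Jacobson radical).  Then for every open right ideal `I` of `R`, the
intersection of all maximal right ideals of `R` containing `I` equals `I + H` (i.e. the
radical of the right `R`-module `R/I` is `(I + H)/I`). -/
theorem stmt_18 {R : Type u} [Ring R] [TopologicalSpace R] [IsTopologicalRing R] [T2Space R]
    (hcomplete : @CompleteSpace R (IsTopologicalAddGroup.rightUniformSpace R))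
    (hbase : ∃ S : Set (Submodule Rᵐᵒᵖ R), S.Countable ∧
      (∀ J ∈ S, IsOpen (J : Set R)) ∧
      (∀ U ∈ nhds (0 : R), ∃ J ∈ S, (J : Set R) ⊆ U))
    (hcop : ∀ (N : Type u) [AddCommGroup N] [Module Rᵐᵒᵖ N],
      (∀ n : N, IsOpen {r : R | MulOpposite.op r • n = 0}) →
      ∀ c : ℕ → Submodule Rᵐᵒᵖ N,
        (∀ k, ∃ x, c k = Submodule.span Rᵐᵒᵖ {x}) →
        (∀ k, c (k + 1) ≤ c k) → ∃ k, ∀ l, k ≤ l → c l = c k)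
    (I : Submodule Rᵐᵒᵖ R) (hI : IsOpen (I : Set R)) :
    sInf {J : Submodule Rᵐᵒᵖ R | IsCoatom J ∧ I ≤ J}
      = I ⊔ sInf {J : Submodule Rᵐᵒᵖ R | IsCoatom J ∧ IsOpen (J : Set R)} := by
  classical
  set H := sInf {J : Submodule Rᵐᵒᵖ R | IsCoatom J ∧ IsOpen (J : Set R)} with hHdef
  set A := I ⊔ H with hAdef
  have hIA : I ≤ A := le_sup_left
  have hHA : H ≤ A := le_sup_right
  have hcoatom_above : ∀ J : Submodule Rᵐᵒᵖ R, IsCoatom J → I ≤ J → A ≤ J := by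
    intro J hJ hIJ
    have hJopen : IsOpen (J : Set R) := aux_isOpen_mono hIJ hI
    exact sup_le hIJ (sInf_le ⟨hJ, hJopen⟩)
  have hstK : ∀ K : Submodule Rᵐᵒᵖ R, IsOpen (K : Set R) →
      ∀ c : ℕ → Submodule Rᵐᵒᵖ (R ⧸ K),
        (∀ k, ∃ g, c k = Submodule.span Rᵐᵒᵖ {g}) → (∀ k, c (k + 1) ≤ c k) →
        ∃ k, ∀ l, k ≤ l → c l = c k := by
    intro K hK c hcyc hdesc
    refine hcop (R ⧸ K) ?_ c hcyc hdesc
    intro n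
    obtain ⟨s, rfl⟩ := Submodule.Quotient.mk_surjective K n
    have hset : {r : R | MulOpposite.op r • (Submodule.Quotient.mk s : R ⧸ K) = 0}
        = (fun r : R => s * r) ⁻¹' (K : Set R) := by
      ext r
      simp only [Set.mem_setOf_eq, Set.mem_preimage, SetLike.mem_coe]
      rw [← Submodule.Quotient.mk_smul, Submodule.Quotient.mk_eq_zero]
      rfl
    rw [hset]
    exact hK.preimage (continuous_const.mul continuous_id)
  by_cases hAtop : A = ⊤
  · have hempty : {J : Submodule Rᵐᵒᵖ R | IsCoatom J ∧ I ≤ J} = ∅ := by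
      ext J
      simp only [Set.mem_setOf_eq, Set.mem_empty_iff_false, iff_false, not_and]
      intro hJ hIJ
      exact hJ.1 (top_unique (hAtop ▸ hcoatom_above J hJ hIJ))
    rw [hempty, sInf_empty]
    exact hAtop.symm
  refine le_antisymm ?_ (le_sInf fun J hJ => hcoatom_above J hJ.1 hJ.2)
  rw [SetLike.le_def]
  intro x hxmem
  by_contra hxA
  rw [Submodule.mem_sInf] at hxmem
  have hx1 : ∀ J : Submodule Rᵐᵒᵖ R, IsCoatom J → A ≤ J → x ∈ J :=
    fun J hJ hAJ => hxmem J ⟨hJ, hIA.trans hAJ⟩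
  have hAopen : IsOpen (A : Set R) := aux_isOpen_mono le_sup_left hI
  obtain ⟨Q, hAQ, hxQ, hQmax⟩ := exists_maximal_avoiding A x hxA
  have hQopen : IsOpen (Q : Set R) := aux_isOpen_mono hAQ hAopen
  -- countable decreasing base inside Q
  obtain ⟨S, hScnt, hSopen, hSbasis⟩ := hbase
  have hSne : S.Nonempty := by
    obtain ⟨J, hJ, _⟩ := hSbasis Set.univ Filter.univ_mem
    exact ⟨J, hJ⟩
  obtain ⟨f, hf⟩ := Set.Countable.exists_eq_range hScnt hSne
  have hfopen : ∀ n, IsOpen ((f n : Submodule Rᵐᵒᵖ R) : Set R) := by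
    intro n
    exact hSopen _ (hf ▸ Set.mem_range_self n)
  obtain ⟨Jc, hJc0, hJcS⟩ : ∃ Jc : ℕ → Submodule Rᵐᵒᵖ R,
      Jc 0 = f 0 ∧ ∀ n, Jc (n + 1) = Jc n ⊓ f (n + 1) :=
    ⟨fun n => Nat.rec (f 0) (fun n p => p ⊓ f (n + 1)) n, rfl, fun _ => rfl⟩
  have hJcopen : ∀ n, IsOpen ((Jc n : Submodule Rᵐᵒᵖ R) : Set R) := by
    intro n
    induction n with
    | zero => rw [hJc0]; exact hfopen 0
    | succ n ih => rw [hJcS n]; exact aux_inf_open ih (hfopen (n + 1))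
  have hJcsucc : ∀ n, Jc (n + 1) ≤ Jc n := by
    intro n
    rw [hJcS n]
    exact inf_le_left
  have hJcle : ∀ n, Jc n ≤ f n := by
    intro n
    cases n with
    | zero => rw [hJc0]
    | succ n => rw [hJcS n]; exact inf_le_right
  have hJcanti : ∀ m n, m ≤ n → Jc n ≤ Jc m := by
    intro m n h
    induction n, h using Nat.le_induction with
    | base => exact le_rfl
    | succ n hmn ih => exact (hJcsucc n).trans ih
  have hJcbasis : ∀ U ∈ nhds (0 : R), ∃ n, (↑(Jc n) : Set R) ⊆ U := by
    intro U hU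
    obtain ⟨J, hJS, hJU⟩ := hSbasis U hU
    rw [hf] at hJS
    obtain ⟨n, rfl⟩ := hJS
    exact ⟨n, fun z hz => hJU (hJcle n hz)⟩
  have hQnhds : (Q : Set R) ∈ nhds (0 : R) := hQopen.mem_nhds Q.zero_mem
  obtain ⟨n₀, hn₀⟩ := hJcbasis _ hQnhds
  set Jf : ℕ → Submodule Rᵐᵒᵖ R := fun n => Jc (n₀ + n) with hJfdef
  have hJfopen : ∀ n, IsOpen ((Jf n) : Set R) := fun n => hJcopen _
  have hJfanti : ∀ m n, m ≤ n → Jf n ≤ Jf m := fun m n h => hJcanti _ _ (by omega)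
  have hJfbasis : ∀ U ∈ nhds (0 : R), ∃ n, ((Jf n) : Set R) ⊆ U := by
    intro U hU
    obtain ⟨n, hn⟩ := hJcbasis U hU
    exact ⟨n, fun z hz => hn (hJcanti n (n₀ + n) (by omega) hz)⟩
  have hJfQ : ∀ n, Jf n ≤ Q := fun n z hz => hn₀ (hJcanti n₀ (n₀ + n) (by omega) hz)
  -- strata
  obtain ⟨Hm, hHmdef⟩ : ∃ Hm : ℕ → Submodule Rᵐᵒᵖ R,
      ∀ m, Hm m = sInf {T : Submodule Rᵐᵒᵖ R | IsCoatom T ∧ Jf m ≤ T} :=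
    ⟨_, fun _ => rfl⟩
  have hJfHm : ∀ m, Jf m ≤ Hm m := by
    intro m
    rw [hHmdef m]
    exact le_sInf fun T hT => hT.2
  have hHmopen : ∀ m, IsOpen ((Hm m) : Set R) := fun m => aux_isOpen_mono (hJfHm m) (hJfopen m)
  have hstar : ∀ m (W : Submodule Rᵐᵒᵖ R), Hm m ≤ W → ∀ y, y ∉ W →
      ∃ D, IsCoatom D ∧ W ≤ D ∧ y ∉ D := by
    intro m W hmW y hy
    exact star_lemma (Jf m) (Hm m) (hHmdef m) (hstK _ (hHmopen m)) W hmW y hy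
  have hHmQ : ∀ m, ¬(Hm m ≤ Q) := by
    intro m hm
    obtain ⟨D, hD, hQD, hxD⟩ := hstar m Q hm x hxQ
    exact hxD (hx1 D hD (hAQ.trans hQD))
  have hmem : ∀ m, x ∈ Q ⊔ Hm m := by
    intro m
    refine hQmax _ (lt_of_le_of_ne le_sup_left fun h => hHmQ m ?_)
    exact sup_eq_left.mp h.symm
  have hstep : ∀ m, Hm m ≤ Hm (m + 1) ⊔ Jf m := by
    intro m
    rw [SetLike.le_def]
    intro y hy
    by_contra hyW
    obtain ⟨D, hD, hWD, hyD⟩ := hstar (m + 1) (Hm (m + 1) ⊔ Jf m) le_sup_left y hyW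
    refine hyD ?_
    have hymem : y ∈ sInf {T : Submodule Rᵐᵒᵖ R | IsCoatom T ∧ Jf m ≤ T} := by
      rw [← hHmdef m]; exact hy
    exact Submodule.mem_sInf.mp hymem D ⟨hD, le_sup_right.trans hWD⟩
  -- recursion
  have hg0 : ∃ g : R, g ∈ Hm 0 ∧ g - x ∈ Q := by
    obtain ⟨q, hq, h, hh, he⟩ := Submodule.mem_sup.mp (hmem 0)
    refine ⟨h, hh, ?_⟩
    have heq : h - x = -q := by rw [← he]; abel
    rw [heq]
    exact Q.neg_mem hq
  have hgstep : ∀ m (g : R), g ∈ Hm m → ∃ g' : R, g' ∈ Hm (m + 1) ∧ g - g' ∈ Jf m := by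
    intro m g hg
    obtain ⟨v, hv, j, hj, he⟩ := Submodule.mem_sup.mp (hstep m hg)
    refine ⟨v, hv, ?_⟩
    have heq : g - v = j := by rw [← he]; abel
    rw [heq]
    exact hj
  choose g0 hg01 hg02 using hg0
  choose step1 hstep1 hstep2 using hgstep
  let G : (m : ℕ) → {v : R // v ∈ Hm m} := fun m =>
    Nat.rec ⟨g0, hg01⟩ (fun m p => ⟨step1 m p.1 p.2, hstep1 m p.1 p.2⟩) m
  have hGdiff : ∀ m, (G m).1 - (G (m + 1)).1 ∈ Jf m := fun m => hstep2 m (G m).1 (G m).2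
  set g : ℕ → R := fun m => (G m).1 with hgdef
  have hGQ : ∀ m, g m - x ∈ Q := by
    intro m
    induction m with
    | zero => exact hg02
    | succ m ih =>
      have hd := hGdiff m
      have heq : g (m + 1) - x = (g m - x) - (g m - g (m + 1)) := by abel
      rw [heq]
      exact Q.sub_mem ih (hJfQ m hd)
  have htel : ∀ m n, m ≤ n → g m - g n ∈ Jf m := by
    intro m n h
    induction n, h using Nat.le_induction with
    | base =>
      have heq : g m - g m = 0 := sub_self _
      rw [heq]
      exact (Jf m).zero_mem
    | succ n hmn ih =>
      have h2 : g n - g (n + 1) ∈ Jf m := hJfanti m n hmn (hGdiff n)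
      have h3 : g m - g (n + 1) = (g m - g n) + (g n - g (n + 1)) := by abel
      rw [h3]
      exact (Jf m).add_mem ih h2
  -- completeness
  letI : UniformSpace R := IsTopologicalAddGroup.rightUniformSpace R
  haveI : CompleteSpace R := hcomplete
  have hcauchy : CauchySeq g := by
    rw [cauchySeq_iff]
    intro V hV
    have hV' : V ∈ Filter.comap (fun p : R × R => p.2 - p.1) (nhds 0) := by
      have h0 : V ∈ Filter.comap (fun p : R × R => p.2 + -p.1) (nhds 0) := hV
      simpa only [← sub_eq_add_neg] using h0
    obtain ⟨W, hW, hWV⟩ := Filter.mem_comap.mp hV'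
    obtain ⟨n, hn⟩ := hJfbasis W hW
    refine ⟨n, fun k hk l hl => hWV ?_⟩
    show g l - g k ∈ W
    apply hn
    have h3 : g l - g k = (g n - g k) - (g n - g l) := by abel
    rw [h3]
    exact (Jf n).sub_mem (htel n k hk) (htel n l hl)
  obtain ⟨b, hb⟩ := cauchySeq_tendsto_of_complete hcauchy
  have hbJf : ∀ m, b - g m ∈ Jf m := by
    intro m
    have hcl : IsClosed ((Jf m : Submodule Rᵐᵒᵖ R) : Set R) := by
      have h0 : IsOpen (((Jf m).toAddSubgroup : AddSubgroup R) : Set R) := hJfopen m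
      exact AddSubgroup.isClosed_of_isOpen _ h0
    have htend : Filter.Tendsto (fun n => g n - g m) Filter.atTop (nhds (b - g m)) :=
      hb.sub tendsto_const_nhds
    refine hcl.mem_of_tendsto htend ?_
    filter_upwards [Filter.eventually_ge_atTop m] with n hn
    have h2 := (Jf m).neg_mem (htel m n hn)
    simpa using h2
  have hbHm : ∀ m, b ∈ Hm m := by
    intro m
    have h1 : b - g m ∈ Hm m := hJfHm m (hbJf m)
    have h2 := (Hm m).add_mem h1 (G m).2
    simpa [hgdef] using h2
  have hbH : b ∈ H := by
    rw [hHdef, Submodule.mem_sInf]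
    intro T hT
    obtain ⟨hTcoatom, hTopen⟩ := hT
    have hTnhds : (T : Set R) ∈ nhds (0 : R) := hTopen.mem_nhds T.zero_mem
    obtain ⟨m, hm⟩ := hJfbasis _ hTnhds
    have hJfT : Jf m ≤ T := fun z hz => hm hz
    have hmemT : b ∈ sInf {T' : Submodule Rᵐᵒᵖ R | IsCoatom T' ∧ Jf m ≤ T'} := by
      rw [← hHmdef m]; exact hbHm m
    exact Submodule.mem_sInf.mp hmemT T ⟨hTcoatom, hJfT⟩
  have hbQ : b ∈ Q := hAQ (hHA hbH)
  have hbx : b - x ∈ Q := by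
    have h1 : b - g 0 ∈ Q := hJfQ 0 (hbJf 0)
    have h2 : g 0 - x ∈ Q := hGQ 0
    have h3 : b - x = (b - g 0) + (g 0 - x) := by abel
    rw [h3]
    exact Q.add_mem h1 h2
  refine hxQ ?_
  have h4 := Q.sub_mem hbQ hbx
  simpa using h4
end
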